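/- arXiv:math/0506288 — 4 statements merged into one kernel-verified Lean document; each statement's English description precedes it below -/
import Mathlib

section
/- Let T be a tree with n vertices and let T' be a finite graph which is not a tree (i.e., T' is disconnected or contains a cycle). Then D(T, T') ≤ log₂ n + 3; that is, there is a first-order sentence of quantifier depth at most log₂ n + 3 which is true in T and false in T'. -/
namespace FODef

/-- First-order formulas in the language of graphs (equality and adjacency), with free
variables among `x_0, …, x_{n-1}`. -/
inductive GForm : ℕ → Type
  | adj {n : ℕ} (i j : Fin n) : GForm n
  | eq {n : ℕ} (i j : Fin n) : GForm n
  | neg {n : ℕ} : GForm n → GForm n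
  | conj {n : ℕ} : GForm n → GForm n → GForm n
  | disj {n : ℕ} : GForm n → GForm n → GForm n
  | ex {n : ℕ} : GForm (n + 1) → GForm n
  | fa {n : ℕ} : GForm (n + 1) → GForm n

/-- Realization of a formula in a graph under a valuation of the free variables. -/
def GForm.Realize {V : Type} (G : SimpleGraph V) : ∀ {n : ℕ}, GForm n → (Fin n → V) → Prop
  | _, .adj i j, f => G.Adj (f i) (f j)
  | _, .eq i j, f => f i = f j
  | _, .neg φ, f => ¬ GForm.Realize G φ f
  | _, .conj φ ψ, f => GForm.Realize G φ f ∧ GForm.Realize G ψ f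
  | _, .disj φ ψ, f => GForm.Realize G φ f ∨ GForm.Realize G ψ f
  | _, .ex φ, f => ∃ v : V, GForm.Realize G φ (Fin.snoc f v)
  | _, .fa φ, f => ∀ v : V, GForm.Realize G φ (Fin.snoc f v)

/-- Quantifier depth: the maximum number of nested quantifiers. -/
def GForm.depth : ∀ {n : ℕ}, GForm n → ℕ
  | _, .adj _ _ => 0
  | _, .eq _ _ => 0
  | _, .neg φ => φ.depth
  | _, .conj φ ψ => max φ.depth ψ.depth
  | _, .disj φ ψ => max φ.depth ψ.depth
  | _, .ex φ => φ.depth + 1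
  | _, .fa φ => φ.depth + 1

/-- A sentence (formula with no free variables) holds in a graph. -/
def Sat {V : Type} (G : SimpleGraph V) (φ : GForm 0) : Prop :=
  φ.Realize G ![]

/-- A sentence defines the graph `G` if `G` satisfies it and every finite graph
satisfying it is isomorphic to `G`. -/
def Defines {V : Type} (G : SimpleGraph V) (φ : GForm 0) : Prop :=
  Sat G φ ∧ ∀ (m : ℕ) (H : SimpleGraph (Fin m)), Sat H φ → Nonempty (G ≃g H)

/-- `D G`: the minimum quantifier depth of a first-order sentence defining `G`. -/
noncomputable def D {V : Type} (G : SimpleGraph V) : ℕ :=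
  sInf {d | ∃ φ : GForm 0, φ.depth = d ∧ Defines G φ}

/-- Degree of a vertex. -/
noncomputable def deg {V : Type} (G : SimpleGraph V) (v : V) : ℕ :=
  Nat.card {w // G.Adj v w}

/-- distance ≤ 2^k formula -/
def distF : (m : ℕ) → (i j : Fin m) → (k : ℕ) → GForm m
  | _, i, j, 0 => .disj (.eq i j) (.adj i j)
  | m, i, j, (k+1) => .ex ((distF (m+1) i.castSucc (Fin.last m) k).conj
      (distF (m+1) (Fin.last m) j.castSucc k))

/-- distance ≤ 2^k avoiding edge {x,y} formula -/
def avoidF : (m : ℕ) → (x y u v : Fin m) → (k : ℕ) → GForm m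
  | _, x, y, u, v, 0 => .disj (.eq u v) (.conj (.adj u v)
      (.neg (.disj (.conj (.eq u x) (.eq v y)) (.conj (.eq u y) (.eq v x)))))
  | m, x, y, u, v, (k+1) => .ex ((avoidF (m+1) x.castSucc y.castSucc u.castSucc (Fin.last m) k).conj
      (avoidF (m+1) x.castSucc y.castSucc (Fin.last m) v.castSucc k))

lemma depth_distF : ∀ (k m : ℕ) (i j : Fin m), (distF m i j k).depth = k := by
  intro k
  induction k with
  | zero => intro m i j; simp [distF, GForm.depth]
  | succ k ih => intro m i j; simp [distF, GForm.depth, ih]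

lemma depth_avoidF : ∀ (k m : ℕ) (x y u v : Fin m), (avoidF m x y u v k).depth = k := by
  intro k
  induction k with
  | zero => intro m x y u v; simp [avoidF, GForm.depth]
  | succ k ih => intro m x y u v; simp [avoidF, GForm.depth, ih]


variable {V : Type} {G : SimpleGraph V}

lemma walk_le_one_iff {a b : V} : (a = b ∨ G.Adj a b) ↔ ∃ p : G.Walk a b, p.length ≤ 1 := by
  constructor
  · rintro (h | h)
    · exact ⟨SimpleGraph.Walk.nil.copy rfl h, by simp⟩
    · exact ⟨h.toWalk, by simp⟩
  · rintro ⟨p, hp⟩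
    cases p with
    | nil => exact Or.inl rfl
    | cons h q =>
      have h0 : q.length = 0 := by simp only [SimpleGraph.Walk.length_cons] at hp; omega
      have := SimpleGraph.Walk.eq_of_length_eq_zero h0
      subst this
      exact Or.inr h

lemma walk_avoid_le_one_iff {x y a b : V} :
    (a = b ∨ (G.Adj a b ∧ ¬ ((a = x ∧ b = y) ∨ (a = y ∧ b = x)))) ↔
      ∃ p : G.Walk a b, p.length ≤ 1 ∧ s(x, y) ∉ p.edges := by
  constructor
  · rintro (h | ⟨h, hne⟩)
    · exact ⟨SimpleGraph.Walk.nil.copy rfl h, by simp, by simp⟩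
    · refine ⟨h.toWalk, by simp, ?_⟩
      simp only [SimpleGraph.Adj.toWalk, SimpleGraph.Walk.edges_cons,
        SimpleGraph.Walk.edges_nil, List.mem_singleton]
      intro hcon
      rw [Sym2.eq_iff] at hcon
      apply hne
      tauto
  · rintro ⟨p, hp, havoid⟩
    cases p with
    | nil => exact Or.inl rfl
    | cons h q =>
      have h0 : q.length = 0 := by simp only [SimpleGraph.Walk.length_cons] at hp; omega
      have := SimpleGraph.Walk.eq_of_length_eq_zero h0
      subst this
      refine Or.inr ⟨h, ?_⟩
      intro hcon
      apply havoid
      simp only [SimpleGraph.Walk.edges_cons, SimpleGraph.Walk.edges_nil, List.mem_cons]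
      left
      rw [Sym2.eq_iff]
      tauto

lemma walk_split : ∀ {a b : V} (p : G.Walk a b) (m1 m2 : ℕ), p.length ≤ m1 + m2 →
    ∃ (c : V) (q : G.Walk a c) (r : G.Walk c b),
      q.length ≤ m1 ∧ r.length ≤ m2 ∧ q.edges ⊆ p.edges ∧ r.edges ⊆ p.edges := by
  intro a b p
  induction p with
  | nil => intro m1 m2 _; exact ⟨_, .nil, .nil, by simp, by simp, by simp, by simp⟩
  | @cons a a' b h q ih =>
    intro m1 m2 hl
    match m1 with
    | 0 =>
      refine ⟨a, .nil, .cons h q, by simp, ?_, by simp, by simp⟩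
      simpa using hl
    | (m1'+1) =>
      obtain ⟨c, q', r, h1, h2, h3, h4⟩ := ih m1' m2 (by simpa [Nat.succ_add] using hl)
      refine ⟨c, .cons h q', r, by simpa using h1, h2, ?_, ?_⟩
      · intro e he
        simp only [SimpleGraph.Walk.edges_cons, List.mem_cons] at he ⊢
        rcases he with he | he
        · exact Or.inl he
        · exact Or.inr (h3 he)
      · intro e he
        simp only [SimpleGraph.Walk.edges_cons, List.mem_cons]
        exact Or.inr (h4 he)


/-- there is a walk from `a` to `b` of length at most `t`. -/
def WDist (G : SimpleGraph V) (a b : V) (t : ℕ) : Prop := ∃ p : G.Walk a b, p.length ≤ t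

/-- there is a walk from `a` to `b` of length at most `t` avoiding the edge `{x,y}`. -/
def WAvoid (G : SimpleGraph V) (x y a b : V) (t : ℕ) : Prop :=
  ∃ p : G.Walk a b, p.length ≤ t ∧ s(x, y) ∉ p.edges

lemma WDist.trans {a b c : V} {t1 t2 : ℕ} (h1 : WDist G a b t1) (h2 : WDist G b c t2) :
    WDist G a c (t1 + t2) := by
  obtain ⟨p, hp⟩ := h1
  obtain ⟨q, hq⟩ := h2
  exact ⟨p.append q, by rw [SimpleGraph.Walk.length_append]; omega⟩

lemma WDist.split {a b : V} {t1 t2 : ℕ} (h : WDist G a b (t1 + t2)) :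
    ∃ c, WDist G a c t1 ∧ WDist G c b t2 := by
  obtain ⟨p, hp⟩ := h
  obtain ⟨c, q, r, h1, h2, -, -⟩ := walk_split p t1 t2 hp
  exact ⟨c, ⟨q, h1⟩, ⟨r, h2⟩⟩

lemma WAvoid.trans {x y a b c : V} {t1 t2 : ℕ} (h1 : WAvoid G x y a b t1)
    (h2 : WAvoid G x y b c t2) : WAvoid G x y a c (t1 + t2) := by
  obtain ⟨p, hp, hpe⟩ := h1
  obtain ⟨q, hq, hqe⟩ := h2
  refine ⟨p.append q, by rw [SimpleGraph.Walk.length_append]; omega, ?_⟩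
  rw [SimpleGraph.Walk.edges_append]
  simp only [List.mem_append]
  tauto

lemma WAvoid.split {x y a b : V} {t1 t2 : ℕ} (h : WAvoid G x y a b (t1 + t2)) :
    ∃ c, WAvoid G x y a c t1 ∧ WAvoid G x y c b t2 := by
  obtain ⟨p, hp, hpe⟩ := h
  obtain ⟨c, q, r, h1, h2, h3, h4⟩ := walk_split p t1 t2 hp
  exact ⟨c, ⟨q, h1, fun hc => hpe (h3 hc)⟩, ⟨r, h2, fun hc => hpe (h4 hc)⟩⟩

lemma realize_distF : ∀ (k m : ℕ) (i j : Fin m) (f : Fin m → V),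
    (distF m i j k).Realize G f ↔ WDist G (f i) (f j) (2 ^ k) := by
  intro k
  induction k with
  | zero =>
    intro m i j f
    simp only [distF, GForm.Realize, pow_zero, WDist]
    exact walk_le_one_iff
  | succ k ih =>
    intro m i j f
    simp only [distF, GForm.Realize]
    constructor
    · rintro ⟨c, h1, h2⟩
      rw [ih] at h1 h2
      simp only [Fin.snoc_castSucc, Fin.snoc_last] at h1 h2
      have := h1.trans h2
      rw [show (2:ℕ) ^ (k+1) = 2 ^ k + 2 ^ k by rw [pow_succ]; omega]; exact this
    · intro h
      rw [show (2:ℕ) ^ (k+1) = 2 ^ k + 2 ^ k by rw [pow_succ]; omega] at h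
      obtain ⟨c, h1, h2⟩ := h.split
      refine ⟨c, ?_, ?_⟩ <;> rw [ih] <;>
        simp only [Fin.snoc_castSucc, Fin.snoc_last]
      · exact h1
      · exact h2

lemma realize_avoidF : ∀ (k m : ℕ) (x y u v : Fin m) (f : Fin m → V),
    (avoidF m x y u v k).Realize G f ↔ WAvoid G (f x) (f y) (f u) (f v) (2 ^ k) := by
  intro k
  induction k with
  | zero =>
    intro m x y u v f
    simp only [avoidF, GForm.Realize, pow_zero, WAvoid]
    exact walk_avoid_le_one_iff
  | succ k ih =>
    intro m x y u v f
    simp only [avoidF, GForm.Realize]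
    constructor
    · rintro ⟨c, h1, h2⟩
      rw [ih] at h1 h2
      simp only [Fin.snoc_castSucc, Fin.snoc_last] at h1 h2
      have := h1.trans h2
      rw [show (2:ℕ) ^ (k+1) = 2 ^ k + 2 ^ k by rw [pow_succ]; omega]; exact this
    · intro h
      rw [show (2:ℕ) ^ (k+1) = 2 ^ k + 2 ^ k by rw [pow_succ]; omega] at h
      obtain ⟨c, h1, h2⟩ := h.split
      refine ⟨c, ?_, ?_⟩ <;> rw [ih] <;>
        simp only [Fin.snoc_castSucc, Fin.snoc_last]
      · exact h1
      · exact h2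

/-- The sentence: there is a vertex within distance `2^k` of all vertices. -/
def AForm (k : ℕ) : GForm 0 := .ex (.fa (distF 2 0 1 k))

/-- The sentence: there are adjacent `x, y` and a vertex `z` joined to both `x` and `y`
by walks of length at most `2^k` avoiding the edge `{x,y}`. -/
def BForm (k : ℕ) : GForm 0 :=
  .ex (.ex (.ex (.conj (.adj 0 1) (.conj (avoidF 3 0 1 0 2 k) (avoidF 3 0 1 1 2 k)))))

lemma depth_AForm (k : ℕ) : (AForm k).depth = k + 2 := by
  simp [AForm, GForm.depth, depth_distF]

lemma depth_BForm (k : ℕ) : (BForm k).depth = k + 3 := by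
  simp [BForm, GForm.depth, depth_avoidF]

lemma snoc2 (u v : V) : (Fin.snoc (Fin.snoc (![] : Fin 0 → V) u) v : Fin 2 → V) = ![u, v] := by
  funext i
  fin_cases i <;> simp [Fin.snoc]

lemma snoc3 (u v w : V) :
    (Fin.snoc (Fin.snoc (Fin.snoc (![] : Fin 0 → V) u) v) w : Fin 3 → V) = ![u, v, w] := by
  funext i
  fin_cases i <;> simp [Fin.snoc]

lemma sat_AForm_iff (k : ℕ) : Sat G (AForm k) ↔ ∃ u : V, ∀ v : V, WDist G u v (2 ^ k) := by
  simp only [Sat, AForm, GForm.Realize]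
  refine exists_congr fun u => forall_congr' fun v => ?_
  rw [realize_distF, snoc2]
  simp

lemma sat_BForm_iff (k : ℕ) : Sat G (BForm k) ↔
    ∃ x y z : V, G.Adj x y ∧ WAvoid G x y x z (2 ^ k) ∧ WAvoid G x y y z (2 ^ k) := by
  simp only [Sat, BForm, GForm.Realize]
  refine exists_congr fun x => exists_congr fun y => exists_congr fun z => ?_
  rw [realize_avoidF, realize_avoidF, snoc3]
  simp

open SimpleGraph Walk in
lemma acyclic_not_B {t : ℕ} (hac : G.IsAcyclic) :
    ¬ ∃ x y z : V, G.Adj x y ∧ WAvoid G x y x z t ∧ WAvoid G x y y z t := by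
  classical
  rintro ⟨x, y, z, hadj, ⟨p, -, hpe⟩, ⟨q, -, hqe⟩⟩
  have huniq := SimpleGraph.isAcyclic_iff_path_unique.mp hac
  set w : G.Walk x y := p.append q.reverse with hw
  have hwe : s(x, y) ∉ w.edges := by
    rw [hw, SimpleGraph.Walk.edges_append, SimpleGraph.Walk.edges_reverse]
    simp only [List.mem_append, List.mem_reverse]
    tauto
  have h1 : (⟨w.bypass, w.bypass_isPath⟩ : G.Path x y) = SimpleGraph.Path.singleton hadj :=
    huniq _ _
  have h2 : s(x, y) ∈ w.bypass.edges := by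
    have : w.bypass = (SimpleGraph.Path.singleton hadj).val := congrArg Subtype.val h1
    rw [this]
    simp [SimpleGraph.Path.singleton]
  exact hwe (SimpleGraph.Walk.edges_bypass_subset w h2)

open SimpleGraph in
lemma nontree_B {t : ℕ} (hnt : ¬ (G.Connected ∧ G.IsAcyclic))
    (hu : ∃ u : V, ∀ v : V, WDist G u v (2 ^ t)) :
    ∃ x y z : V, G.Adj x y ∧ WAvoid G x y x z (2 ^ t) ∧ WAvoid G x y y z (2 ^ t) := by
  classical
  obtain ⟨u, hu⟩ := hu
  have hne : Nonempty V := ⟨u⟩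
  have hconn : G.Connected := by
    refine ⟨fun a b => ?_⟩
    obtain ⟨p, -⟩ := hu a
    obtain ⟨q, -⟩ := hu b
    exact (SimpleGraph.Walk.reachable p).symm.trans (SimpleGraph.Walk.reachable q)
  have hecc : ∀ v, G.dist u v ≤ 2 ^ t := fun v => by
    obtain ⟨p, hp⟩ := hu v
    exact le_trans (SimpleGraph.dist_le p) hp
  -- there is a cycle
  have hcyc : ∃ (a : V) (c : G.Walk a a), c.IsCycle := by
    by_contra hno
    push_neg at hno
    exact hnt ⟨hconn, fun a c hc => hno a c hc⟩
  obtain ⟨a, c, hc⟩ := hcyc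
  -- parent function
  have hpar : ∀ v : V, v ≠ u → ∃ y, G.Adj y v ∧ G.dist u y + 1 = G.dist u v := by
    intro v hv
    obtain ⟨p, hp⟩ := (hconn u v).exists_walk_length_eq_dist
    have hd : G.dist u v ≠ 0 := fun h => hv ((hconn.dist_eq_zero_iff).mp h).symm
    obtain ⟨b, hadj, q, hq⟩ := SimpleGraph.Walk.exists_eq_cons_of_ne hv p.reverse
    refine ⟨b, hadj.symm, ?_⟩
    · have hql : q.length = G.dist u v - 1 := by
        have := congrArg SimpleGraph.Walk.length hq
        simp only [SimpleGraph.Walk.length_reverse, SimpleGraph.Walk.length_cons] at this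
        omega
      have h1 : G.dist u b ≤ G.dist u v - 1 := by
        rw [← hql, show G.dist u b = G.dist b u from SimpleGraph.dist_comm ..]
        exact le_trans (SimpleGraph.dist_le q) le_rfl
      have h2 : G.dist u v ≤ G.dist u b + 1 := by
        calc G.dist u v ≤ G.dist u b + G.dist b v := hconn.dist_triangle
        _ ≤ G.dist u b + 1 := by
            have := SimpleGraph.dist_le hadj.symm.toWalk
            simp at this
            omega
      omega
  choose par hpadj hpdist using hpar
  -- canonical walks using only parent edges
  have hchain : ∀ (d : ℕ) (v : V), G.dist u v = d →
      ∃ p : G.Walk u v, p.length = d ∧ ∀ e ∈ p.edges, ∃ (b : V) (hb : b ≠ u), e = s(b, par b hb) := by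
    intro d
    induction d with
    | zero =>
      intro v hv
      have : u = v := (hconn.dist_eq_zero_iff).mp hv
      subst this
      exact ⟨.nil, rfl, by simp⟩
    | succ d ih =>
      intro v hv
      have hvu : v ≠ u := by
        rintro rfl
        rw [(hconn.dist_eq_zero_iff).mpr rfl] at hv
        omega
      have hdy : G.dist u (par v hvu) = d := by have := hpdist v hvu; omega
      obtain ⟨p, hpl, hpe⟩ := ih (par v hvu) hdy
      refine ⟨p.concat (hpadj v hvu), by simp [SimpleGraph.Walk.length_concat, hpl], ?_⟩
      intro e he
      rw [SimpleGraph.Walk.edges_concat, List.concat_eq_append, List.mem_append, List.mem_singleton] at he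
      rcases he with he | he
      · exact hpe e he
      · exact ⟨v, hvu, by rw [he, Sym2.eq_swap]⟩
  -- the cycle contains a non-parent edge
  have hbad : ∃ e ∈ c.edges, ∀ (b : V) (hb : b ≠ u), e ≠ s(b, par b hb) := by
    by_contra hall
    push_neg at hall
    simp only [ne_eq, not_forall, not_not] at hall
    -- pick a vertex of maximal level on the cycle
    obtain ⟨v0, hv0mem', hv0max⟩ := c.support.toFinset.exists_max_image (fun x => G.dist u x)
      ⟨a, by simp [SimpleGraph.Walk.start_mem_support]⟩
    have hv0mem : v0 ∈ c.support := List.mem_toFinset.mp hv0mem'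
    have hmax : ∀ x ∈ c.support, G.dist u x ≤ G.dist u v0 := fun x hx =>
      hv0max x (List.mem_toFinset.mpr hx)
    obtain ⟨c', hc'eq⟩ : ∃ c' : G.Walk v0 v0, c' = c.rotate v0 hv0mem := ⟨_, rfl⟩
    have hc' : c'.IsCycle := by rw [hc'eq]; exact hc.rotate hv0mem
    have hce : ∀ e ∈ c'.edges, e ∈ c.edges := by
      rw [hc'eq]
      exact fun e he => ((SimpleGraph.Walk.rotate_edges c v0 hv0mem).mem_iff).mp he
    -- helper : an edge of c' incident to v0 goes to (par v0)
    have key : ∀ b : V, s(v0, b) ∈ c'.edges → ∃ hb : v0 ≠ u, b = par v0 hb := by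
      intro b hb
      obtain ⟨b1, hb1, he⟩ := hall s(v0, b) (hce _ hb)
      rw [Sym2.eq_iff] at he
      rcases he with ⟨h1, h2⟩ | ⟨h1, h2⟩
      · subst h1; exact ⟨hb1, h2⟩
      · -- v0 = par b, contradicting maximality of the level of v0
        exfalso
        subst h2
        have hbs : b ∈ c.support := c.snd_mem_support_of_mem_edges (hce _ hb)
        have hd := hpdist b hb1
        have hle := hmax b hbs
        rw [← h1] at hd
        omega
    -- decompose c' into first edge and the rest
    have hnn : ¬ c'.Nil := by
      intro hnil
      have h3 := hc'.three_le_length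
      rw [SimpleGraph.Walk.nil_iff_length_eq.mp hnil] at h3
      omega
    obtain ⟨b, hadjb, q, rfl⟩ := SimpleGraph.Walk.not_nil_iff.mp hnn
    have hbe : s(v0, b) ∈ (SimpleGraph.Walk.cons hadjb q).edges := by simp
    have hbv : b ≠ v0 := fun h => by subst h; exact G.irrefl hadjb
    obtain ⟨b2, hadj2, q2, hq2⟩ := SimpleGraph.Walk.exists_eq_cons_of_ne hbv.symm q.reverse
    have hte : s(v0, b2) ∈ q.edges := by
      have h5 : s(v0, b2) ∈ q.reverse.edges := by rw [hq2]; simp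
      rwa [SimpleGraph.Walk.edges_reverse, List.mem_reverse] at h5
    have hneq : s(v0, b) ≠ s(v0, b2) := by
      have hnodup := hc'.edges_nodup
      simp only [SimpleGraph.Walk.edges_cons, List.nodup_cons] at hnodup
      intro h
      rw [h] at hnodup
      exact hnodup.1 hte
    obtain ⟨hb1, hbpar⟩ := key b hbe
    obtain ⟨hb2, htpar⟩ := key b2
      (by simp only [SimpleGraph.Walk.edges_cons, List.mem_cons]; right; exact hte)
    exact hneq (by rw [hbpar, htpar])
  obtain ⟨e, hec, hepar⟩ := hbad
  induction e using Sym2.ind with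
  | _ x y =>
    have hadj : G.Adj x y := c.adj_of_mem_edges hec
    obtain ⟨p, hpl, hpe⟩ := hchain (G.dist u x) x rfl
    obtain ⟨q, hql, hqe⟩ := hchain (G.dist u y) y rfl
    refine ⟨x, y, u, hadj, ⟨p.reverse, ?_, ?_⟩, ⟨q.reverse, ?_, ?_⟩⟩
    · rw [SimpleGraph.Walk.length_reverse, hpl]; exact hecc x
    · rw [SimpleGraph.Walk.edges_reverse, List.mem_reverse]
      intro hmem
      obtain ⟨b, hb, hbe⟩ := hpe _ hmem
      exact hepar b hb hbe
    · rw [SimpleGraph.Walk.length_reverse, hql]; exact hecc y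
    · rw [SimpleGraph.Walk.edges_reverse, List.mem_reverse]
      intro hmem
      obtain ⟨b, hb, hbe⟩ := hqe _ hmem
      exact hepar b hb hbe

open SimpleGraph Walk

lemma walk_split_at : ∀ {a b : V} (p : G.Walk a b) (m : ℕ), m ≤ p.length →
    ∃ (c : V) (q : G.Walk a c) (r : G.Walk c b), p = q.append r ∧ q.length = m := by
  intro a b p
  induction p with
  | nil =>
    intro m hm
    simp only [SimpleGraph.Walk.length_nil, Nat.le_zero] at hm
    exact ⟨_, .nil, .nil, rfl, hm.symm ▸ rfl⟩
  | @cons a a' b h q ih =>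
    intro m hm
    match m with
    | 0 => exact ⟨a, .nil, .cons h q, rfl, rfl⟩
    | (m'+1) =>
      obtain ⟨c, q', r, hqq , hl⟩ := ih m' (by simpa using hm)
      exact ⟨c, .cons h q', r, by rw [SimpleGraph.Walk.cons_append, ← hqq], by simp [hl]⟩

lemma walk_split_first_mem {w c : V} (R : G.Walk w c) (S : Set V) (hc : c ∈ S) :
    ∃ (c' : V) (R₁ : G.Walk w c') (R₂ : G.Walk c' c), R = R₁.append R₂ ∧ c' ∈ S ∧
      ∀ x ∈ R₁.support, x ∈ S → x = c' := by
  classical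
  induction R with
  | @nil a =>
    exact ⟨a, .nil, .nil, rfl, hc, by simp⟩
  | @cons a a' b h R' ih =>
    by_cases ha : a ∈ S
    · exact ⟨a, .nil, .cons h R', rfl, ha, by simp⟩
    · obtain ⟨c', R₁, R₂, h1, h2, h3⟩ := ih hc
      refine ⟨c', .cons h R₁, R₂, by rw [SimpleGraph.Walk.cons_append, ← h1], h2, ?_⟩
      intro x hx hxS
      rw [SimpleGraph.Walk.support_cons, List.mem_cons] at hx
      rcases hx with rfl | hx
      · exact absurd hxS ha
      · exact h3 x hx hxS

lemma isPath_append_of_meet {u v w : V} {p : G.Walk u v} {q : G.Walk v w} (hp : p.IsPath)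
    (hq : q.IsPath) (hmeet : ∀ x ∈ p.support, x ∈ q.support → x = v) : (p.append q).IsPath := by
  rw [SimpleGraph.Walk.isPath_def, SimpleGraph.Walk.support_append]
  refine List.Nodup.append (SimpleGraph.Walk.isPath_def _ |>.mp hp)
    (((SimpleGraph.Walk.isPath_def _ |>.mp hq)).sublist (List.tail_sublist _)) ?_
  intro x hx hx'
  have hxq : x ∈ q.support := List.mem_of_mem_tail hx'
  have hxv : x = v := hmeet x hx hxq
  subst hxv
  have : q.support = x :: q.support.tail := q.support_eq_cons
  have hnodup := SimpleGraph.Walk.isPath_def _ |>.mp hq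
  rw [this, List.nodup_cons] at hnodup
  exact hnodup.1 hx'

lemma exists_center [Fintype V] (hconn : G.Connected) (k : ℕ)
    (hcard : Fintype.card V < 2 ^ (k + 1)) :
    ∃ u : V, ∀ v : V, WDist G u v (2 ^ k) := by
  classical
  have hVne : Nonempty V := hconn.nonempty
  obtain ⟨v0⟩ := hVne
  -- maximal length of a path
  set 𝒮 : Set ℕ := {ℓ | ∃ (a b : V) (p : G.Walk a b), p.IsPath ∧ p.length = ℓ} with h𝒮
  have h0 : (0 : ℕ) ∈ 𝒮 := ⟨v0, v0, .nil, by simp, rfl⟩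
  have hbdd : BddAbove 𝒮 := by
    refine ⟨Fintype.card V, ?_⟩
    rintro ℓ ⟨a, b, p, hp, rfl⟩
    exact le_of_lt hp.length_lt
  have hLmem := Nat.sSup_mem ⟨0, h0⟩ hbdd
  set L := sSup 𝒮 with hLdef
  obtain ⟨u, v, P, hP, hPL⟩ := hLmem
  have hLmax : ∀ (a b : V) (p : G.Walk a b), p.IsPath → p.length ≤ L := by
    intro a b p hp
    exact le_csSup hbdd ⟨a, b, p, hp, rfl⟩
  have hLle : L ≤ Fintype.card V - 1 := by
    have := hP.length_lt
    omega
  set h : ℕ := (L + 1) / 2 with hh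
  have hhk : h ≤ 2 ^ k - 1 := by
    have h2 : (2:ℕ) ^ (k+1) = 2 * 2 ^ k := by rw [pow_succ]; ring
    have hk1 : 1 ≤ (2:ℕ) ^ k := Nat.one_le_two_pow
    omega
  have hhL : h ≤ P.length := by rw [hPL]; omega
  obtain ⟨c, P₁, P₂, hPsplit, hP1len⟩ := walk_split_at P h hhL
  have hP2len : P₂.length = L - h := by
    have := congrArg SimpleGraph.Walk.length hPsplit
    rw [SimpleGraph.Walk.length_append] at this
    omega
  refine ⟨c, fun w => ?_⟩
  -- enough to bound the distance
  suffices hd : G.dist c w ≤ 2 ^ k by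
    obtain ⟨p, hp⟩ := (hconn c w).exists_walk_length_eq_dist
    exact ⟨p, by omega⟩
  by_contra hbig
  push_neg at hbig
  -- take a geodesic from c to w and split it at the last vertex meeting P
  obtain ⟨Q0, hQ0⟩ := (hconn c w).exists_walk_length_eq_dist
  have hQpath : Q0.bypass.IsPath := Q0.bypass_isPath
  have hQlen : Q0.bypass.length = G.dist c w := by
    have h1 := SimpleGraph.Walk.length_bypass_le Q0
    have h2 := SimpleGraph.dist_le Q0.bypass
    omega
  set q : ℕ := G.dist c w with hq
  have hcP : c ∈ P.support := by
    rw [hPsplit, SimpleGraph.Walk.mem_support_append_iff]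
    exact Or.inl P₁.end_mem_support
  obtain ⟨c', R₁, R₂, hRsplit, hc'P, hR₁meet⟩ :=
    walk_split_first_mem Q0.bypass.reverse {x | x ∈ P.support} hcP
  have hR₁path : R₁.IsPath := by
    have := hQpath.reverse
    rw [hRsplit] at this
    exact this.of_append_left
  have hRlen : R₁.length + R₂.length = q := by
    have := congrArg SimpleGraph.Walk.length hRsplit
    rw [SimpleGraph.Walk.length_append, SimpleGraph.Walk.length_reverse, hQlen] at this
    omega
  have hqh : h + 2 ≤ q := by
    have h2 : (2:ℕ) ^ (k+1) = 2 * 2 ^ k := by rw [pow_succ]; ring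
    have hk1 : 1 ≤ (2:ℕ) ^ k := Nat.one_le_two_pow
    omega
  have hdwc : G.dist w c ≤ R₁.length + G.dist c' c := by
    calc G.dist w c ≤ G.dist w c' + G.dist c' c := hconn.dist_triangle
    _ ≤ R₁.length + G.dist c' c := by
        have := SimpleGraph.dist_le R₁
        omega
  have hqwc : G.dist w c = q := by rw [hq, SimpleGraph.dist_comm]
  -- case analysis on the position of c'
  simp only [Set.mem_setOf_eq] at hc'P
  rw [hPsplit, SimpleGraph.Walk.mem_support_append_iff] at hc'P
  rcases hc'P with hc'P1 | hc'P2
  · -- c' on the first half P₁ : u → c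
    set B' := P₁.dropUntil c' hc'P1 with hB'
    set A' := P₁.takeUntil c' hc'P1 with hA'
    have hP1s : P₁ = A'.append B' := (P₁.take_spec hc'P1).symm
    have hdc'c : G.dist c' c ≤ B'.length := SimpleGraph.dist_le B'
    -- the long path W₂ from w to v
    have hW2path : (R₁.append (B'.append P₂)).IsPath := by
      refine isPath_append_of_meet hR₁path ?_ ?_
      · have hPP : P = A'.append (B'.append P₂) := by
          rw [hPsplit, hP1s, SimpleGraph.Walk.append_assoc]
        have := hP
        rw [hPP] at this
        exact this.of_append_right
      · intro x hx hx'
        refine hR₁meet x hx ?_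
        have hPP : P = A'.append (B'.append P₂) := by
          rw [hPsplit, hP1s, SimpleGraph.Walk.append_assoc]
        show x ∈ P.support
        rw [hPP]
        exact SimpleGraph.Walk.subset_support_append_right _ _ hx'
    have hlen : (R₁.append (B'.append P₂)).length ≤ L := hLmax _ _ _ hW2path
    rw [SimpleGraph.Walk.length_append, SimpleGraph.Walk.length_append] at hlen
    have hB'len : A'.length + B'.length = h := by
      have := congrArg SimpleGraph.Walk.length hP1s
      rw [SimpleGraph.Walk.length_append] at this
      omega
    omega
  · -- c' on the second half P₂ : c → v
    set A := P₂.takeUntil c' hc'P2 with hA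
    set B := P₂.dropUntil c' hc'P2 with hB
    have hP2s : P₂ = A.append B := (P₂.take_spec hc'P2).symm
    have hdc'c : G.dist c' c ≤ A.length := by
      have := SimpleGraph.dist_le A.reverse
      rwa [SimpleGraph.Walk.length_reverse] at this
    have hW1path : ((P₁.append A).append R₁.reverse).IsPath := by
      have hPP : P = (P₁.append A).append B := by
        rw [hPsplit, hP2s, SimpleGraph.Walk.append_assoc]
      refine isPath_append_of_meet ?_ hR₁path.reverse ?_
      · have := hP
        rw [hPP] at this
        exact this.of_append_left
      · intro x hx hx'
        rw [SimpleGraph.Walk.support_reverse, List.mem_reverse] at hx'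
        refine hR₁meet x hx' ?_
        show x ∈ P.support
        rw [hPP]
        exact SimpleGraph.Walk.subset_support_append_left _ _ hx
    have hlen : ((P₁.append A).append R₁.reverse).length ≤ L := hLmax _ _ _ hW1path
    rw [SimpleGraph.Walk.length_append, SimpleGraph.Walk.length_append,
      SimpleGraph.Walk.length_reverse] at hlen
    omega

end FODef

open FODef

theorem statement11 {V W : Type} [Fintype V] [Fintype W] (n : ℕ) (hn : Nat.card V = n)
    (T : SimpleGraph V) (hT : T.Connected ∧ T.IsAcyclic)
    (T' : SimpleGraph W) (hT' : ¬ (T'.Connected ∧ T'.IsAcyclic)) :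
    ∃ φ : GForm 0, (φ.depth : ℝ) ≤ Real.logb 2 n + 3 ∧ Sat T φ ∧ ¬ Sat T' φ := by
  classical
  have hVne : Nonempty V := hT.1.nonempty
  have hn1 : 1 ≤ n := by
    rw [← hn]
    exact Nat.card_pos
  set k := Nat.log 2 n with hk
  refine ⟨(AForm k).conj ((BForm k).neg), ?_, ?_, ?_⟩
  · -- depth bound
    have hdepth : ((AForm k).conj ((BForm k).neg)).depth = k + 3 := by
      simp only [GForm.depth, AForm, BForm, depth_distF, depth_avoidF]
      omega
    rw [hdepth]
    have h2k : (2:ℕ) ^ k ≤ n := Nat.pow_log_le_self 2 (by omega)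
    have hlogb : (k : ℝ) ≤ Real.logb 2 n := by
      have h1 : Real.logb 2 ((2:ℝ) ^ (k:ℕ)) = k := by
        rw [Real.logb_pow]
        simp [Real.logb_self_eq_one]
      rw [← h1]
      apply Real.logb_le_logb_of_le (by norm_num) (by positivity)
      exact_mod_cast h2k
    push_cast
    linarith
  · -- true in T
    refine ⟨?_, ?_⟩
    · refine (sat_AForm_iff k).mpr (exists_center hT.1 k ?_)
      rw [← Nat.card_eq_fintype_card, hn]
      exact Nat.lt_pow_succ_log_self (by norm_num) n
    · show ¬ (BForm k).Realize T ![]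
      intro hB
      exact acyclic_not_B hT.2 ((sat_BForm_iff k).mp hB)
  · -- false in T'
    rintro ⟨hA', hnB'⟩
    exact hnB' ((sat_BForm_iff k).mpr (nontree_B hT' ((sat_AForm_iff k).mp hA')))
end

section
/- There is an absolute constant C such that the following holds. Let G and G' be graphs, let x be a vertex of G lying on a cycle of length at most k in G, and let x' be a vertex of G' lying on no cycle of G'. Then there is a first-order formula φ(u) with one free variable, of quantifier depth at most log₂ k + C, such that φ(x) holds in G but φ(x') fails in G'. -/
open FODef

namespace Aux

def extendMap {n m : ℕ} (f : Fin n → Fin m) : Fin (n + 1) → Fin (m + 1) :=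
  Fin.snoc (Fin.castSucc ∘ f) (Fin.last m)

def relabel : ∀ {n m : ℕ}, (Fin n → Fin m) → GForm n → GForm m
  | _, _, f, .adj i j => .adj (f i) (f j)
  | _, _, f, .eq i j => .eq (f i) (f j)
  | _, _, f, .neg φ => .neg (relabel f φ)
  | _, _, f, .conj φ ψ => .conj (relabel f φ) (relabel f ψ)
  | _, _, f, .disj φ ψ => .disj (relabel f φ) (relabel f ψ)
  | _, _, f, .ex φ => .ex (relabel (extendMap f) φ)
  | _, _, f, .fa φ => .fa (relabel (extendMap f) φ)

lemma depth_relabel : ∀ {n m : ℕ} (f : Fin n → Fin m) (φ : GForm n),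
    (relabel f φ).depth = φ.depth
  | _, _, f, .adj i j => rfl
  | _, _, f, .eq i j => rfl
  | _, _, f, .neg φ => by simp [relabel, GForm.depth, depth_relabel]
  | _, _, f, .conj φ ψ => by simp [relabel, GForm.depth, depth_relabel]
  | _, _, f, .disj φ ψ => by simp [relabel, GForm.depth, depth_relabel]
  | _, _, f, .ex φ => by simp [relabel, GForm.depth, depth_relabel]
  | _, _, f, .fa φ => by simp [relabel, GForm.depth, depth_relabel]

lemma snoc_comp_extendMap {V : Type} {n m : ℕ} (f : Fin n → Fin m) (v : Fin m → V) (w : V) :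
    Fin.snoc v w ∘ extendMap f = Fin.snoc (v ∘ f) w := by
  funext i
  refine Fin.lastCases ?_ (fun j => ?_) i
  · simp [extendMap]
  · simp [extendMap]

lemma realize_relabel {V : Type} (G : SimpleGraph V) :
    ∀ {n m : ℕ} (f : Fin n → Fin m) (φ : GForm n) (v : Fin m → V),
    (relabel f φ).Realize G v ↔ φ.Realize G (v ∘ f)
  | _, _, f, .adj i j, v => Iff.rfl
  | _, _, f, .eq i j, v => Iff.rfl
  | _, _, f, .neg φ, v => by simp [relabel, GForm.Realize, realize_relabel]
  | _, _, f, .conj φ ψ, v => by simp [relabel, GForm.Realize, realize_relabel]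
  | _, _, f, .disj φ ψ, v => by simp [relabel, GForm.Realize, realize_relabel]
  | _, _, f, .ex φ, v => by
      simp only [relabel, GForm.Realize]
      refine exists_congr fun w => ?_
      rw [realize_relabel, snoc_comp_extendMap]
  | _, _, f, .fa φ, v => by
      simp only [relabel, GForm.Realize]
      refine forall_congr' fun w => ?_
      rw [realize_relabel, snoc_comp_extendMap]

/-- variables: 0 = forbidden vertex x, 1 = u, 2 = v.
`psi d` says: there is a walk from u to v of length ≤ 2^d avoiding x. -/
def psi : ℕ → GForm 3
  | 0 => .disj (.eq 1 2) (.adj 1 2)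
  | d + 1 => .ex (.conj (.neg (.eq 3 0))
      (.conj (relabel ![0, 1, 3] (psi d)) (relabel ![0, 3, 2] (psi d))))

lemma depth_psi (d : ℕ) : (psi d).depth = d := by
  induction d with
  | zero => rfl
  | succ d ih => simp [psi, GForm.depth, depth_relabel, ih]

lemma snoc3 {V : Type} (f : Fin 3 → V) (w : V) :
    (Fin.snoc f w : Fin 4 → V) = ![f 0, f 1, f 2, w] := by
  funext i
  fin_cases i <;> rfl

-- walk splitting
lemma walk_split {V : Type} {G : SimpleGraph V} {u v : V} (p : G.Walk u v) :
    ∀ (a b : ℕ), p.length ≤ a + b →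
    ∃ (w : V) (q : G.Walk u w) (r : G.Walk w v),
      q.length ≤ a ∧ r.length ≤ b ∧
      (∀ s, s ∈ q.support → s ∈ p.support) ∧ (∀ s, s ∈ r.support → s ∈ p.support) := by
  induction p with
  | nil =>
    intro a b _
    exact ⟨_, .nil, .nil, by simp, by simp, by simp, by simp⟩
  | @cons u' v' w' h p ih =>
    intro a b hlen
    match a with
    | 0 =>
      refine ⟨u', .nil, .cons h p, by simp, ?_, by simp, by simp⟩
      simpa using hlen
    | a + 1 =>
      obtain ⟨w, q, r, hq, hr, hqs, hrs⟩ := ih a b (by simpa [Nat.succ_add] using hlen)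
      refine ⟨w, .cons h q, r, by simpa using hq, hr, ?_, ?_⟩
      · intro s hs
        simp only [SimpleGraph.Walk.support_cons, List.mem_cons] at hs ⊢
        rcases hs with h1 | h1
        · exact Or.inl h1
        · exact Or.inr (hqs s h1)
      · intro s hs
        simp only [SimpleGraph.Walk.support_cons, List.mem_cons]
        exact Or.inr (hrs s hs)

lemma psi_sound {V : Type} {G : SimpleGraph V} (d : ℕ) :
    ∀ (f : Fin 3 → V), f 1 ≠ f 0 → f 2 ≠ f 0 → (psi d).Realize G f →
    ∃ p : G.Walk (f 1) (f 2), f 0 ∉ p.support := by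
  induction d with
  | zero =>
    intro f h1 h2 h
    simp only [psi, GForm.Realize] at h
    rcases h with h | h
    · refine ⟨(SimpleGraph.Walk.nil : G.Walk (f 1) (f 1)).copy rfl h, ?_⟩
      rw [SimpleGraph.Walk.support_copy]
      simpa using Ne.symm h1
    · refine ⟨.cons h .nil, ?_⟩
      simp [Ne.symm h1, Ne.symm h2]
  | succ d ih =>
    intro f h1 h2 h
    obtain ⟨w, hw, hl, hr⟩ := h
    rw [realize_relabel] at hl hr
    have e3 : (Fin.snoc f w : Fin 4 → V) = ![f 0, f 1, f 2, w] := snoc3 f w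
    rw [e3] at hw hl hr
    have hwx : w ≠ f 0 := by simpa [GForm.Realize] using hw
    have hl' : (psi d).Realize G ![f 0, f 1, w] := by
      convert hl using 1
      funext i; fin_cases i <;> rfl
    have hr' : (psi d).Realize G ![f 0, w, f 2] := by
      convert hr using 1
      funext i; fin_cases i <;> rfl
    obtain ⟨p1, hp1⟩ := ih ![f 0, f 1, w] (by simpa using h1) (by simpa using hwx) hl'
    obtain ⟨p2, hp2⟩ := ih ![f 0, w, f 2] (by simpa using hwx) (by simpa using h2) hr'
    simp only [Matrix.cons_val_zero, Matrix.cons_val_one, Matrix.head_cons,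
      Matrix.cons_val_two, Matrix.tail_cons] at hp1 hp2
    refine ⟨(p1.append p2 : G.Walk (f 1) (f 2)), ?_⟩
    intro hm
    rcases (SimpleGraph.Walk.mem_support_append_iff p1 p2).mp hm with hm | hm
    exacts [hp1 hm, hp2 hm]

lemma psi_complete {V : Type} {G : SimpleGraph V} (d : ℕ) :
    ∀ (f : Fin 3 → V) (p : G.Walk (f 1) (f 2)), p.length ≤ 2 ^ d → f 0 ∉ p.support →
    (psi d).Realize G f := by
  induction d with
  | zero =>
    intro f p hlen hx
    interval_cases h : p.length
    · exact Or.inl (SimpleGraph.Walk.eq_of_length_eq_zero h)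
    · exact Or.inr (SimpleGraph.Walk.adj_of_length_eq_one h)
  | succ d ih =>
    intro f p hlen hx
    obtain ⟨w, q, r, hq, hr, hqs, hrs⟩ := walk_split p (2 ^ d) (2 ^ d)
      (by rw [pow_succ] at hlen; omega)
    have hwx : w ∉ ({f 0} : Set V) := by
      intro hw
      simp only [Set.mem_singleton_iff] at hw
      exact hx (hw ▸ hqs w q.end_mem_support)
    have hwx' : w ≠ f 0 := by simpa using hwx
    have hl' : (psi d).Realize G ![f 0, f 1, w] :=
      ih ![f 0, f 1, w] q hq (fun hc => hx (hqs _ hc))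
    have hr' : (psi d).Realize G ![f 0, w, f 2] :=
      ih ![f 0, w, f 2] r hr (fun hc => hx (hrs _ hc))
    refine ⟨w, ?_, ?_, ?_⟩
    · rw [snoc3]; simpa [GForm.Realize] using hwx'
    · rw [realize_relabel, snoc3]
      convert hl' using 1
      funext i; fin_cases i <;> rfl
    · rw [realize_relabel, snoc3]
      convert hr' using 1
      funext i; fin_cases i <;> rfl

/-- variables after two `ex`: 0 = x, 1 = y, 2 = z. -/
def phiBody (d : ℕ) : GForm 3 :=
  .conj (.conj (.conj (.neg (.eq 1 0)) (.neg (.eq 2 0)))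
        (.conj (.neg (.eq 1 2)) (.conj (.adj 0 1) (.adj 0 2))))
    (psi d)

def phi (d : ℕ) : GForm 1 := .ex (.ex (phiBody d))

lemma depth_phi (d : ℕ) : (phi d).depth = d + 2 := by
  simp [phi, phiBody, GForm.depth, depth_psi]

lemma snoc1 {V : Type} (x y : V) : (Fin.snoc ![x] y : Fin 2 → V) = ![x, y] := by
  funext i; fin_cases i <;> rfl

lemma snoc2 {V : Type} (x y z : V) : (Fin.snoc ![x, y] z : Fin 3 → V) = ![x, y, z] := by
  funext i; fin_cases i <;> rfl

lemma realize_phi_iff {V : Type} (G : SimpleGraph V) (d : ℕ) (x : V) :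
    (phi d).Realize G ![x] ↔ ∃ y z : V, y ≠ x ∧ z ≠ x ∧ y ≠ z ∧ G.Adj x y ∧ G.Adj x z ∧
      (psi d).Realize G ![x, y, z] := by
  constructor
  · rintro ⟨y, z, h⟩
    rw [snoc1, snoc2] at h
    obtain ⟨⟨⟨h1, h2⟩, h3, h4, h5⟩, h6⟩ := h
    exact ⟨y, z, by simpa [GForm.Realize] using h1, by simpa [GForm.Realize] using h2, by simpa [GForm.Realize] using h3,
      by simpa [GForm.Realize] using h4, by simpa [GForm.Realize] using h5, h6⟩
  · rintro ⟨y, z, h1, h2, h3, h4, h5, h6⟩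
    refine ⟨y, z, ?_⟩
    rw [snoc1, snoc2]
    exact ⟨⟨⟨by simpa [GForm.Realize] using h1, by simpa [GForm.Realize] using h2⟩, by simpa [GForm.Realize] using h3,
      by simpa [GForm.Realize] using h4, by simpa [GForm.Realize] using h5⟩, h6⟩

end Aux

namespace Aux

lemma psi_sound' {V : Type} {G : SimpleGraph V} (d : ℕ) (a u v : V) (hu : u ≠ a) (hv : v ≠ a)
    (h : (psi d).Realize G ![a, u, v]) : ∃ p : G.Walk u v, a ∉ p.support := by
  obtain ⟨p, hp⟩ := psi_sound d ![a, u, v] (by simpa using hu) (by simpa using hv) h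
  exact ⟨p, hp⟩

lemma psi_complete' {V : Type} {G : SimpleGraph V} (d : ℕ) (a u v : V) (p : G.Walk u v)
    (hlen : p.length ≤ 2 ^ d) (ha : a ∉ p.support) : (psi d).Realize G ![a, u, v] :=
  psi_complete d ![a, u, v] p hlen ha

end Aux

theorem statement12 :
    ∃ C : ℝ, ∀ (V W : Type), ∀ (_ : Finite V) (_ : Finite W),
      ∀ (G : SimpleGraph V) (G' : SimpleGraph W) (k : ℕ) (x : V) (x' : W),
      (∃ c : G.Walk x x, c.IsCycle ∧ c.length ≤ k) →
      (∀ c : G'.Walk x' x', ¬ c.IsCycle) →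
      ∃ φ : GForm 1, (φ.depth : ℝ) ≤ Real.logb 2 k + C ∧
        φ.Realize G ![x] ∧ ¬ φ.Realize G' ![x'] := by
  refine ⟨3, ?_⟩
  rintro V W _ _ G G' k x x' ⟨c, hc, hck⟩ hnc
  have hk3 : 3 ≤ k := hc.three_le_length.trans hck
  set d := Nat.clog 2 k with hd
  have hd1 : 1 ≤ d := Nat.clog_pos one_lt_two (by omega)
  have hk2d : k ≤ 2 ^ d := Nat.le_pow_clog one_lt_two k
  refine ⟨Aux.phi d, ?_, ?_, ?_⟩
  · -- depth bound
    rw [Aux.depth_phi]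
    have hlt : (2 : ℕ) ^ (d - 1) < k := Nat.pow_pred_clog_lt_self one_lt_two (by omega)
    have h1 : ((2 : ℝ)) ^ (d - 1 : ℕ) ≤ (k : ℝ) := by exact_mod_cast hlt.le
    have h2 : ((d - 1 : ℕ) : ℝ) ≤ Real.logb 2 k := by
      calc ((d - 1 : ℕ) : ℝ) = Real.logb 2 ((2 : ℝ) ^ (d - 1 : ℕ)) := by
            rw [Real.logb_pow]; simp
        _ ≤ Real.logb 2 k :=
            Real.logb_le_logb_of_le one_lt_two (by positivity) h1
    rw [Nat.cast_sub hd1] at h2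
    push_cast
    push_cast at h2
    linarith
  · -- true in G
    rw [Aux.realize_phi_iff]
    have hlen3 := hc.three_le_length
    cases c with
    | nil => exact absurd rfl hc.ne_nil
    | @cons _ y _ h p =>
      rw [SimpleGraph.Walk.cons_isCycle_iff] at hc
      obtain ⟨hp, _⟩ := hc
      simp only [SimpleGraph.Walk.length_cons] at hlen3 hck
      have hpr : p.reverse.IsPath := hp.reverse
      have hprlen : p.reverse.length = p.length := SimpleGraph.Walk.length_reverse p
      have hnotnil : ¬ p.reverse.Nil := by
        rw [SimpleGraph.Walk.not_nil_iff_lt_length, hprlen]; omega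
      obtain ⟨z, h2, q, hpq⟩ := SimpleGraph.Walk.not_nil_iff.mp hnotnil
      rw [hpq, SimpleGraph.Walk.cons_isPath_iff] at hpr
      obtain ⟨hq, hxq⟩ := hpr
      have hqlen : q.length = p.length - 1 := by
        have := hprlen
        rw [hpq, SimpleGraph.Walk.length_cons] at this
        omega
      have hyz : y ≠ z := by
        intro he
        subst he
        have := (SimpleGraph.Walk.isPath_iff_eq_nil (p := q)).mp hq
        subst this
        simp at hqlen
        omega
      refine ⟨y, z, h.ne', h2.ne', hyz, h, h2, ?_⟩
      refine Aux.psi_complete' d x y z q.reverse ?_ ?_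
      · rw [SimpleGraph.Walk.length_reverse]
        omega
      · rw [SimpleGraph.Walk.support_reverse, List.mem_reverse]
        exact hxq
  · -- false in G'
    intro hreal
    rw [Aux.realize_phi_iff] at hreal
    obtain ⟨y, z, hyx, hzx, hyz, hxy, hxz, hpsi⟩ := hreal
    classical
    obtain ⟨p', hp'⟩ := Aux.psi_sound' d x' y z hyx hzx hpsi
    set P : G'.Walk y z := (p'.toPath : G'.Path y z).1 with hP
    have hPpath : P.IsPath := (p'.toPath).2
    have hx'P : x' ∉ P.support := fun hmem => hp' (SimpleGraph.Walk.support_toPath_subset p' hmem)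
    have hcyc : (SimpleGraph.Walk.cons hxy (P.concat hxz.symm)).IsCycle := by
      rw [SimpleGraph.Walk.cons_isCycle_iff]
      constructor
      · rw [SimpleGraph.Walk.isPath_def, SimpleGraph.Walk.support_concat]
        rw [SimpleGraph.Walk.isPath_def] at hPpath
        simp [List.concat_eq_append, List.nodup_append, hPpath, hx'P]
        exact fun a ha hax => hx'P (hax ▸ ha)
      · intro hmem
        rw [SimpleGraph.Walk.edges_concat, List.concat_eq_append, List.mem_append,
          List.mem_singleton] at hmem
        rcases hmem with hmem | hmem
        · exact hx'P (P.fst_mem_support_of_mem_edges hmem)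
        · rw [Sym2.eq_iff] at hmem
          rcases hmem with ⟨_, h2⟩ | ⟨_, h2⟩
          · exact hyx h2
          · exact hyz h2
    exact hnc _ hcyc
end

section
/- There is an absolute constant C such that the following holds. Let G and G' be connected graphs, each of diameter at most d, let x be a vertex of G belonging to the core of G, and let x' be a vertex of G' not belonging to the core of G'. Then there is a first-order formula φ(u) with one free variable, of quantifier depth at most log₂ d + C, such that φ(x) holds in G but φ(x') fails in G'. -/
namespace FODef

/-- A set of vertices inducing a subgraph of minimum degree at least 2. -/
def Deg2Closed {V : Type} (G : SimpleGraph V) (S : Set V) : Prop :=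
  ∀ v ∈ S, ∃ w₁ ∈ S, ∃ w₂ ∈ S, w₁ ≠ w₂ ∧ G.Adj v w₁ ∧ G.Adj v w₂

/-- The vertex set of the core (2-core) of `G`: the maximal set of vertices inducing a
subgraph of minimum degree at least 2 (equivalently, what remains after repeatedly
deleting vertices of degree at most 1). -/
def coreSet {V : Type} (G : SimpleGraph V) : Set V :=
  ⋃₀ {S | Deg2Closed G S}

end FODef

open FODef

namespace Aux

open SimpleGraph FODef

variable {V : Type}

/-- The graph `G` with all vertices in `X` made isolated. -/
def avoid (G : SimpleGraph V) (X : Set V) : SimpleGraph V where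
  Adj u v := G.Adj u v ∧ u ∉ X ∧ v ∉ X
  symm := ⟨by rintro u v ⟨h, hu, hv⟩; exact ⟨h.symm, hv, hu⟩⟩
  loopless := ⟨by rintro v ⟨h, _, _⟩; exact G.irrefl h⟩

lemma avoid_adj {G : SimpleGraph V} {X : Set V} {u v : V} :
    (avoid G X).Adj u v ↔ G.Adj u v ∧ u ∉ X ∧ v ∉ X := Iff.rfl

lemma avoid_le (G : SimpleGraph V) (X : Set V) : avoid G X ≤ G := fun _ _ h => h.1

lemma avoid_avoid (G : SimpleGraph V) (X Y : Set V) :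
    avoid (avoid G X) Y = avoid G (X ∪ Y) := by
  ext u v
  simp only [avoid_adj, Set.mem_union]
  tauto

lemma support_not_mem {G : SimpleGraph V} {X : Set V} {u v : V}
    (W : (avoid G X).Walk u v) (hu : u ∉ X) : ∀ w ∈ W.support, w ∉ X := by
  induction W with
  | nil => intro w hw; simp only [Walk.support_nil, List.mem_singleton] at hw; subst hw; exact hu
  | cons h p ih =>
    intro w hw
    rw [Walk.support_cons, List.mem_cons] at hw
    rcases hw with rfl | hw
    · exact hu
    · exact ih h.2.2 w hw

/-- Convert a `G`-walk whose support avoids `X` into an `avoid G X`-walk. -/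
lemma to_avoid {G : SimpleGraph V} {X : Set V} {u v : V}
    (W : G.Walk u v) (h : ∀ w ∈ W.support, w ∉ X) :
    ∃ W' : (avoid G X).Walk u v, W'.length = W.length := by
  induction W with
  | nil => exact ⟨Walk.nil, rfl⟩
  | cons hadj p ih =>
    obtain ⟨W', hW'⟩ := ih (fun w hw => h w (by rw [Walk.support_cons]; exact List.mem_cons_of_mem _ hw))
    refine ⟨Walk.cons ⟨hadj, ?_, ?_⟩ W',
      (Walk.length_cons _ _).trans ((congrArg (· + 1) hW').trans (Walk.length_cons _ _).symm)⟩
    · exact h _ (Walk.start_mem_support _)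
    · exact h _ (by rw [Walk.support_cons]; exact List.mem_cons_of_mem _ (Walk.start_mem_support _))

/-- Downgrade an avoid-walk to a `G`-walk with the same length and support. -/
lemma of_avoid {G : SimpleGraph V} {X : Set V} {u v : V}
    (W : (avoid G X).Walk u v) :
    ∃ W' : G.Walk u v, W'.length = W.length ∧ W'.support = W.support := by
  induction W with
  | nil => exact ⟨Walk.nil, rfl, rfl⟩
  | cons hadj p ih =>
    obtain ⟨W', h1, h2⟩ := ih
    exact ⟨Walk.cons hadj.1 W', by simp [h1], by simp [h2]⟩

/-- Strengthen the avoided set, given the support misses the new set. -/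
lemma reach_strengthen {G : SimpleGraph V} {X Y : Set V} {u v : V}
    (W : (avoid G X).Walk u v) (h : ∀ w ∈ W.support, w ∉ Y) :
    (avoid G (X ∪ Y)).Reachable u v := by
  induction W with
  | nil => exact Reachable.refl _
  | cons hadj p ih =>
    refine (Adj.reachable ?_).trans (ih fun w hw => h w (by rw [Walk.support_cons]; exact List.mem_cons_of_mem _ hw))
    refine ⟨hadj.1, ?_, ?_⟩
    · simp only [Set.mem_union, not_or]
      exact ⟨hadj.2.1, h _ (Walk.start_mem_support _)⟩
    · simp only [Set.mem_union, not_or]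
      exact ⟨hadj.2.2, h _ (by rw [Walk.support_cons]; exact List.mem_cons_of_mem _ (Walk.start_mem_support _))⟩

/-- Split a walk at position `t`. -/
lemma walk_split_s13 {G : SimpleGraph V} {u v : V} (W : G.Walk u v) (t : ℕ) (ht : t ≤ W.length) :
    ∃ (W₁ : G.Walk u (W.getVert t)) (W₂ : G.Walk (W.getVert t) v),
      W₁.length = t ∧ W₂.length = W.length - t := by
  induction W generalizing t with
  | nil =>
    simp only [Walk.length_nil, Nat.le_zero] at ht
    subst ht
    exact ⟨Walk.nil, Walk.nil, rfl, rfl⟩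
  | cons hadj p ih =>
    cases t with
    | zero => exact ⟨Walk.nil, (Walk.cons hadj p).copy (Walk.getVert_zero _).symm rfl, rfl, by simp⟩
    | succ s =>
      simp only [Walk.length_cons, Nat.succ_le_succ_iff] at ht
      obtain ⟨W₁, W₂, h1, h2⟩ := ih s ht
      exact ⟨Walk.cons hadj W₁, W₂, by simp [h1], by simpa using h2⟩

/-- Key quantitative lemma: if `a` lies on a cycle then two of its neighbours are joined by
a short path avoiding `a`. -/
lemma lemA {G : SimpleGraph V} {d : ℕ}
    (hdiam : ∀ u v : V, G.Reachable u v → G.dist u v ≤ d)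
    {a y z : V} (hy : G.Adj a y) (hz : G.Adj a z) (hyz : y ≠ z)
    (hr : (avoid G {a}).Reachable y z) :
    ∃ y' z', G.Adj a y' ∧ G.Adj a z' ∧ y' ≠ z' ∧
      ∃ W : (avoid G {a}).Walk y' z', W.length ≤ 2 * d := by
  classical
  set T : Set ℕ := {m | ∃ y' z', G.Adj a y' ∧ G.Adj a z' ∧ y' ≠ z' ∧
      ∃ W : (avoid G {a}).Walk y' z', W.length = m} with hT
  have hTne : T.Nonempty := by
    obtain ⟨W₀⟩ := hr
    exact ⟨W₀.length, y, z, hy, hz, hyz, W₀, rfl⟩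
  set D := sInf T with hD
  obtain ⟨y', z', hy', hz', hne, W, hWlen⟩ : D ∈ T := Nat.sInf_mem hTne
  have hmin : ∀ m ∈ T, D ≤ m := fun m hm => Nat.sInf_le hm
  suffices hDle : D ≤ 2 * d by
    exact ⟨y', z', hy', hz', hne, W, by omega⟩
  by_contra hDgt
  push_neg at hDgt
  -- D ≥ 2d+1
  set t := (D + 1) / 2 with ht
  have htle : t ≤ W.length := by omega
  set m := W.getVert t with hm
  obtain ⟨W₁, W₂, hW₁, hW₂⟩ := walk_split_s13 W t htle
  -- m avoids a
  have hysupp : ∀ w ∈ W.support, w ∉ ({a} : Set V) :=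
    support_not_mem W (by simp [hy'.ne'])
  have hmne : m ∉ ({a} : Set V) := by
    refine hysupp m ?_
    rw [Walk.mem_support_iff_exists_getVert]
    exact ⟨t, rfl, by omega⟩
  -- a shortest G-path from y' to m
  have hreachym : G.Reachable y' m := by
    obtain ⟨W₁', _, _⟩ := of_avoid W₁
    exact ⟨W₁'⟩
  obtain ⟨R, hRpath, hRlen⟩ := hreachym.exists_path_of_dist
  have hRd : R.length ≤ d := by rw [hRlen]; exact hdiam _ _ hreachym
  by_cases haR : a ∈ R.support
  · -- R passes through a
    have hR1 : (R.takeUntil a haR).length ≠ 0 := by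
      intro h0
      exact hy'.ne' (Walk.eq_of_length_eq_zero h0)
    have hlen_eq : (R.takeUntil a haR).length + (R.dropUntil a haR).length = R.length := by
      have h := congrArg Walk.length (R.take_spec haR)
      rwa [Walk.length_append] at h
    set R₂ := R.dropUntil a haR with hR₂
    have hR₂path : R₂.IsPath := hRpath.dropUntil haR
    have hR₂ne : ¬ R₂.Nil := by
      rw [Walk.not_nil_iff_lt_length]
      rcases Nat.eq_zero_or_pos R₂.length with h0 | h0
      · exact absurd (Walk.eq_of_length_eq_zero h0) (by simp at hmne; exact fun h => hmne h.symm)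
      · exact h0
    obtain ⟨b, hab, q, hq⟩ := Walk.not_nil_iff.mp hR₂ne
    have hqa : ∀ w ∈ q.support, w ∉ ({a} : Set V) := by
      intro w hw
      have : R₂.IsPath := hR₂path
      rw [hq, Walk.cons_isPath_iff] at this
      simp only [Set.mem_singleton_iff]
      rintro rfl
      exact this.2 hw
    obtain ⟨q', hq'len⟩ := to_avoid q hqa
    have hqlen : q.length ≤ d - 2 := by
      have : R₂.length = q.length + 1 := by rw [hq]; simp
      omega
    by_cases hbz : b = z'
    · -- use W₁ ++ q'.reverse
      have : (W₁.append ((q'.copy hbz rfl).reverse)).length ∈ T :=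
        ⟨y', z', hy', hz', hne, _, rfl⟩
      have hle := hmin _ this
      rw [Walk.length_append, Walk.length_reverse, Walk.length_copy] at hle
      omega
    · -- new pair (b, z') via q' ++ W₂
      have : (q'.append W₂).length ∈ T := ⟨b, z', hab, hz', hbz, _, rfl⟩
      have hle := hmin _ this
      rw [Walk.length_append] at hle
      omega
  · -- R avoids a entirely
    obtain ⟨R', hR'len⟩ := to_avoid R
      (fun w hw ha => haR (by rwa [Set.mem_singleton_iff.mp ha] at hw))
    have : (R'.append W₂).length ∈ T := ⟨y', z', hy', hz', hne, _, rfl⟩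
    have hle := hmin _ this
    rw [Walk.length_append] at hle
    omega

/-- If `x` is on no cycle, distances inside components of `G - x` are at most `d`. -/
lemma c2a {G : SimpleGraph V} (hconn : G.Connected) {d : ℕ} (hd : ∀ u v : V, G.dist u v ≤ d)
    {x : V}
    (hnc : ¬ ∃ y z, G.Adj x y ∧ G.Adj x z ∧ y ≠ z ∧ (avoid G {x}).Reachable y z) :
    ∀ u v : V, (avoid G {x}).Reachable u v → (avoid G {x}).dist u v ≤ d := by
  classical
  intro u v hr
  by_cases huv : u = v
  · subst huv; rw [SimpleGraph.dist_self]; exact Nat.zero_le d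
  -- u ≠ x and v ≠ x
  have hr' := hr
  obtain ⟨W₀⟩ := hr'
  have hux : u ∉ ({x} : Set V) := by
    cases W₀ with
    | nil => exact absurd rfl huv
    | cons h p => exact h.2.1
  have hsupp := support_not_mem W₀ hux
  have hvx : v ∉ ({x} : Set V) := hsupp v W₀.end_mem_support
  -- shortest G-path from u to v
  obtain ⟨P, hPpath, hPlen⟩ := hconn.exists_path_of_dist u v
  have hPd : P.length ≤ d := hPlen ▸ hd u v
  by_cases hxP : x ∈ P.support
  · -- derive a contradiction with hnc
    exfalso
    set P₁ := P.takeUntil x hxP with hP₁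
    set P₂ := P.dropUntil x hxP with hP₂
    have hP₁path : P₁.IsPath := hPpath.takeUntil hxP
    have hP₂path : P₂.IsPath := hPpath.dropUntil hxP
    -- decompose P₁ from the end: P₁.reverse = cons (Adj x a) q₁
    have hP₁ne : ¬ P₁.reverse.Nil := by
      rw [Walk.not_nil_iff_lt_length, Walk.length_reverse]
      rcases Nat.eq_zero_or_pos P₁.length with h0 | h0
      · exact absurd (Walk.eq_of_length_eq_zero h0) (by simpa using hux)
      · exact h0
    obtain ⟨a, hxa, q₁, hq₁⟩ := Walk.not_nil_iff.mp hP₁ne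
    -- decompose P₂ from the start
    have hP₂ne : ¬ P₂.Nil := by
      rw [Walk.not_nil_iff_lt_length]
      rcases Nat.eq_zero_or_pos P₂.length with h0 | h0
      · exact absurd (Walk.eq_of_length_eq_zero h0).symm (by simpa using hvx)
      · exact h0
    obtain ⟨b, hxb, q₂, hq₂⟩ := Walk.not_nil_iff.mp hP₂ne
    -- a avoids x, q₁ avoids x
    have hq₁x : ∀ w ∈ q₁.support, w ∉ ({x} : Set V) := by
      intro w hw
      have hrp : P₁.reverse.IsPath := hP₁path.reverse
      rw [hq₁, Walk.cons_isPath_iff] at hrp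
      simp only [Set.mem_singleton_iff]
      rintro rfl
      exact hrp.2 hw
    have hq₂x : ∀ w ∈ q₂.support, w ∉ ({x} : Set V) := by
      intro w hw
      have hrp : P₂.IsPath := hP₂path
      rw [hq₂, Walk.cons_isPath_iff] at hrp
      simp only [Set.mem_singleton_iff]
      rintro rfl
      exact hrp.2 hw
    -- a ≠ b since P is a path
    have hab : a ≠ b := by
      rintro rfl
      -- a ∈ P₁.support and a ∈ P₂.support.tail
      have ha1 : a ∈ P₁.support := by
        have : a ∈ P₁.reverse.support := by
          rw [hq₁, Walk.support_cons]
          exact List.mem_cons_of_mem _ (Walk.start_mem_support _)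
        rwa [Walk.support_reverse, List.mem_reverse] at this
      have ha2 : a ∈ P₂.support.tail := by
        rw [hq₂, Walk.support_cons, List.tail_cons]
        exact Walk.start_mem_support _
      have hnd := hPpath.support_nodup
      rw [← P.take_spec hxP, Walk.support_append, List.nodup_append] at hnd
      exact hnd.2.2 a ha1 a ha2 rfl
    -- reachability: a —q₁→ u —hr→ v ←q₂— b  all avoiding x
    obtain ⟨q₁', _⟩ := to_avoid q₁ hq₁x
    obtain ⟨q₂', _⟩ := to_avoid q₂ hq₂x
    exact hnc ⟨a, b, hxa, hxb, hab, (Reachable.trans ⟨q₁'⟩ hr).trans ⟨q₂'.reverse⟩⟩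
  · -- P avoids x; gives dist bound
    obtain ⟨P', hP'len⟩ := to_avoid P
      (fun w hw hm => hxP (by rwa [Set.mem_singleton_iff.mp hm] at hw))
    calc (avoid G {x}).dist u v ≤ P'.length := dist_le P'
    _ ≤ d := by omega

lemma c2b [Finite V] {G : SimpleGraph V} {x y : V} {S₀ : Set V}
    (hS : Deg2Closed G S₀) (hyS : y ∈ S₀) (hxy : G.Adj x y)
    (hnc : ¬ ∃ u w, G.Adj x u ∧ G.Adj x w ∧ u ≠ w ∧ (avoid G {x}).Reachable u w) :
    ∃ a b c, (avoid G {x}).Reachable y a ∧ G.Adj a b ∧ G.Adj a c ∧ b ≠ c ∧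
      a ≠ x ∧ b ≠ x ∧ c ≠ x ∧ (avoid G ({x} ∪ {a})).Reachable b c := by
  classical
  have := Fintype.ofFinite V
  set Γ := avoid G {x} with hΓ
  have hyx : y ≠ x := hxy.ne'
  set M : Set ℕ := {m | ∃ (e : V) (W : Γ.Walk y e), W.IsPath ∧ (∀ w ∈ W.support, w ∈ S₀) ∧
    W.length = m} with hM
  have hMne : M.Nonempty := ⟨0, y, Walk.nil, by simp [hyS]⟩
  have hMbdd : BddAbove M := by
    refine ⟨Fintype.card V, ?_⟩
    rintro m ⟨e, W, hWp, _, rfl⟩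
    exact le_of_lt hWp.length_lt
  obtain ⟨e, W, hWpath, hWS, hWlen⟩ : sSup M ∈ M := Nat.sSup_mem hMne hMbdd
  have hmax : ∀ m ∈ M, m ≤ sSup M := fun m hm => le_csSup hMbdd hm
  have hWx : ∀ w ∈ W.support, w ≠ x := by
    intro w hw
    have := support_not_mem W (by simpa using hyx) w hw
    simpa using this
  have hex : e ≠ x := hWx e W.end_mem_support
  have heS : e ∈ S₀ := hWS e W.end_mem_support
  -- extension principle
  have hext : ∀ w, w ∈ S₀ → G.Adj e w → w ≠ x → w ∈ W.support := by
    intro w hwS hew hwx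
    by_contra hwe
    have hadj : Γ.Adj e w := ⟨hew, by simpa using hex, by simpa using hwx⟩
    have hpath' : (W.concat hadj).IsPath := by
      rw [← Walk.isPath_reverse_iff, Walk.reverse_concat, Walk.cons_isPath_iff]
      refine ⟨hWpath.reverse, ?_⟩
      rw [Walk.support_reverse, List.mem_reverse]
      exact hwe
    have hmem : (W.concat hadj).length ∈ M := by
      refine ⟨w, _, hpath', ?_, rfl⟩
      intro u hu
      rw [Walk.support_concat, List.mem_append] at hu
      rcases hu with hu | hu
      · exact hWS u hu
      · simp at hu; subst hu; exact hwS
    have := hmax _ hmem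
    rw [Walk.length_concat] at this
    omega
  -- the walk has positive length
  have hL1 : 1 ≤ W.length := by
    by_contra hL
    push_neg at hL
    obtain ⟨w₁, hw₁S, w₂, hw₂S, hww, haw₁, haw₂⟩ := hS e heS
    have : ∃ w, w ∈ S₀ ∧ G.Adj e w ∧ w ≠ x := by
      by_cases h1 : w₁ = x
      · exact ⟨w₂, hw₂S, haw₂, fun h2 => hww (h1.trans h2.symm)⟩
      · exact ⟨w₁, hw₁S, haw₁, h1⟩
    obtain ⟨w, hwS, hew, hwx⟩ := this
    have hmem := hext w hwS hew hwx
    have hsupp1 : W.support = [e] := by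
      have h0 : W.length = 0 := by omega
      have hlen : W.support.length = 1 := by rw [Walk.length_support, h0]
      obtain ⟨a, ha⟩ := List.length_eq_one_iff.mp hlen
      have : e ∈ W.support := W.end_mem_support
      rw [ha] at this ⊢
      simp at this
      rw [this]
    rw [hsupp1] at hmem
    simp at hmem
    exact hew.ne (hmem.symm)
  have hye : y ≠ e := by
    intro h
    subst h
    rw [Walk.isPath_iff_eq_nil] at hWpath
    rw [hWpath] at hL1
    simp at hL1
  -- decompose the reversed walk
  set W' := W.reverse with hW'
  have hW'path : W'.IsPath := hWpath.reverse
  have hWne : ¬ W'.Nil := by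
    rw [Walk.not_nil_iff_lt_length, hW', Walk.length_reverse]; omega
  obtain ⟨prev, hep, q, hq⟩ := Walk.not_nil_iff.mp hWne
  -- hep : Γ.Adj e prev, q : Γ.Walk prev y
  have hmemW' : ∀ w, w ∈ W.support ↔ w ∈ W'.support := by
    intro w
    rw [hW', Walk.support_reverse, List.mem_reverse]
  have hW'supp : W'.support = e :: q.support := by rw [hq, Walk.support_cons]
  have heq : e ∉ q.support ∧ q.IsPath := by
    have := hW'path
    rw [hq, Walk.cons_isPath_iff] at this
    exact ⟨this.2, this.1⟩
  have hprev : prev ∈ W.support := by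
    rw [hmemW' prev, hW'supp]
    exact List.mem_cons_of_mem _ q.start_mem_support
  -- neighbours of e in S₀
  obtain ⟨w₁, hw₁S, w₂, hw₂S, hww, haw₁, haw₂⟩ := hS e heS
  have hcases : ∀ w, w ∈ S₀ → G.Adj e w → w = x ∨ w ∈ W.support := by
    intro w hwS hew
    by_cases hwx : w = x
    · exact Or.inl hwx
    · exact Or.inr (hext w hwS hew hwx)
  by_cases hI : ∃ w, w ∈ S₀ ∧ G.Adj e w ∧ w ∈ W.support ∧ w ≠ prev
  · -- case I : a cycle through e avoiding x
    obtain ⟨b, hbS, heb, hbW, hbprev⟩ := hI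
    have hbq : b ∈ q.support := by
      have := (hmemW' b).mp hbW
      rw [hW'supp] at this
      rcases List.mem_cons.mp this with h | h
      · exact absurd h heb.ne'
      · exact h
    -- walk from b to prev inside q, avoiding e
    set Q := (q.takeUntil b hbq).reverse with hQ
    have hQsupp : ∀ w ∈ Q.support, w ∉ ({e} : Set V) := by
      intro w hw
      rw [hQ, Walk.support_reverse, List.mem_reverse] at hw
      have := Walk.support_takeUntil_subset q hbq hw
      simp only [Set.mem_singleton_iff]
      rintro rfl
      exact heq.1 this
    have hreach : (avoid G ({x} ∪ {e})).Reachable b prev := reach_strengthen Q hQsupp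
    refine ⟨e, b, prev, ⟨W⟩, heb, hep.1, hbprev, hex, ?_, ?_, hreach⟩
    · exact hWx b hbW
    · exact hWx prev hprev
  · -- case II : e is adjacent to x; contradiction with hnc
    exfalso
    push_neg at hI
    have hx12 : w₁ = x ∨ w₂ = x := by
      rcases hcases w₁ hw₁S haw₁ with h1 | h1
      · exact Or.inl h1
      · rcases hcases w₂ hw₂S haw₂ with h2 | h2
        · exact Or.inr h2
        · have e1 : w₁ = prev := by
            by_contra hne
            exact hne (hI w₁ hw₁S haw₁ h1)
          have e2 : w₂ = prev := by
            by_contra hne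
            exact hne (hI w₂ hw₂S haw₂ h2)
          exact absurd (e1.trans e2.symm) hww
    have hexadj : G.Adj x e := by
      rcases hx12 with h | h
      · rw [← h]; exact haw₁.symm
      · rw [← h]; exact haw₂.symm
    exact hnc ⟨y, e, hxy, hexadj, hye, ⟨W⟩⟩

/-- "the last variable differs from every variable in `A`". -/
def notAnyF : {n : ℕ} → List (Fin n) → GForm (n + 1)
  | n, [] => .neg (.adj (Fin.last n) (Fin.last n))
  | n, a :: as => .conj (.neg (.eq (Fin.last n) a.castSucc)) (notAnyF as)

/-- `near k n u v A` : there is a walk from `u` to `v` of length at most `2 ^ k`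
whose vertices (except possibly the endpoints) avoid `A`. -/
def near : ℕ → (n : ℕ) → Fin n → Fin n → List (Fin n) → GForm n
  | 0, _, u, v, _ => .disj (.eq u v) (.adj u v)
  | (k+1), n, u, v, A => .disj (near k n u v A)
      (.ex (.conj (notAnyF A) (.conj
        (near k (n+1) u.castSucc (Fin.last n) (A.map Fin.castSucc))
        (near k (n+1) (Fin.last n) v.castSucc (A.map Fin.castSucc)))))

lemma notAnyF_depth {n : ℕ} (A : List (Fin n)) : (notAnyF A).depth = 0 := by
  induction A with
  | nil => simp [notAnyF, GForm.depth]
  | cons a as ih => simp [notAnyF, GForm.depth, ih]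

lemma near_depth : ∀ (k n : ℕ) (u v : Fin n) (A : List (Fin n)), (near k n u v A).depth ≤ k := by
  intro k
  induction k with
  | zero => intro n u v A; simp [near, GForm.depth]
  | succ k ih =>
    intro n u v A
    simp only [near, GForm.depth]
    refine max_le ((ih n u v A).trans (by omega)) ?_
    have h1 := ih (n+1) u.castSucc (Fin.last n) (A.map Fin.castSucc)
    have h2 := ih (n+1) (Fin.last n) v.castSucc (A.map Fin.castSucc)
    have h0 := notAnyF_depth (n := n) A
    omega

def Xset (g : Fin n → V) (A : List (Fin n)) : Set V := {w | ∃ a ∈ A, w = g a}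

lemma Xset_snoc {n : ℕ} (g : Fin n → V) (w : V) (A : List (Fin n)) :
    Xset (Fin.snoc g w) (A.map Fin.castSucc) = Xset g A := by
  ext u
  simp only [Xset, Set.mem_setOf_eq, List.mem_map]
  constructor
  · rintro ⟨a, ⟨b, hb, rfl⟩, rfl⟩
    exact ⟨b, hb, by rw [Fin.snoc_castSucc]⟩
  · rintro ⟨b, hb, rfl⟩
    exact ⟨b.castSucc, ⟨b, hb, rfl⟩, by rw [Fin.snoc_castSucc]⟩

lemma realize_notAnyF {n : ℕ} {G : SimpleGraph V} (g : Fin (n+1) → V) (A : List (Fin n)) :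
    (notAnyF A).Realize G g ↔ ∀ a ∈ A, g (Fin.last n) ≠ g a.castSucc := by
  induction A with
  | nil => simp [notAnyF, GForm.Realize]
  | cons a as ih => simp [notAnyF, GForm.Realize, ih]

lemma near_sound {G : SimpleGraph V} :
    ∀ (k n : ℕ) (u v : Fin n) (A : List (Fin n)) (g : Fin n → V),
      (near k n u v A).Realize G g → g u ∉ Xset g A → g v ∉ Xset g A →
      (avoid G (Xset g A)).Reachable (g u) (g v) := by
  intro k
  induction k with
  | zero =>
    intro n u v A g h hu hv
    rcases h with h | h
    · rw [show GForm.Realize G (.eq u v) g = (g u = g v) from rfl] at h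
      rw [h]
    · exact Adj.reachable ⟨h, hu, hv⟩
  | succ k ih =>
    intro n u v A g h hu hv
    rcases h with h | h
    · exact ih n u v A g h hu hv
    · obtain ⟨w, hw⟩ := h
      obtain ⟨hnot, h1, h2⟩ := hw
      have hwX : w ∉ Xset g A := by
        rw [realize_notAnyF] at hnot
        rintro ⟨a, ha, rfl⟩
        exact hnot a ha (by rw [Fin.snoc_last, Fin.snoc_castSucc]) |>.elim
      have e1 : (Fin.snoc g w : Fin (n+1) → V) u.castSucc = g u := Fin.snoc_castSucc ..
      have e2 : (Fin.snoc g w : Fin (n+1) → V) (Fin.last n) = w := Fin.snoc_last ..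
      have e3 : (Fin.snoc g w : Fin (n+1) → V) v.castSucc = g v := Fin.snoc_castSucc ..
      have hX := Xset_snoc g w A
      have r1 := ih (n+1) u.castSucc (Fin.last n) (A.map Fin.castSucc) (Fin.snoc g w) h1
        (by rw [e1, hX]; exact hu) (by rw [e2, hX]; exact hwX)
      have r2 := ih (n+1) (Fin.last n) v.castSucc (A.map Fin.castSucc) (Fin.snoc g w) h2
        (by rw [e2, hX]; exact hwX) (by rw [e3, hX]; exact hv)
      rw [e1, e2, hX] at r1
      rw [e2, e3, hX] at r2
      exact r1.trans r2

lemma near_complete {G : SimpleGraph V} :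
    ∀ (k n : ℕ) (u v : Fin n) (A : List (Fin n)) (g : Fin n → V) {a b : V} {X : Set V}
      (ha : g u = a) (hb : g v = b) (hX : Xset g A = X)
      (W : (avoid G X).Walk a b), W.length ≤ 2 ^ k → a ∉ X →
      (near k n u v A).Realize G g := by
  intro k
  induction k with
  | zero =>
    intro n u v A g a b X ha hb hX W hlen _
    rcases Nat.le_one_iff_eq_zero_or_eq_one.mp hlen with h0 | h1
    · refine Or.inl ?_
      show g u = g v
      rw [ha, hb]
      exact Walk.eq_of_length_eq_zero h0
    · refine Or.inr ?_
      show G.Adj (g u) (g v)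
      rw [ha, hb]
      exact (Walk.adj_of_length_eq_one h1).1
  | succ k ih =>
    intro n u v A g a b X ha hb hX W hlen hu
    by_cases hsmall : W.length ≤ 2 ^ k
    · exact Or.inl (ih n u v A g ha hb hX W hsmall hu)
    · push_neg at hsmall
      have ht : 2 ^ k ≤ W.length := le_of_lt hsmall
      set w := W.getVert (2 ^ k) with hwdef
      obtain ⟨W₁, W₂, h1, h2⟩ := walk_split_s13 W (2 ^ k) ht
      have hwX : w ∉ X := by
        refine support_not_mem W hu w ?_
        rw [Walk.mem_support_iff_exists_getVert]
        exact ⟨2 ^ k, rfl, ht⟩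
      have e1 : (Fin.snoc g w : Fin (n+1) → V) u.castSucc = g u := Fin.snoc_castSucc ..
      have e2 : (Fin.snoc g w : Fin (n+1) → V) (Fin.last n) = w := Fin.snoc_last ..
      have e3 : (Fin.snoc g w : Fin (n+1) → V) v.castSucc = g v := Fin.snoc_castSucc ..
      have hX' : Xset (Fin.snoc g w) (A.map Fin.castSucc) = X := (Xset_snoc g w A).trans hX
      refine Or.inr ⟨w, ?_, ?_, ?_⟩
      · rw [realize_notAnyF]
        intro i hi
        rw [e2, Fin.snoc_castSucc]
        intro heq
        exact hwX (hX ▸ ⟨i, hi, heq⟩)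
      · exact ih (n+1) u.castSucc (Fin.last n) (A.map Fin.castSucc) (Fin.snoc g w)
          (e1.trans ha) e2 hX' W₁ (by rw [pow_succ] at hlen; omega) (ha ▸ hu)
      · exact ih (n+1) (Fin.last n) v.castSucc (A.map Fin.castSucc) (Fin.snoc g w)
          e2 (e3.trans hb) hX' W₂ (by rw [pow_succ] at hlen; omega) hwX

/-- Interior vertices of a path have two distinct neighbours on the path. -/
lemma path_interior {H : SimpleGraph V} {u v : V} (P : H.Walk u v) (hP : P.IsPath) :
    ∀ w ∈ P.support, w ≠ u → w ≠ v →
      ∃ n₁ n₂, n₁ ∈ P.support ∧ n₂ ∈ P.support ∧ n₁ ≠ n₂ ∧ H.Adj w n₁ ∧ H.Adj w n₂ := by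
  induction P with
  | nil =>
    intro w hw hwu _
    rw [Walk.support_nil, List.mem_singleton] at hw
    exact absurd hw hwu
  | @cons u s v hadj Q ih =>
    intro w hw hwu hwv
    rw [Walk.support_cons, List.mem_cons] at hw
    rcases hw with rfl | hw
    · exact absurd rfl hwu
    have hQpath : Q.IsPath := (Walk.cons_isPath_iff _ _).mp hP |>.1
    have huQ : u ∉ Q.support := (Walk.cons_isPath_iff _ _).mp hP |>.2
    by_cases hws : w = s
    · subst hws
      -- second vertex; neighbours u and next one
      have hQne : ¬ Q.Nil := by
        rw [Walk.not_nil_iff_lt_length]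
        rcases Nat.eq_zero_or_pos Q.length with h0 | h0
        · exact absurd (Walk.eq_of_length_eq_zero h0) hwv
        · exact h0
      obtain ⟨s₂, hss₂, Q₂, hQ₂⟩ := Walk.not_nil_iff.mp hQne
      have hs₂Q : s₂ ∈ Q.support := by
        rw [hQ₂, Walk.support_cons]
        exact List.mem_cons_of_mem _ (Walk.start_mem_support _)
      refine ⟨u, s₂, Walk.start_mem_support _, ?_, ?_, hadj.symm, hss₂⟩
      · rw [Walk.support_cons]; exact List.mem_cons_of_mem _ hs₂Q
      · rintro rfl; exact huQ hs₂Q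
    · obtain ⟨n₁, n₂, h1, h2, h3, h4, h5⟩ := ih hQpath w hw hws hwv
      exact ⟨n₁, n₂, by rw [Walk.support_cons]; exact List.mem_cons_of_mem _ h1,
        by rw [Walk.support_cons]; exact List.mem_cons_of_mem _ h2, h3, h4, h5⟩

/-- The second vertex of a nontrivial walk. -/
lemma path_second {H : SimpleGraph V} {u v : V} (P : H.Walk u v) (hne : u ≠ v) :
    ∃ n ∈ P.support, H.Adj u n := by
  have hPne : ¬ P.Nil := by
    rw [Walk.not_nil_iff_lt_length]
    rcases Nat.eq_zero_or_pos P.length with h0 | h0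
    · exact absurd (Walk.eq_of_length_eq_zero h0) hne
    · exact h0
  obtain ⟨s, hus, Q, hQ⟩ := Walk.not_nil_iff.mp hPne
  refine ⟨s, ?_, hus⟩
  rw [hQ, Walk.support_cons]
  exact List.mem_cons_of_mem _ (Walk.start_mem_support _)

/-- One "branch" of the witness structure: within `insert x T`, every vertex of `T`
has two distinct neighbours, where `T` is a path from a neighbour `y` of `x` to a vertex
`a` on a cycle avoiding `x`. -/
lemma branch_good {G : SimpleGraph V} {x y a b c : V}
    (hxy : G.Adj x y) (hax : a ≠ x) (hbx : b ≠ x) (hcx : c ≠ x)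
    (hab : G.Adj a b) (hac : G.Adj a c) (hbc : b ≠ c)
    (P : (avoid G {x}).Walk y a) (hP : P.IsPath)
    (Q : (avoid G ({x} ∪ {a})).Walk b c) (hQ : Q.IsPath) :
    ∀ v, (v ∈ P.support ∨ v ∈ Q.support) →
      ∃ n₁ n₂, n₁ ≠ n₂ ∧ G.Adj v n₁ ∧ G.Adj v n₂ ∧
        (n₁ = x ∨ n₁ ∈ P.support ∨ n₁ ∈ Q.support) ∧
        (n₂ = x ∨ n₂ ∈ P.support ∨ n₂ ∈ Q.support) := by
  have hyx : y ≠ x := hxy.ne'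
  have hPx : ∀ w ∈ P.support, w ∉ ({x} : Set V) := support_not_mem P (by simpa using hyx)
  have hQxa : ∀ w ∈ Q.support, w ∉ ({x} ∪ {a} : Set V) := by
    refine support_not_mem Q ?_
    simp only [Set.mem_union, Set.mem_singleton_iff]
    push_neg
    exact ⟨hbx, hab.ne'⟩
  intro v hv
  rcases hv with hv | hv
  · -- v on P
    by_cases hva : v = a
    · -- a : use b and c
      subst hva
      exact ⟨b, c, hbc, hab, hac, Or.inr (Or.inr Q.start_mem_support),
        Or.inr (Or.inr Q.end_mem_support)⟩
    by_cases hvy : v = y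
    · -- y : use x and the second vertex of P
      subst hvy
      obtain ⟨s, hsP, hs⟩ := path_second P (fun h => hva h)
      refine ⟨x, s, ?_, hxy.symm, hs.1, Or.inl rfl, Or.inr (Or.inl hsP)⟩
      intro h
      exact (hPx s hsP) (by rw [← h]; rfl)
    · obtain ⟨n₁, n₂, h1, h2, h3, h4, h5⟩ := path_interior P hP v hv hvy hva
      exact ⟨n₁, n₂, h3, h4.1, h5.1, Or.inr (Or.inl h1), Or.inr (Or.inl h2)⟩
  · -- v on Q
    by_cases hvb : v = b
    · subst hvb
      obtain ⟨s, hsQ, hs⟩ := path_second Q hbc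
      refine ⟨a, s, ?_, hab.symm, hs.1, Or.inr (Or.inl P.end_mem_support), Or.inr (Or.inr hsQ)⟩
      intro h
      exact (hQxa s hsQ) (by rw [← h]; simp)
    by_cases hvc : v = c
    · subst hvc
      obtain ⟨s, hsQ, hs⟩ := path_second Q.reverse (fun h => hbc h.symm)
      have hsQ' : s ∈ Q.support := by rwa [Walk.support_reverse, List.mem_reverse] at hsQ
      refine ⟨a, s, ?_, hac.symm, hs.1, Or.inr (Or.inl P.end_mem_support), Or.inr (Or.inr hsQ')⟩
      intro h
      exact (hQxa s hsQ') (by rw [← h]; simp)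
    · obtain ⟨n₁, n₂, h1, h2, h3, h4, h5⟩ := path_interior Q hQ v hv hvb hvc
      exact ⟨n₁, n₂, h3, h4.1, h5.1, Or.inr (Or.inr h1), Or.inr (Or.inr h2)⟩

/-- Soundness for the "on a cycle" formula. -/
lemma sound_cycle {G : SimpleGraph V} {x y z : V}
    (hy : G.Adj x y) (hz : G.Adj x z) (hyz : y ≠ z)
    (hr : (avoid G {x}).Reachable y z) : x ∈ coreSet G := by
  classical
  obtain ⟨W₀⟩ := hr
  set P := W₀.bypass with hPdef
  have hPp : P.IsPath := W₀.bypass_isPath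
  have hPx : ∀ w ∈ P.support, w ∉ ({x} : Set V) := support_not_mem P (by simpa using hy.ne')
  set S : Set V := insert x {w | w ∈ P.support} with hS
  refine Set.mem_sUnion.mpr ⟨S, ?_, Set.mem_insert _ _⟩
  intro v hv
  rcases Set.mem_insert_iff.mp hv with rfl | hvP
  · exact ⟨y, Set.mem_insert_iff.mpr (Or.inr P.start_mem_support), z,
      Set.mem_insert_iff.mpr (Or.inr P.end_mem_support), hyz, hy, hz⟩
  · simp only [Set.mem_setOf_eq] at hvP
    by_cases hvy : v = y
    · subst hvy
      obtain ⟨s, hsP, hs⟩ := path_second P hyz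
      refine ⟨x, Set.mem_insert _ _, s, Set.mem_insert_iff.mpr (Or.inr hsP), ?_, hy.symm, hs.1⟩
      intro h; exact (hPx s hsP) (by rw [← h]; rfl)
    by_cases hvz : v = z
    · subst hvz
      obtain ⟨s, hsP, hs⟩ := path_second P.reverse (fun h => hyz h.symm)
      have hsP' : s ∈ P.support := by rwa [Walk.support_reverse, List.mem_reverse] at hsP
      refine ⟨x, Set.mem_insert _ _, s, Set.mem_insert_iff.mpr (Or.inr hsP'), ?_, hz.symm, hs.1⟩
      intro h; exact (hPx s hsP') (by rw [← h]; rfl)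
    · obtain ⟨n₁, n₂, h1, h2, h3, h4, h5⟩ := path_interior P hPp v hvP hvy hvz
      exact ⟨n₁, Set.mem_insert_iff.mpr (Or.inr h1), n₂, Set.mem_insert_iff.mpr (Or.inr h2),
        h3, h4.1, h5.1⟩

/-- Soundness for the "between two cycles" formula. -/
lemma sound_psi {G : SimpleGraph V} {x y₁ y₂ a₁ a₂ : V}
    (hy₁ : G.Adj x y₁) (hy₂ : G.Adj x y₂) (h12 : y₁ ≠ y₂)
    (hr₁ : (avoid G {x}).Reachable y₁ a₁) (hr₂ : (avoid G {x}).Reachable y₂ a₂)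
    (hc₁ : ∃ b c, b ≠ c ∧ b ≠ x ∧ c ≠ x ∧ a₁ ≠ x ∧ G.Adj a₁ b ∧ G.Adj a₁ c ∧
      (avoid G ({x} ∪ {a₁})).Reachable b c)
    (hc₂ : ∃ b c, b ≠ c ∧ b ≠ x ∧ c ≠ x ∧ a₂ ≠ x ∧ G.Adj a₂ b ∧ G.Adj a₂ c ∧
      (avoid G ({x} ∪ {a₂})).Reachable b c) :
    x ∈ coreSet G := by
  classical
  obtain ⟨b₁, c₁, hbc₁, hbx₁, hcx₁, hax₁, hab₁, hac₁, hq₁⟩ := hc₁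
  obtain ⟨b₂, c₂, hbc₂, hbx₂, hcx₂, hax₂, hab₂, hac₂, hq₂⟩ := hc₂
  obtain ⟨P₁w⟩ := hr₁
  obtain ⟨P₂w⟩ := hr₂
  obtain ⟨Q₁w⟩ := hq₁
  obtain ⟨Q₂w⟩ := hq₂
  set P₁ := P₁w.bypass; set P₂ := P₂w.bypass; set Q₁ := Q₁w.bypass; set Q₂ := Q₂w.bypass
  have g₁ := branch_good hy₁ hax₁ hbx₁ hcx₁ hab₁ hac₁ hbc₁ P₁ P₁w.bypass_isPath Q₁ Q₁w.bypass_isPath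
  have g₂ := branch_good hy₂ hax₂ hbx₂ hcx₂ hab₂ hac₂ hbc₂ P₂ P₂w.bypass_isPath Q₂ Q₂w.bypass_isPath
  set S : Set V := insert x ({w | w ∈ P₁.support} ∪ {w | w ∈ Q₁.support} ∪
    {w | w ∈ P₂.support} ∪ {w | w ∈ Q₂.support}) with hS
  refine Set.mem_sUnion.mpr ⟨S, ?_, Set.mem_insert _ _⟩
  intro v hv
  have hmem : ∀ w, (w = x ∨ w ∈ P₁.support ∨ w ∈ Q₁.support) → w ∈ S := by
    rintro w (rfl | h | h)
    · exact Set.mem_insert _ _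
    · exact Set.mem_insert_iff.mpr (Or.inr (by left; left; left; exact h))
    · exact Set.mem_insert_iff.mpr (Or.inr (by left; left; right; exact h))
  have hmem2 : ∀ w, (w = x ∨ w ∈ P₂.support ∨ w ∈ Q₂.support) → w ∈ S := by
    rintro w (rfl | h | h)
    · exact Set.mem_insert _ _
    · exact Set.mem_insert_iff.mpr (Or.inr (by left; right; exact h))
    · exact Set.mem_insert_iff.mpr (Or.inr (by right; exact h))
  rcases Set.mem_insert_iff.mp hv with rfl | hvP
  · exact ⟨y₁, hmem y₁ (Or.inr (Or.inl P₁.start_mem_support)),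
      y₂, hmem2 y₂ (Or.inr (Or.inl P₂.start_mem_support)), h12, hy₁, hy₂⟩
  · simp only [Set.mem_union, Set.mem_setOf_eq] at hvP
    rcases hvP with ((h | h) | h) | h
    · obtain ⟨n₁, n₂, hne, ha1, ha2, hm1, hm2⟩ := g₁ v (Or.inl h)
      exact ⟨n₁, hmem n₁ hm1, n₂, hmem n₂ hm2, hne, ha1, ha2⟩
    · obtain ⟨n₁, n₂, hne, ha1, ha2, hm1, hm2⟩ := g₁ v (Or.inr h)
      exact ⟨n₁, hmem n₁ hm1, n₂, hmem n₂ hm2, hne, ha1, ha2⟩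
    · obtain ⟨n₁, n₂, hne, ha1, ha2, hm1, hm2⟩ := g₂ v (Or.inl h)
      exact ⟨n₁, hmem2 n₁ hm1, n₂, hmem2 n₂ hm2, hne, ha1, ha2⟩
    · obtain ⟨n₁, n₂, hne, ha1, ha2, hm1, hm2⟩ := g₂ v (Or.inr h)
      exact ⟨n₁, hmem2 n₁ hm1, n₂, hmem2 n₂ hm2, hne, ha1, ha2⟩


lemma walk_cast {G H : SimpleGraph V} (h : G = H) {u v : V} (W : G.Walk u v) :
    ∃ W' : H.Walk u v, W'.length = W.length := by subst h; exact ⟨W, rfl⟩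

lemma Xset_single {n : ℕ} (g : Fin n → V) (i : Fin n) : Xset g [i] = {g i} := by
  ext w; simp [Xset]

lemma Xset_pair {n : ℕ} (g : Fin n → V) (i j : Fin n) : Xset g [i, j] = {g i, g j} := by
  ext w
  simp only [Xset, Set.mem_setOf_eq, List.mem_cons, List.mem_singleton, List.not_mem_nil,
    Set.mem_insert_iff, Set.mem_singleton_iff]
  constructor
  · rintro ⟨a, (rfl | rfl | h), rfl⟩
    · exact Or.inl rfl
    · exact Or.inr rfl
    · cases h
  · rintro (rfl | rfl)
    · exact ⟨i, Or.inl rfl, rfl⟩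
    · exact ⟨j, Or.inr (Or.inl rfl), rfl⟩

/-- The formula `ψ'`: `x` lies on a short cycle. -/
def psi'F (k : ℕ) : GForm 1 :=
  .ex (.ex (.conj (.adj 0 1) (.conj (.adj 0 2) (.conj (.neg (.eq 1 2)) (near k 3 1 2 [0])))))

/-- `a` (a variable index in context `7`) lies on a short cycle avoiding `x` (variable `0`). -/
def cycF (k : ℕ) (a : Fin 7) : GForm 5 :=
  .ex (.ex (.conj (.adj a 5) (.conj (.adj a 6) (.conj (.neg (.eq 5 6))
    (.conj (.neg (.eq 5 0)) (.conj (.neg (.eq 6 0)) (near k 7 5 6 [0, a])))))))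

/-- The formula `ψ`: `x` lies on a short path between two short cycles avoiding `x`. -/
def psiF (k : ℕ) : GForm 1 :=
  .ex (.ex (.ex (.ex (
    .conj (.adj 0 1) (.conj (.adj 0 2) (.conj (.neg (.eq 1 2))
    (.conj (.neg (.eq 3 0)) (.conj (.neg (.eq 4 0))
    (.conj (near k 5 1 3 [0]) (.conj (near k 5 2 4 [0])
    (.conj (cycF k 3) (cycF k 4))))))))))))

def phiF (k : ℕ) : GForm 1 := .disj (psi'F k) (psiF k)

lemma phiF_depth (k : ℕ) : (phiF k).depth ≤ k + 6 := by
  have h1 := near_depth k 3 1 2 [0]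
  have h2 := near_depth k 5 1 3 [0]
  have h3 := near_depth k 5 2 4 [0]
  have h4 := near_depth k 7 5 6 [0, 3]
  have h5 := near_depth k 7 5 6 [0, 4]
  simp only [phiF, psiF, psi'F, cycF, GForm.depth]
  omega

lemma snoc_one (a b : V) : (Fin.snoc ![a] b : Fin 2 → V) = ![a, b] := by
  funext i; fin_cases i <;> rfl
lemma snoc_two (a b c : V) : (Fin.snoc ![a, b] c : Fin 3 → V) = ![a, b, c] := by
  funext i; fin_cases i <;> rfl
lemma snoc_three (a b c d : V) : (Fin.snoc ![a, b, c] d : Fin 4 → V) = ![a, b, c, d] := by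
  funext i; fin_cases i <;> rfl
lemma snoc_four (a b c d e : V) : (Fin.snoc ![a, b, c, d] e : Fin 5 → V) = ![a, b, c, d, e] := by
  funext i; fin_cases i <;> rfl
lemma snoc_five (a b c d e f : V) :
    (Fin.snoc ![a, b, c, d, e] f : Fin 6 → V) = ![a, b, c, d, e, f] := by
  funext i; fin_cases i <;> rfl
lemma snoc_six (a b c d e f g : V) :
    (Fin.snoc ![a, b, c, d, e, f] g : Fin 7 → V) = ![a, b, c, d, e, f, g] := by
  funext i; fin_cases i <;> rfl

end Aux

theorem statement13 :
    ∃ C : ℝ, ∀ (V W : Type), ∀ (_ : Finite V) (_ : Finite W),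
      ∀ (G : SimpleGraph V) (G' : SimpleGraph W) (d : ℕ) (x : V) (x' : W),
      G.Connected → G'.Connected →
      (∀ u v : V, G.dist u v ≤ d) → (∀ u v : W, G'.dist u v ≤ d) →
      x ∈ coreSet G → x' ∉ coreSet G' →
      ∃ φ : GForm 1, (φ.depth : ℝ) ≤ Real.logb 2 d + C ∧
        φ.Realize G ![x] ∧ ¬ φ.Realize G' ![x'] := by
  classical
  refine ⟨8, ?_⟩
  intro V W _ _ G G' d x x' hconn hconn' hd hd' hx hx'
  obtain ⟨S₀, hS₀, hxS₀⟩ := Set.mem_sUnion.mp hx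
  have hS₀' : Deg2Closed G S₀ := hS₀
  obtain ⟨y₁, hy₁S, y₂, hy₂S, h12, hadj₁, hadj₂⟩ := hS₀' x hxS₀
  have hd1 : 1 ≤ d := by
    have h1 := hd x y₁
    have h2 : 0 < G.dist x y₁ := hconn.pos_dist_of_ne hadj₁.ne
    omega
  set k := Nat.log 2 (2 * d) + 1 with hk
  have h2k : 2 * d ≤ 2 ^ k := le_of_lt (Nat.lt_pow_succ_log_self (by norm_num) (2 * d))
  have hdk : d ≤ 2 ^ k := by omega
  refine ⟨Aux.phiF k, ?_, ?_, ?_⟩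
  · -- depth bound
    have hdep := Aux.phiF_depth k
    have hlog1 : ((Nat.log 2 (2 * d) : ℕ) : ℝ) ≤ Real.logb 2 ((2 * d : ℕ) : ℝ) := by
      set L := Nat.log 2 (2 * d) with hL
      have hpow : (2 : ℕ) ^ L ≤ 2 * d := Nat.pow_log_le_self 2 (by omega)
      have hpow' : ((2 : ℝ)) ^ L ≤ ((2 * d : ℕ) : ℝ) := by exact_mod_cast hpow
      have h1 : Real.logb 2 ((2:ℝ) ^ L) ≤ Real.logb 2 ((2 * d : ℕ) : ℝ) :=
        Real.logb_le_logb_of_le (by norm_num) (by positivity) hpow'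
      rwa [Real.logb_pow, Real.logb_self_eq_one (by norm_num), mul_one] at h1
    have hsplit : Real.logb 2 ((2 * d : ℕ) : ℝ) = 1 + Real.logb 2 (d : ℝ) := by
      push_cast
      rw [Real.logb_mul (by norm_num) (by positivity), Real.logb_self_eq_one (by norm_num)]
    have hcast : ((Aux.phiF k).depth : ℝ) ≤ (k : ℝ) + 6 := by exact_mod_cast hdep
    have hkr : (k : ℝ) = ((Nat.log 2 (2 * d) : ℕ) : ℝ) + 1 := by rw [hk]; push_cast; ring
    calc ((Aux.phiF k).depth : ℝ) ≤ (k : ℝ) + 6 := hcast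
      _ ≤ (Real.logb 2 ((2 * d : ℕ) : ℝ) + 1) + 6 := by rw [hkr]; linarith
      _ = Real.logb 2 (d : ℝ) + 8 := by rw [hsplit]; ring
  · -- φ holds at x
    by_cases hc : ∃ u w, G.Adj x u ∧ G.Adj x w ∧ u ≠ w ∧ (Aux.avoid G {x}).Reachable u w
    · -- x lies on a short cycle: use ψ'
      obtain ⟨u, w, hu, hw, huw, hr⟩ := hc
      obtain ⟨y', z', hy', hz', hne, Wc, hWc⟩ :=
        Aux.lemA (fun a b _ => hd a b) hu hw huw hr
      refine Or.inl ⟨y', z', ?_⟩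
      rw [Aux.snoc_one, Aux.snoc_two]
      refine ⟨hy', hz', hne, ?_⟩
      refine Aux.near_complete k 3 1 2 [0] ![x, y', z'] rfl rfl
        (Aux.Xset_single ![x, y', z'] 0) Wc (le_trans hWc h2k) ?_
      exact fun h => hy'.ne' h
    · -- two cycles: use ψ
      have hc2a := Aux.c2a hconn hd hc
      obtain ⟨a₁, b₁, c₁, hra₁, hab₁, hac₁, hbc₁, hax₁, hbx₁, hcx₁, hrbc₁⟩ :=
        Aux.c2b hS₀' hy₁S hadj₁ hc
      obtain ⟨a₂, b₂, c₂, hra₂, hab₂, hac₂, hbc₂, hax₂, hbx₂, hcx₂, hrbc₂⟩ :=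
        Aux.c2b hS₀' hy₂S hadj₂ hc
      -- short walks from yᵢ to aᵢ
      obtain ⟨P₁, _, hP₁len⟩ := hra₁.exists_path_of_dist
      obtain ⟨P₂, _, hP₂len⟩ := hra₂.exists_path_of_dist
      have hP₁d : P₁.length ≤ 2 ^ k := by
        have := hc2a y₁ a₁ hra₁; omega
      have hP₂d : P₂.length ≤ 2 ^ k := by
        have := hc2a y₂ a₂ hra₂; omega
      -- short cycles through aᵢ avoiding x
      have key : ∀ (a b c : V), a ≠ x → b ≠ x → c ≠ x → G.Adj a b → G.Adj a c → b ≠ c →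
          (Aux.avoid G ({x} ∪ {a})).Reachable b c →
          ∃ y' z', G.Adj a y' ∧ G.Adj a z' ∧ y' ≠ z' ∧ y' ≠ x ∧ z' ≠ x ∧
            ∃ Wq : (Aux.avoid G ({x} ∪ {a})).Walk y' z', Wq.length ≤ 2 ^ k := by
        intro a b c hax hbx hcx hab hac hbc hr
        have hr' : (Aux.avoid (Aux.avoid G {x}) {a}).Reachable b c := by
          rw [Aux.avoid_avoid]; exact hr
        have hya : (Aux.avoid G {x}).Adj a b := ⟨hab, by simpa using hax, by simpa using hbx⟩
        have hza : (Aux.avoid G {x}).Adj a c := ⟨hac, by simpa using hax, by simpa using hcx⟩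
        obtain ⟨y', z', hy', hz', hne, Wq, hWq⟩ := Aux.lemA hc2a hya hza hbc hr'
        obtain ⟨Wq', hWq'⟩ := Aux.walk_cast (Aux.avoid_avoid G {x} {a}) Wq
        refine ⟨y', z', hy'.1, hz'.1, hne, by simpa using hy'.2.2, by simpa using hz'.2.2,
          Wq', by omega⟩
      obtain ⟨u₁, v₁, hau₁, hav₁, huv₁, hux₁, hvx₁, Wq₁, hWq₁⟩ :=
        key a₁ b₁ c₁ hax₁ hbx₁ hcx₁ hab₁ hac₁ hbc₁ hrbc₁
      obtain ⟨u₂, v₂, hau₂, hav₂, huv₂, hux₂, hvx₂, Wq₂, hWq₂⟩ :=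
        key a₂ b₂ c₂ hax₂ hbx₂ hcx₂ hab₂ hac₂ hbc₂ hrbc₂
      refine Or.inr ⟨y₁, y₂, a₁, a₂, ?_⟩
      rw [Aux.snoc_one, Aux.snoc_two, Aux.snoc_three, Aux.snoc_four]
      refine ⟨hadj₁, hadj₂, h12, hax₁, hax₂, ?_, ?_, ?_, ?_⟩
      · exact Aux.near_complete k 5 1 3 [0] ![x, y₁, y₂, a₁, a₂] rfl rfl
          (Aux.Xset_single _ 0) P₁ hP₁d (fun h => hadj₁.ne' h)
      · exact Aux.near_complete k 5 2 4 [0] ![x, y₁, y₂, a₁, a₂] rfl rfl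
          (Aux.Xset_single _ 0) P₂ hP₂d (fun h => hadj₂.ne' h)
      · -- cycF k 3
        refine ⟨u₁, v₁, ?_⟩
        rw [Aux.snoc_five, Aux.snoc_six]
        refine ⟨hau₁, hav₁, huv₁, hux₁, hvx₁, ?_⟩
        refine Aux.near_complete k 7 5 6 [0, 3] ![x, y₁, y₂, a₁, a₂, u₁, v₁] rfl rfl
          ?_ Wq₁ hWq₁ ?_
        · rw [Aux.Xset_pair]
          rw [Set.singleton_union]
          rfl
        · simp only [Set.mem_union, Set.mem_singleton_iff]
          push_neg
          exact ⟨hux₁, hau₁.ne'⟩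
      · -- cycF k 4
        refine ⟨u₂, v₂, ?_⟩
        rw [Aux.snoc_five, Aux.snoc_six]
        refine ⟨hau₂, hav₂, huv₂, hux₂, hvx₂, ?_⟩
        refine Aux.near_complete k 7 5 6 [0, 4] ![x, y₁, y₂, a₁, a₂, u₂, v₂] rfl rfl
          ?_ Wq₂ hWq₂ ?_
        · rw [Aux.Xset_pair]
          rw [Set.singleton_union]
          rfl
        · simp only [Set.mem_union, Set.mem_singleton_iff]
          push_neg
          exact ⟨hux₂, hau₂.ne'⟩
  · -- φ fails at x'
    intro h
    rcases h with h | h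
    · -- ψ' would put x' on a cycle
      obtain ⟨y, z, h⟩ := h
      rw [Aux.snoc_one, Aux.snoc_two] at h
      obtain ⟨h1, h2, h3, h4⟩ := h
      have hxy : G'.Adj x' y := h1
      have hxz : G'.Adj x' z := h2
      have hyz : y ≠ z := h3
      have hreach := Aux.near_sound k 3 1 2 [0] ![x', y, z] h4
        (by rw [Aux.Xset_single]; exact fun hm => hxy.ne' hm)
        (by rw [Aux.Xset_single]; exact fun hm => hxz.ne' hm)
      rw [Aux.Xset_single] at hreach
      exact hx' (Aux.sound_cycle hxy hxz hyz hreach)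
    · -- ψ would put x' between two cycles
      obtain ⟨y₁', y₂', a₁, a₂, h⟩ := h
      rw [Aux.snoc_one, Aux.snoc_two, Aux.snoc_three, Aux.snoc_four] at h
      obtain ⟨h1, h2, h3, h4, h5, h6, h7, h8, h9⟩ := h
      have hxy1 : G'.Adj x' y₁' := h1
      have hxy2 : G'.Adj x' y₂' := h2
      have h12' : y₁' ≠ y₂' := h3
      have ha1x : a₁ ≠ x' := h4
      have ha2x : a₂ ≠ x' := h5
      have hr1 := Aux.near_sound k 5 1 3 [0] ![x', y₁', y₂', a₁, a₂] h6
        (by rw [Aux.Xset_single]; exact fun hm => hxy1.ne' hm)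
        (by rw [Aux.Xset_single]; exact fun hm => ha1x hm)
      rw [Aux.Xset_single] at hr1
      have hr2 := Aux.near_sound k 5 2 4 [0] ![x', y₁', y₂', a₁, a₂] h7
        (by rw [Aux.Xset_single]; exact fun hm => hxy2.ne' hm)
        (by rw [Aux.Xset_single]; exact fun hm => ha2x hm)
      rw [Aux.Xset_single] at hr2
      -- extract the first cycle
      obtain ⟨b, c, hh⟩ := h8
      rw [Aux.snoc_five, Aux.snoc_six] at hh
      obtain ⟨hh1, hh2, hh3, hh4, hh5, hh6⟩ := hh
      have hab : G'.Adj a₁ b := hh1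
      have hac : G'.Adj a₁ c := hh2
      have hbc : b ≠ c := hh3
      have hbx : b ≠ x' := hh4
      have hcx : c ≠ x' := hh5
      have hrbc := Aux.near_sound k 7 5 6 [0, 3] ![x', y₁', y₂', a₁, a₂, b, c] hh6
        (by rw [Aux.Xset_pair]
            simp only [Set.mem_insert_iff, Set.mem_singleton_iff]
            push_neg
            exact ⟨hbx, hab.ne'⟩)
        (by rw [Aux.Xset_pair]
            simp only [Set.mem_insert_iff, Set.mem_singleton_iff]
            push_neg
            exact ⟨hcx, hac.ne'⟩)
      rw [Aux.Xset_pair] at hrbc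
      have hc₁ : ∃ b c, b ≠ c ∧ b ≠ x' ∧ c ≠ x' ∧ a₁ ≠ x' ∧ G'.Adj a₁ b ∧ G'.Adj a₁ c ∧
          (Aux.avoid G' ({x'} ∪ {a₁})).Reachable b c :=
        ⟨b, c, hbc, hbx, hcx, ha1x, hab, hac, by rw [Set.singleton_union]; exact hrbc⟩
      -- extract the second cycle
      obtain ⟨b', c', hh'⟩ := h9
      rw [Aux.snoc_five, Aux.snoc_six] at hh'
      obtain ⟨hk1, hk2, hk3, hk4, hk5, hk6⟩ := hh'
      have hab' : G'.Adj a₂ b' := hk1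
      have hac' : G'.Adj a₂ c' := hk2
      have hbc' : b' ≠ c' := hk3
      have hbx' : b' ≠ x' := hk4
      have hcx' : c' ≠ x' := hk5
      have hrbc' := Aux.near_sound k 7 5 6 [0, 4] ![x', y₁', y₂', a₁, a₂, b', c'] hk6
        (by rw [Aux.Xset_pair]
            simp only [Set.mem_insert_iff, Set.mem_singleton_iff]
            push_neg
            exact ⟨hbx', hab'.ne'⟩)
        (by rw [Aux.Xset_pair]
            simp only [Set.mem_insert_iff, Set.mem_singleton_iff]
            push_neg
            exact ⟨hcx', hac'.ne'⟩)
      rw [Aux.Xset_pair] at hrbc'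
      have hc₂ : ∃ b c, b ≠ c ∧ b ≠ x' ∧ c ≠ x' ∧ a₂ ≠ x' ∧ G'.Adj a₂ b ∧ G'.Adj a₂ c ∧
          (Aux.avoid G' ({x'} ∪ {a₂})).Reachable b c :=
        ⟨b', c', hbc', hbx', hcx', ha2x, hab', hac', by rw [Set.singleton_union]; exact hrbc'⟩
      exact hx' (Aux.sound_psi hxy1 hxy2 h12' hr1 hr2 hc₁ hc₂)
end

section
/- Let 1 ≤ k ≤ ln⁴ n, let s ≥ 4 be an integer, and let i_1, …, i_ℓ be ℓ distinct roots among {1,…,k}. Then the probability that in the uniformly random forest F(n,k) each of the roots i_1, …, i_ℓ has degree at least s is at most (2/(s−1)!)^ℓ. -/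
namespace FODef

/-- `F` belongs to `F_{n,k}`: it is a forest on `{0, …, n-1}` consisting of `k` trees
rooted at the first `k` vertices, i.e. it is acyclic and each component contains exactly
one of the first `k` vertices (equivalently, every vertex is connected to exactly one
root). -/
def IsRootedForest (n k : ℕ) (F : SimpleGraph (Fin n)) : Prop :=
  F.IsAcyclic ∧ ∀ v : Fin n, ∃! r : Fin n, r.val < k ∧ F.Reachable v r

open Classical in
/-- The probability of the event `E` for a forest chosen uniformly at random
from `F_{n,k}`. -/
noncomputable def rfProb (n k : ℕ) (E : Set (SimpleGraph (Fin n))) : ℝ :=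
  ((Finset.univ.filter
      (fun F : SimpleGraph (Fin n) => IsRootedForest n k F ∧ F ∈ E)).card : ℝ) /
  ((Finset.univ.filter (fun F : SimpleGraph (Fin n) => IsRootedForest n k F)).card : ℝ)

open Classical in
/-- The expectation of `X` for a forest chosen uniformly at random from `F_{n,k}`. -/
noncomputable def rfExp (n k : ℕ) (X : SimpleGraph (Fin n) → ℝ) : ℝ :=
  (∑ F ∈ Finset.univ.filter (fun F : SimpleGraph (Fin n) => IsRootedForest n k F), X F) /
  ((Finset.univ.filter (fun F : SimpleGraph (Fin n) => IsRootedForest n k F)).card : ℝ)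

end FODef

open Finset Function SimpleGraph

namespace FOProof

open scoped Classical

variable {n : ℕ}

/-! ### Generic orbit lemmas -/

lemma iterate_agree {α : Type*} {f g : α → α} {P : α → Prop}
    (hfg : ∀ v, ¬ P v → f v = g v) (v : α) :
    ∀ m, (∀ i, i < m → ¬ P (g^[i] v)) → f^[m] v = g^[m] v := by
  intro m
  induction m with
  | zero => intro _; rfl
  | succ m ih =>
    intro h
    rw [Function.iterate_succ_apply', Function.iterate_succ_apply',
      ih (fun i hi => h i (by omega)), hfg _ (h m (by omega))]

lemma exists_min_entry {α : Type*} {g : α → α} {P : α → Prop} {v : α}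
    (h : ∃ m, P (g^[m] v)) : ∃ m, P (g^[m] v) ∧ ∀ i, i < m → ¬ P (g^[i] v) :=
  ⟨Nat.find h, Nat.find_spec h, fun i hi => Nat.find_min h hi⟩

lemma trap {α : Type*} {g : α → α} {S : Set α} (hcl : ∀ x ∈ S, g x ∈ S) {x : α}
    (hx : x ∈ S) : ∀ j, g^[j] x ∈ S := by
  intro j
  induction j with
  | zero => exact hx
  | succ j ih => rw [Function.iterate_succ_apply']; exact hcl _ ih

/-- periodic point -/
def Per (g : Fin n → Fin n) (v : Fin n) : Prop := ∃ p, 0 < p ∧ g^[p] v = v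

lemma per_apply {g : Fin n → Fin n} {v} (h : Per g v) : Per g (g v) := by
  obtain ⟨p, hp, hpv⟩ := h
  refine ⟨p, hp, ?_⟩
  rw [← Function.iterate_succ_apply, Function.iterate_succ_apply', hpv]

lemma per_pre {g : Fin n → Fin n} {v} (h : Per g v) : ∃ w, Per g w ∧ g w = v := by
  obtain ⟨p, hp, hpv⟩ := h
  refine ⟨g^[p-1] v, ⟨p, hp, ?_⟩, ?_⟩
  · rw [← Function.iterate_add_apply, show p + (p-1) = (p-1) + p by omega,
      Function.iterate_add_apply, hpv]
  · have h1 := Function.iterate_succ_apply' g (p-1) v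
    rw [show (p - 1).succ = p by omega] at h1
    rw [← h1, hpv]

lemma per_injOn {g : Fin n → Fin n} {a b} (ha : Per g a) (hb : Per g b) (h : g a = g b) :
    a = b := by
  obtain ⟨p, hp, hpa⟩ := ha
  obtain ⟨q, hq, hqb⟩ := hb
  have h1 : g^[p*q] a = a := by
    rw [Function.iterate_mul]; exact Function.iterate_fixed hpa q
  have h2 : g^[q*p] b = b := by
    rw [Function.iterate_mul]; exact Function.iterate_fixed hqb p
  have hpq : 0 < p * q := Nat.mul_pos hp hq
  have hpq0 : 0 < p*q := Nat.mul_pos hp hq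
  have hqp0 : 0 < q*p := Nat.mul_pos hq hp
  have hk1 : p*q = (p*q - 1) + 1 := by omega
  have hk2 : q*p = (q*p - 1) + 1 := by omega
  have e1 : g^[p*q] a = g^[p*q - 1] (g a) := by
    conv_lhs => rw [hk1, Function.iterate_succ_apply]
  have e2 : g^[q*p] b = g^[q*p - 1] (g b) := by
    conv_lhs => rw [hk2, Function.iterate_succ_apply]
  calc a = g^[p*q] a := h1.symm
    _ = g^[p*q - 1] (g a) := e1
    _ = g^[q*p - 1] (g b) := by rw [h, Nat.mul_comm p q]
    _ = g^[q*p] b := e2.symm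
    _ = b := h2

lemma exists_iterate_per (g : Fin n → Fin n) (v : Fin n) : ∃ m, Per g (g^[m] v) := by
  obtain ⟨a, b, hab, h⟩ := Fintype.exists_ne_map_eq_of_card_lt
    (fun i : Fin (n+1) => g^[i.val] v) (by simp)
  rcases Nat.lt_or_ge a.val b.val with hlt | hge
  · refine ⟨a.val, b.val - a.val, by omega, ?_⟩
    rw [← Function.iterate_add_apply, show b.val - a.val + a.val = b.val by omega]
    exact h.symm
  · have hlt : b.val < a.val := by
      rcases Nat.lt_or_ge b.val a.val with h' | h'
      · exact h'
      · exact absurd (Fin.ext (by omega)) hab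
    refine ⟨b.val, a.val - b.val, by omega, ?_⟩
    rw [← Function.iterate_add_apply, show a.val - b.val + b.val = a.val by omega]
    exact h

/-! ### The functional model of rooted forests -/

/-- Functions that fix `R` and whose every orbit reaches `R`:
these encode forests rooted at `R` via `v ↦ parent of v`. -/
noncomputable def PF (R : Finset (Fin n)) : Finset (Fin n → Fin n) :=
  univ.filter (fun f => (∀ v ∈ R, f v = v) ∧ ∀ v, ∃ m, f^[m] v ∈ R)

lemma mem_PF {R : Finset (Fin n)} {f} :
    f ∈ PF R ↔ (∀ v ∈ R, f v = v) ∧ ∀ v, ∃ m, f^[m] v ∈ R := by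
  simp [PF]

/-- Functions fixing `R` (arbitrary elsewhere). -/
noncomputable def GA (R : Finset (Fin n)) : Finset (Fin n → Fin n) :=
  univ.filter (fun f => ∀ v ∈ R, f v = v)

lemma card_GA (R : Finset (Fin n)) : (GA R).card = n ^ (Rᶜ.card) := by
  have h : (GA R).card = (univ : Finset (↥(Rᶜ : Finset (Fin n)) → Fin n)).card := by
    apply Finset.card_nbij' (i := fun f v => f v.1)
      (j := fun h v => if hv : v ∈ (Rᶜ : Finset (Fin n)) then h ⟨v, hv⟩ else v)
    · intro f _; exact mem_univ _
    · intro h _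
      simp only [GA, Finset.mem_coe, mem_filter, mem_univ, true_and]
      intro v hv
      rw [dif_neg (by simp [hv])]
    · intro f hf
      funext v
      by_cases hv : v ∈ (Rᶜ : Finset (Fin n))
      · simp [hv]
      · simp only [dif_neg hv]
        have hvR : v ∈ R := by simpa using hv
        exact ((mem_filter.mp hf).2 v hvR).symm
    · intro h _
      funext v
      simp
  rw [h, Finset.card_univ, Fintype.card_fun, Fintype.card_coe, Fintype.card_fin]

/-- Permutations supported on `W`, as functions. -/
noncomputable def PS (W : Finset (Fin n)) : Finset (Fin n → Fin n) :=
  univ.filter (fun σ => (∀ v, v ∉ W → σ v = v) ∧ Set.BijOn σ ↑W ↑W)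

lemma card_PS (W : Finset (Fin n)) : (PS W).card = Nat.factorial W.card := by
  have h : (univ : Finset (Equiv.Perm ↥(W : Finset (Fin n)))).card = (PS W).card := by
    apply Finset.card_nbij (i := fun e v => if hv : v ∈ W then (e ⟨v, hv⟩ : Fin n) else v)
    · intro e _
      simp only [PS, Finset.mem_coe, mem_filter, mem_univ, true_and]
      constructor
      · intro v hv; rw [dif_neg hv]
      · refine ⟨?_, ?_, ?_⟩
        · intro v hv
          have hv' : v ∈ W := hv
          simp only [dif_pos hv']
          exact (e ⟨v, hv'⟩).2
        · intro a ha b hb hab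
          have ha' : a ∈ W := ha
          have hb' : b ∈ W := hb
          simp only [dif_pos ha', dif_pos hb'] at hab
          exact congrArg Subtype.val (e.injective (Subtype.ext hab))
        · intro y hy
          have hy' : y ∈ W := hy
          refine ⟨(e.symm ⟨y, hy'⟩).1, Finset.mem_coe.mpr (e.symm ⟨y, hy'⟩).2, ?_⟩
          simp only [dif_pos (e.symm ⟨y, hy'⟩).2]
          rw [show (⟨(e.symm ⟨y, hy'⟩).1, (e.symm ⟨y, hy'⟩).2⟩ : ↥W) = e.symm ⟨y, hy'⟩ from rfl,
            Equiv.apply_symm_apply]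
    · intro e1 _ e2 _ h12
      apply Equiv.ext
      intro x
      apply Subtype.ext
      have := congrFun h12 x.1
      simp only [dif_pos x.2] at this
      have h1 : (⟨x.1, x.2⟩ : ↥W) = x := rfl
      rw [h1] at this
      exact this
    · intro σ hσ
      have hσ' := (Finset.mem_coe.mp hσ)
      have hp := (mem_filter.mp hσ').2
      refine ⟨Equiv.ofBijective
        (fun x : ↥W => (⟨σ x.1, hp.2.mapsTo (Finset.mem_coe.mpr x.2)⟩ : ↥W)) ⟨?_, ?_⟩,
        Finset.mem_coe.mpr (Finset.mem_univ _), ?_⟩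
      · intro a b hab
        exact Subtype.ext (hp.2.injOn (Finset.mem_coe.mpr a.2) (Finset.mem_coe.mpr b.2)
          (congrArg Subtype.val hab))
      · intro y
        obtain ⟨x, hx, hxy⟩ := hp.2.surjOn (Finset.mem_coe.mpr y.2)
        exact ⟨⟨x, Finset.mem_coe.mp hx⟩, Subtype.ext hxy⟩
      · funext v
        by_cases hv : v ∈ W
        · simp only [dif_pos hv]
          rfl
        · simp only [dif_neg hv]
          exact (hp.1 v hv).symm
  rw [← h, Finset.card_univ, Fintype.card_perm, Fintype.card_coe]


/-! ### The fiber decomposition -/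

lemma fiberI (R W : Finset (Fin n)) (hW : W ⊆ Rᶜ) :
    ((GA R).filter (fun g => Rᶜ.filter (fun v => Per g v) = W)).card
      = Nat.factorial W.card * (PF (R ∪ W)).card := by
  rw [← card_PS W, ← Finset.card_product]
  apply Finset.card_nbij'
    (i := fun g => (fun v => if v ∈ W then g v else v, fun v => if v ∈ W then v else g v))
    (j := fun sh => fun v => if v ∈ W then sh.1 v else sh.2 v)
  · -- forward membership
    rintro g hg
    rw [Finset.mem_coe, mem_filter] at hg
    obtain ⟨hgGA, hkey⟩ := hg
    have hfix : ∀ v ∈ R, g v = v := (mem_filter.mp hgGA).2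
    have hper : ∀ v, v ∈ W ↔ (v ∈ Rᶜ ∧ Per g v) := by
      intro v
      rw [← hkey, mem_filter]
    rw [Finset.mem_coe, Finset.mem_product]
    dsimp only
    constructor
    · -- the permutation part
      simp only [PS, mem_filter, mem_univ, true_and]
      refine ⟨fun v hv => if_neg hv, ?_, ?_, ?_⟩
      · -- maps to
        intro v hv
        have hv' : v ∈ W := hv
        have hvper := (hper v).mp hv'
        simp only [Finset.mem_coe, if_pos hv']
        rw [hper]
        refine ⟨?_, per_apply hvper.2⟩
        by_contra hgvR
        have hgvR' : g v ∈ R := by simpa using hgvR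
        have hfixgv : g (g v) = g v := hfix _ hgvR'
        obtain ⟨p, hp, hpv⟩ := hvper.2
        have : g^[p] v = g v := by
          conv_lhs => rw [show p = (p-1) + 1 by omega, Function.iterate_add_apply]
          exact Function.iterate_fixed hfixgv (p-1)
        have : v ∈ R := by rw [← hpv, this]; exact hgvR'
        exact (Finset.mem_compl.mp (hvper.1)) this
      · -- inj on
        intro a ha b hb hab
        have ha' : a ∈ W := ha
        have hb' : b ∈ W := hb
        simp only [if_pos ha', if_pos hb'] at hab
        exact per_injOn ((hper a).mp ha').2 ((hper b).mp hb').2 hab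
      · -- surj on
        intro v hv
        have hv' : v ∈ W := hv
        obtain ⟨w, hwper, hwv⟩ := per_pre ((hper v).mp hv').2
        have hwW : w ∈ W := by
          rw [hper]
          refine ⟨?_, hwper⟩
          by_contra hwR
          have hwR' : w ∈ R := by simpa using hwR
          have : v ∈ R := by rw [← hwv, hfix _ hwR']; exact hwR'
          exact (Finset.mem_compl.mp ((hper v).mp hv').1) this
        exact ⟨w, Finset.mem_coe.mpr hwW, by simp only [if_pos hwW]; exact hwv⟩
    · -- the PF part
      rw [mem_PF]
      constructor
      · intro v hv
        rcases Finset.mem_union.mp hv with hvR | hvW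
        · by_cases hvW : v ∈ W
          · rw [if_pos hvW]
          · rw [if_neg hvW]; exact hfix _ hvR
        · rw [if_pos hvW]
      · intro v
        have hesc : ∃ m, g^[m] v ∈ R ∪ W := by
          obtain ⟨m, hm⟩ := exists_iterate_per g v
          by_cases hR : g^[m] v ∈ R
          · exact ⟨m, Finset.mem_union_left _ hR⟩
          · refine ⟨m, Finset.mem_union_right _ ?_⟩
            rw [hper]
            exact ⟨Finset.mem_compl.mpr hR, hm⟩
        obtain ⟨m, hm, hmin⟩ := exists_min_entry (P := fun x => x ∈ R ∪ W) hesc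
        refine ⟨m, ?_⟩
        have hagree : (fun v => if v ∈ W then v else g v)^[m] v = g^[m] v := by
          apply iterate_agree (P := fun x => x ∈ R ∪ W)
          · intro x hx
            rw [if_neg (fun hxW => hx (Finset.mem_union_right _ hxW))]
          · exact hmin
        rw [hagree]
        exact hm
  · -- backward membership
    rintro ⟨σ, h⟩ hsh
    rw [Finset.mem_coe, Finset.mem_product] at hsh
    obtain ⟨hσ, hh⟩ := hsh
    have hσp := (mem_filter.mp hσ).2
    have hhp := mem_PF.mp hh
    have hdisjRW : ∀ v ∈ W, v ∉ R := fun v hv => Finset.mem_compl.mp (hW hv)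
    set g := fun v => if v ∈ W then σ v else h v with hgdef
    have hgW : ∀ v ∈ W, g v ∈ W := by
      intro v hv
      simp only [hgdef, if_pos hv]
      exact Finset.mem_coe.mp (hσp.2.mapsTo (Finset.mem_coe.mpr hv))
    have hgR : ∀ v ∈ R, g v = v := by
      intro v hv
      simp only [hgdef, if_neg (fun hvW => hdisjRW v hvW hv)]
      exact hhp.1 v (Finset.mem_union_left _ hv)
    have hgtrap : ∀ x ∈ (↑(R ∪ W) : Set (Fin n)), g x ∈ (↑(R ∪ W) : Set (Fin n)) := by
      intro x hx
      rcases Finset.mem_union.mp (Finset.mem_coe.mp hx) with hxR | hxW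
      · rw [hgR x hxR]; exact hx
      · exact Finset.mem_coe.mpr (Finset.mem_union_right _ (hgW x hxW))
    have hstayW : ∀ v ∈ W, ∀ j, g^[j] v ∈ W := by
      intro v hv j
      exact Finset.mem_coe.mp (trap (S := (↑W : Set (Fin n)))
        (fun x hx => Finset.mem_coe.mpr (hgW x (Finset.mem_coe.mp hx))) (Finset.mem_coe.mpr hv) j)
    have hgσ : ∀ v ∈ W, ∀ j, g^[j] v = σ^[j] v := by
      intro v hv j
      induction j with
      | zero => rfl
      | succ j ih =>
        rw [Function.iterate_succ_apply', Function.iterate_succ_apply', ih]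
        have : σ^[j] v ∈ W := by rw [← ih]; exact hstayW v hv j
        simp only [hgdef, if_pos this]
    have hσstayW : ∀ v ∈ W, ∀ j, σ^[j] v ∈ W := by
      intro v hv j
      rw [← hgσ v hv j]
      exact hstayW v hv j
    have hσcancel : ∀ j (a b : Fin n), a ∈ W → b ∈ W → σ^[j] a = σ^[j] b → a = b := by
      intro j
      induction j with
      | zero => intro a b _ _ h'; exact h'
      | succ j ih =>
        intro a b ha hb h'
        rw [Function.iterate_succ_apply', Function.iterate_succ_apply'] at h'
        have := hσp.2.injOn (Finset.mem_coe.mpr (hσstayW a ha j))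
          (Finset.mem_coe.mpr (hσstayW b hb j)) h'
        exact ih a b ha hb this
    have hWper : ∀ v ∈ W, Per g v := by
      intro v hv
      obtain ⟨a, b, hab, h'⟩ := Fintype.exists_ne_map_eq_of_card_lt
        (fun i : Fin (n+1) => σ^[i.val] v) (by simp)
      have key : ∀ (i j : ℕ), i < j → σ^[i] v = σ^[j] v → Per g v := by
        intro i j hij hsij
        have : σ^[i] v = σ^[i] (σ^[j-i] v) := by
          rw [← Function.iterate_add_apply, show i + (j-i) = j by omega]
          exact hsij
        have hji : σ^[j-i] v = v :=
          (hσcancel i (σ^[j-i] v) v (hσstayW v hv _) hv this.symm)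
        exact ⟨j-i, by omega, by rw [hgσ v hv]; exact hji⟩
      rcases Nat.lt_or_ge a.val b.val with hlt | hge
      · exact key a.val b.val hlt h'
      · have hlt : b.val < a.val := by
          rcases Nat.lt_or_ge b.val a.val with h'' | h''
          · exact h''
          · exact absurd (Fin.ext (by omega)) hab
        exact key b.val a.val hlt h'.symm
    rw [Finset.mem_coe, mem_filter]
    refine ⟨?_, ?_⟩
    · simp only [GA, mem_filter, mem_univ, true_and]
      exact hgR
    · -- key g = W
      ext v
      rw [mem_filter]
      constructor
      · rintro ⟨hvc, hvper⟩
        by_contra hvW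
        -- g-orbit from v eventually enters R ∪ W and is trapped; periodicity forces v ∈ R ∪ W
        have hesc : ∃ m, g^[m] v ∈ R ∪ W := by
          obtain ⟨m, hm⟩ := hhp.2 v
          obtain ⟨m₀, hm₀, hmin⟩ := exists_min_entry (P := fun x => x ∈ R ∪ W) ⟨m, hm⟩
          refine ⟨m₀, ?_⟩
          have hagree : g^[m₀] v = h^[m₀] v := by
            apply iterate_agree (f := g) (g := h) (P := fun x => x ∈ R ∪ W)
            · intro x hx
              simp only [hgdef, if_neg (fun hxW => hx (Finset.mem_union_right _ hxW))]
            · exact hmin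
          rw [hagree]
          exact hm₀
        obtain ⟨m₀, hm₀⟩ := hesc
        obtain ⟨p, hp, hpv⟩ := hvper
        have hbig : g^[p * (m₀ + 1)] v = v := by
          rw [Function.iterate_mul]
          exact Function.iterate_fixed hpv (m₀+1)
        have hm₀le : m₀ ≤ p * (m₀ + 1) := by nlinarith
        have : g^[p * (m₀+1)] v ∈ (↑(R ∪ W) : Set (Fin n)) := by
          rw [show p * (m₀+1) = (p*(m₀+1) - m₀) + m₀ by omega, Function.iterate_add_apply]
          exact trap hgtrap (Finset.mem_coe.mpr hm₀) _
        rw [hbig] at this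
        rcases Finset.mem_union.mp (Finset.mem_coe.mp this) with hvR | hvW'
        · exact (Finset.mem_compl.mp hvc) hvR
        · exact hvW hvW'
      · intro hvW
        exact ⟨hW hvW, hWper v hvW⟩
  · -- left inverse
    intro g hg
    rw [Finset.mem_coe, mem_filter] at hg
    have hkey := hg.2
    funext v
    dsimp only
    by_cases hv : v ∈ W
    · simp only [if_pos hv]
    · simp only [if_pos hv, if_neg hv]
  · -- right inverse
    rintro ⟨σ, h⟩ hsh
    rw [Finset.mem_coe, Finset.mem_product] at hsh
    obtain ⟨hσ, hh⟩ := hsh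
    have hσp := (mem_filter.mp hσ).2
    have hhp := mem_PF.mp hh
    have e1 : (fun v => if v ∈ W then (if v ∈ W then σ v else h v) else v) = σ := by
      funext v
      by_cases hv : v ∈ W
      · simp only [if_pos hv]
      · simp only [if_neg hv]
        exact (hσp.1 v hv).symm
    have e2 : (fun v => if v ∈ W then v else (if v ∈ W then σ v else h v)) = h := by
      funext v
      by_cases hv : v ∈ W
      · simp only [if_pos hv]
        exact (hhp.1 v (Finset.mem_union_right _ hv)).symm
      · simp only [if_neg hv]
    rw [Prod.mk.injEq]
    exact ⟨e1, e2⟩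

lemma identI (R : Finset (Fin n)) :
    ∑ W ∈ Rᶜ.powerset, Nat.factorial W.card * (PF (R ∪ W)).card = n ^ (Rᶜ.card) := by
  rw [← card_GA]
  rw [Finset.card_eq_sum_card_fiberwise
    (f := fun g => Rᶜ.filter (fun v => Per g v)) (t := Rᶜ.powerset)
    (fun g _ => Finset.mem_powerset.mpr (Finset.filter_subset _ _))]
  exact Finset.sum_congr rfl fun W hW => (fiberI R W (Finset.mem_powerset.mp hW)).symm


/-! ### The master count -/

lemma ARI (c : ℕ) : ∀ k : ℕ,
    ∑ w ∈ Finset.range (c+1),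
      (c.choose w) * (Nat.factorial w * ((k+w) * (k+c)^(c-w))) = (k+c)^(c+1) := by
  induction c with
  | zero => intro k; simp
  | succ c ih =>
    intro k
    rw [Finset.sum_range_succ']
    have h0 : (c+1).choose 0 * (Nat.factorial 0 * ((k+0) * (k+(c+1))^(c+1-0)))
        = k * (k+(c+1))^(c+1) := by simp
    have hterm : ∀ i, i ∈ Finset.range (c+1) →
        (c+1).choose (i+1) * (Nat.factorial (i+1) * ((k+(i+1)) * (k+(c+1))^(c+1-(i+1))))
        = (c+1) * (c.choose i * (Nat.factorial i * (((k+1)+i) * ((k+1)+c)^(c-i)))) := by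
      intro i _
      have key : (c+1).choose (i+1) * Nat.factorial (i+1)
          = (c+1) * (c.choose i * Nat.factorial i) := by
        rw [Nat.factorial_succ]
        have h1 : (c+1).choose (i+1) * ((i+1) * Nat.factorial i)
            = ((c+1).choose (i+1) * (i+1)) * Nat.factorial i := by ring
        rw [h1, ← Nat.add_one_mul_choose_eq]
        ring
      have harg : k + (i+1) = (k+1) + i := by ring
      have harg2 : k + (c+1) = (k+1) + c := by ring
      have harg3 : c+1-(i+1) = c - i := by omega
      calc (c+1).choose (i+1) * (Nat.factorial (i+1) * ((k+(i+1)) * (k+(c+1))^(c+1-(i+1))))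
          = ((c+1).choose (i+1) * Nat.factorial (i+1)) * ((k+(i+1)) * (k+(c+1))^(c+1-(i+1))) := by
            ring
        _ = ((c+1) * (c.choose i * Nat.factorial i)) * (((k+1)+i) * ((k+1)+c)^(c-i)) := by
            rw [key, harg, harg2, harg3]
        _ = (c+1) * (c.choose i * (Nat.factorial i * (((k+1)+i) * ((k+1)+c)^(c-i)))) := by ring
    rw [Finset.sum_congr rfl hterm, ← Finset.mul_sum, ih (k+1), h0]
    have : (k+1) + c = k + (c+1) := by ring
    rw [this]
    ring

lemma main_count : ∀ (R : Finset (Fin n)), n * (PF R).card = R.card * n ^ (Rᶜ.card) := by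
  suffices H : ∀ m (R : Finset (Fin n)), Rᶜ.card ≤ m → n * (PF R).card = R.card * n ^ (Rᶜ.card) by
    intro R
    exact H (Rᶜ.card) R le_rfl
  intro m
  induction m with
  | zero =>
    intro R hle
    have hc : Rᶜ = ∅ := Finset.card_eq_zero.mp (by omega)
    have hR : R = univ := by
      rwa [← Finset.compl_eq_empty_iff]
    subst hR
    have h1 : (PF (univ : Finset (Fin n))) = {id} := by
      ext f
      rw [mem_PF, Finset.mem_singleton]
      constructor
      · rintro ⟨h1, _⟩
        funext v
        exact h1 v (mem_univ v)
      · rintro rfl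
        exact ⟨fun v _ => rfl, fun v => ⟨0, mem_univ v⟩⟩
    rw [h1, hc]
    simp
  | succ m ih =>
    intro R hle
    rcases Nat.lt_or_ge (Rᶜ.card) (m+1) with hlt | hge
    · exact ih R (by omega)
    have hm : Rᶜ.card = m + 1 := by omega
    have hI := identI R
    -- multiply by n
    have h2 : ∑ W ∈ Rᶜ.powerset, Nat.factorial W.card * (n * (PF (R ∪ W)).card)
        = n ^ (Rᶜ.card + 1) := by
      have : ∑ W ∈ Rᶜ.powerset, Nat.factorial W.card * (n * (PF (R ∪ W)).card)
          = n * ∑ W ∈ Rᶜ.powerset, Nat.factorial W.card * (PF (R ∪ W)).card := by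
        rw [Finset.mul_sum]
        exact Finset.sum_congr rfl fun W _ => by ring
      rw [this, hI, pow_succ]
      ring
    -- rewrite non-empty terms using the induction hypothesis
    have h3 : ∀ W ∈ Rᶜ.powerset.erase ∅,
        Nat.factorial W.card * (n * (PF (R ∪ W)).card)
        = Nat.factorial W.card * ((R.card + W.card) * n ^ (Rᶜ.card - W.card)) := by
      intro W hW
      have hWne : W ≠ ∅ := Finset.ne_of_mem_erase hW
      have hWsub : W ⊆ Rᶜ := Finset.mem_powerset.mp (Finset.mem_of_mem_erase hW)
      have hWpos : 0 < W.card := Finset.card_pos.mpr (Finset.nonempty_of_ne_empty hWne)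
      have hdisj : Disjoint R W := by
        rw [Finset.disjoint_left]
        intro a haR haW
        exact (Finset.mem_compl.mp (hWsub haW)) haR
      have hcompl : (R ∪ W)ᶜ = Rᶜ \ W := by
        rw [Finset.compl_union, Finset.sdiff_eq_inter_compl]
      have hcc : (R ∪ W)ᶜ.card = Rᶜ.card - W.card := by
        rw [hcompl, Finset.card_sdiff_of_subset hWsub]
      have hccle : (R ∪ W)ᶜ.card ≤ m := by omega
      rw [ih _ hccle, Finset.card_union_of_disjoint hdisj, hcc]
    -- split off the empty set
    have hsplit := Finset.add_sum_erase (Rᶜ.powerset)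
      (fun W => Nat.factorial W.card * (n * (PF (R ∪ W)).card))
      (Finset.empty_mem_powerset Rᶜ)
    have hsplit2 := Finset.add_sum_erase (Rᶜ.powerset)
      (fun W => Nat.factorial W.card * ((R.card + W.card) * n ^ (Rᶜ.card - W.card)))
      (Finset.empty_mem_powerset Rᶜ)
    -- evaluate the full second sum via ARI
    have hARI : ∑ W ∈ Rᶜ.powerset,
        Nat.factorial W.card * ((R.card + W.card) * n ^ (Rᶜ.card - W.card))
        = n ^ (Rᶜ.card + 1) := by
      have hs := Finset.sum_powerset_apply_card
        (f := fun w => Nat.factorial w * ((R.card + w) * n ^ (Rᶜ.card - w))) (x := Rᶜ)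
      rw [hs]
      have hkc : R.card + Rᶜ.card = n := by
        rw [Finset.card_add_card_compl]
        exact Fintype.card_fin n
      have := ARI (Rᶜ.card) (R.card)
      rw [hkc] at this
      rw [← this]
      exact Finset.sum_congr rfl fun w _ => by rw [smul_eq_mul]
    -- combine
    rw [Finset.sum_congr rfl h3] at hsplit
    simp only [Finset.card_empty, Finset.union_empty, Nat.factorial_zero, one_mul,
      Nat.sub_zero, Nat.add_zero] at hsplit hsplit2
    rw [h2] at hsplit
    rw [hARI] at hsplit2
    omega

/-! ### Pinning -/

lemma card_pinned (R S : Finset (Fin n)) (hdisj : ∀ v ∈ S, v ∉ R)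
    (τ : Fin n → Fin n) (hτ : ∀ v ∈ S, τ v ∈ R) :
    (univ.filter (fun f => f ∈ PF R ∧ ∀ v ∈ S, f v = τ v)).card = (PF (R ∪ S)).card := by
  apply Finset.card_nbij'
    (i := fun f => fun v => if v ∈ S then v else f v)
    (j := fun g => fun v => if v ∈ S then τ v else g v)
  · intro f hf
    obtain ⟨hfPF, hfpin⟩ := (mem_filter.mp hf).2
    have hfp := mem_PF.mp hfPF
    rw [Finset.mem_coe, mem_PF]
    dsimp only
    constructor
    · intro v hv
      rcases Finset.mem_union.mp hv with hvR | hvS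
      · rw [if_neg (fun hvS => hdisj v hvS hvR)]
        exact hfp.1 v hvR
      · rw [if_pos hvS]
    · intro v
      obtain ⟨m, hm⟩ := hfp.2 v
      obtain ⟨m₀, hm₀, hmin⟩ := exists_min_entry (P := fun x => x ∈ R ∪ S)
        ⟨m, Finset.mem_union_left _ hm⟩
      refine ⟨m₀, ?_⟩
      have hagree : (fun v => if v ∈ S then v else f v)^[m₀] v = f^[m₀] v := by
        apply iterate_agree (P := fun x => x ∈ R ∪ S)
        · intro x hx
          rw [if_neg (fun hxS => hx (Finset.mem_union_right _ hxS))]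
        · exact hmin
      rw [hagree]
      exact hm₀
  · intro g hg
    have hgp := mem_PF.mp hg
    rw [Finset.mem_coe, mem_filter]
    dsimp only
    refine ⟨mem_univ _, ?_, ?_⟩
    · rw [mem_PF]
      constructor
      · intro v hv
        rw [if_neg (fun hvS => hdisj v hvS hv)]
        exact hgp.1 v (Finset.mem_union_left _ hv)
      · intro v
        obtain ⟨m, hm⟩ := hgp.2 v
        obtain ⟨m₀, hm₀, hmin⟩ := exists_min_entry (P := fun x => x ∈ R ∪ S) ⟨m, hm⟩
        have hagree : (fun v => if v ∈ S then τ v else g v)^[m₀] v = g^[m₀] v := by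
          apply iterate_agree (P := fun x => x ∈ R ∪ S)
          · intro x hx
            rw [if_neg (fun hxS => hx (Finset.mem_union_right _ hxS))]
          · exact hmin
        rcases Finset.mem_union.mp hm₀ with hR | hS
        · exact ⟨m₀, by rw [hagree]; exact hR⟩
        · refine ⟨m₀ + 1, ?_⟩
          rw [Function.iterate_succ_apply', hagree, if_pos hS]
          exact hτ _ hS
    · intro v hv
      simp only [if_pos hv]
  · intro f hf
    obtain ⟨hfPF, hfpin⟩ := (mem_filter.mp hf).2
    funext v
    dsimp only
    by_cases hv : v ∈ S
    · rw [if_pos hv, (hfpin v hv)]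
    · rw [if_neg hv, if_neg hv]
  · intro g hg
    have hgp := mem_PF.mp hg
    funext v
    dsimp only
    by_cases hv : v ∈ S
    · rw [if_pos hv]
      exact (hgp.1 v (Finset.mem_union_right _ hv)).symm
    · rw [if_neg hv, if_neg hv]


/-! ### Rooted forests as graphs vs parent functions -/

section Graphs

variable {k : ℕ}

def IsPFk (n k : ℕ) (f : Fin n → Fin n) : Prop :=
  (∀ v : Fin n, v.val < k → f v = v) ∧ ∀ v : Fin n, ∃ m, ((f^[m]) v).val < k

noncomputable def R0 (n k : ℕ) : Finset (Fin n) := univ.filter (fun v => v.val < k)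

lemma mem_R0 {n k : ℕ} {v : Fin n} : v ∈ R0 n k ↔ v.val < k := by simp [R0]

lemma IsPFk_iff {n k : ℕ} {f : Fin n → Fin n} : IsPFk n k f ↔ f ∈ PF (R0 n k) := by
  rw [mem_PF, IsPFk]
  simp only [mem_R0]

def toGraph (n k : ℕ) (f : Fin n → Fin n) : SimpleGraph (Fin n) :=
  SimpleGraph.fromRel (fun u v => k ≤ u.val ∧ f u = v)

lemma toGraph_adj {f : Fin n → Fin n} {u v : Fin n} :
    (toGraph n k f).Adj u v ↔ u ≠ v ∧ ((k ≤ u.val ∧ f u = v) ∨ (k ≤ v.val ∧ f v = u)) :=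
  SimpleGraph.fromRel_adj _ u v

variable {f : Fin n → Fin n}

noncomputable def htf (hf : IsPFk n k f) (v : Fin n) : ℕ := Nat.find (hf.2 v)

lemma htf_spec (hf : IsPFk n k f) (v : Fin n) : ((f^[htf hf v]) v).val < k :=
  Nat.find_spec (hf.2 v)

lemma htf_min (hf : IsPFk n k f) (v : Fin n) :
    ∀ i, i < htf hf v → ¬ ((f^[i] v).val < k) :=
  fun i hi => Nat.find_min (hf.2 v) hi

lemma htf_zero (hf : IsPFk n k f) {v : Fin n} (hv : v.val < k) : htf hf v = 0 :=
  Nat.find_eq_zero (hf.2 v) |>.mpr (by simpa using hv)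

lemma htf_pos (hf : IsPFk n k f) {v : Fin n} (hv : k ≤ v.val) : 0 < htf hf v := by
  rcases Nat.eq_zero_or_pos (htf hf v) with h0 | h
  · exfalso
    have := htf_spec hf v
    rw [h0] at this
    simp only [Function.iterate_zero_apply] at this
    omega
  · exact h

lemma f_ne_self (hf : IsPFk n k f) {v : Fin n} (hv : k ≤ v.val) : f v ≠ v := by
  intro heq
  have h1 : ∀ m, f^[m] v = v := fun m => Function.iterate_fixed heq m
  have := htf_spec hf v
  rw [h1] at this
  omega

lemma htf_step (hf : IsPFk n k f) {v : Fin n} (hv : k ≤ v.val) :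
    htf hf v = htf hf (f v) + 1 := by
  refine (Nat.find_eq_iff (hf.2 v)).mpr ⟨?_, ?_⟩
  · rw [Function.iterate_succ_apply]
    exact htf_spec hf (f v)
  · intro i hi
    match i with
    | 0 => simpa using (by omega : ¬ v.val < k)
    | (j+1) =>
      rw [Function.iterate_succ_apply]
      exact htf_min hf (f v) j (by omega)

noncomputable def orbitRoot (hf : IsPFk n k f) (v : Fin n) : Fin n := f^[htf hf v] v

lemma orbitRoot_lt (hf : IsPFk n k f) (v : Fin n) : (orbitRoot hf v).val < k :=
  htf_spec hf v

lemma orbitRoot_low (hf : IsPFk n k f) {v : Fin n} (hv : v.val < k) : orbitRoot hf v = v := by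
  rw [orbitRoot, htf_zero hf hv, Function.iterate_zero_apply]

lemma orbitRoot_step (hf : IsPFk n k f) {v : Fin n} (hv : k ≤ v.val) :
    orbitRoot hf v = orbitRoot hf (f v) := by
  rw [orbitRoot, orbitRoot, htf_step hf hv, Function.iterate_succ_apply]

lemma adj_step (hf : IsPFk n k f) {v : Fin n} (hv : k ≤ v.val) :
    (toGraph n k f).Adj v (f v) :=
  toGraph_adj.mpr ⟨(f_ne_self hf hv).symm, Or.inl ⟨hv, rfl⟩⟩

lemma orbitRoot_adj (hf : IsPFk n k f) {u w : Fin n} (h : (toGraph n k f).Adj u w) :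
    orbitRoot hf u = orbitRoot hf w := by
  rcases (toGraph_adj.mp h).2 with ⟨h1, h2⟩ | ⟨h1, h2⟩
  · rw [orbitRoot_step hf h1, h2]
  · rw [orbitRoot_step hf h1, h2]

lemma orbitRoot_reach (hf : IsPFk n k f) {u w : Fin n} (h : (toGraph n k f).Reachable u w) :
    orbitRoot hf u = orbitRoot hf w := by
  obtain ⟨p⟩ := h
  induction p with
  | nil => rfl
  | cons hadj p ih => rw [orbitRoot_adj hf hadj]; exact ih

lemma reach_orbitRoot (hf : IsPFk n k f) (v : Fin n) :
    (toGraph n k f).Reachable v (orbitRoot hf v) := by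
  have key : ∀ m (v : Fin n), htf hf v ≤ m → (toGraph n k f).Reachable v (orbitRoot hf v) := by
    intro m
    induction m with
    | zero =>
      intro v hv
      have h0 : htf hf v = 0 := by omega
      have : orbitRoot hf v = v := by rw [orbitRoot, h0, Function.iterate_zero_apply]
      rw [this]
    | succ m ih =>
      intro v hv
      by_cases hvk : v.val < k
      · rw [orbitRoot_low hf hvk]
      · have hge : k ≤ v.val := by omega
        have hstep := htf_step hf hge
        rw [orbitRoot_step hf hge]
        exact ((adj_step hf hge).reachable).trans (ih (f v) (by omega))
  exact key _ v le_rfl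

lemma toGraph_acyclic (hf : IsPFk n k f) : (toGraph n k f).IsAcyclic := by
  intro v c hc
  have hne : (c.support.toFinset : Finset (Fin n)).Nonempty :=
    ⟨v, List.mem_toFinset.mpr c.start_mem_support⟩
  obtain ⟨u, huT, hmax⟩ := Finset.exists_max_image (c.support.toFinset) (htf hf) hne
  have hu : u ∈ c.support := List.mem_toFinset.mp huT
  set c' := c.rotate u hu with hc'def
  have hcyc : c'.IsCycle := hc.rotate hu
  have hmem : ∀ w, w ∈ c'.support → w ∈ c.support := by
    intro w hw
    rcases (SimpleGraph.Walk.mem_support_iff _).mp hw with rfl | hw'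
    · exact hu
    · have := (SimpleGraph.Walk.support_rotate c u hu).mem_iff.mp hw'
      rcases (SimpleGraph.Walk.mem_support_iff c).mpr (Or.inr this) with h'
      exact h'
  have h3 := hcyc.three_le_length
  have hnn : ¬ c'.Nil := SimpleGraph.Walk.not_nil_iff_lt_length.mpr (by omega)
  obtain ⟨x, hadj1, q, hq⟩ := SimpleGraph.Walk.not_nil_iff.mp hnn
  have hqpath : q.IsPath := by
    have hnod := hcyc.support_nodup
    rw [hq, SimpleGraph.Walk.support_cons] at hnod
    exact SimpleGraph.Walk.isPath_def q |>.mpr hnod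
  have hql : 2 ≤ q.length := by
    have : c'.length = q.length + 1 := by rw [hq, SimpleGraph.Walk.length_cons]
    omega
  have hqrpath : q.reverse.IsPath := hqpath.reverse
  have hqrnn : ¬ q.reverse.Nil := SimpleGraph.Walk.not_nil_iff_lt_length.mpr
    (by rw [SimpleGraph.Walk.length_reverse]; omega)
  obtain ⟨y, hadj2, q3, hq3⟩ := SimpleGraph.Walk.not_nil_iff.mp hqrnn
  have hyx : y ≠ x := by
    intro heq
    subst heq
    rw [hq3] at hqrpath
    have h1 := (SimpleGraph.Walk.cons_isPath_iff _ _).mp hqrpath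
    cases q3 with
    | nil =>
      have : q.reverse.length = 1 := by rw [hq3]; simp
      rw [SimpleGraph.Walk.length_reverse] at this
      omega
    | cons h4 q4 =>
      have h2 := (SimpleGraph.Walk.cons_isPath_iff _ _).mp h1.1
      exact h2.2 (q4.end_mem_support)
  have hx_mem : x ∈ c.support := by
    apply hmem
    rw [hq, SimpleGraph.Walk.support_cons]
    exact List.mem_cons_of_mem _ q.start_mem_support
  have hy_mem : y ∈ c.support := by
    apply hmem
    rw [hq, SimpleGraph.Walk.support_cons]
    apply List.mem_cons_of_mem
    have : y ∈ q.reverse.support := by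
      rw [hq3, SimpleGraph.Walk.support_cons]
      exact List.mem_cons_of_mem _ q3.start_mem_support
    rw [SimpleGraph.Walk.support_reverse] at this
    exact List.mem_reverse.mp this
  have key : ∀ w, (toGraph n k f).Adj u w → w ∈ c.support → f u = w := by
    intro w hadj hwmem
    rcases (toGraph_adj.mp hadj).2 with ⟨h1, h2⟩ | ⟨h1, h2⟩
    · exact h2
    · exfalso
      have hw : htf hf w = htf hf u + 1 := by rw [htf_step hf h1, h2]
      have hle := hmax w (List.mem_toFinset.mpr hwmem)
      omega
  have k1 := key x hadj1 hx_mem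
  have k2 := key y hadj2 hy_mem
  exact hyx (by rw [← k1, ← k2])

lemma toGraph_rooted (hf : IsPFk n k f) : FODef.IsRootedForest n k (toGraph n k f) := by
  refine ⟨toGraph_acyclic hf, fun v => ⟨orbitRoot hf v, ⟨orbitRoot_lt hf v, reach_orbitRoot hf v⟩, ?_⟩⟩
  rintro r ⟨hr1, hr2⟩
  have h1 := orbitRoot_reach hf hr2
  rw [orbitRoot_low hf hr1] at h1
  exact h1.symm

lemma deg_toGraph (hf : IsPFk n k f) {i : Fin n} (hi : i.val < k) :
    FODef.deg (toGraph n k f) i = (univ.filter (fun v => k ≤ v.val ∧ f v = i)).card := by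
  have hiff : ∀ w, (toGraph n k f).Adj i w ↔ (k ≤ w.val ∧ f w = i) := by
    intro w
    rw [toGraph_adj]
    constructor
    · rintro ⟨hne, ⟨h1, h2⟩ | h⟩
      · omega
      · exact h
    · intro h
      refine ⟨fun heq => ?_, Or.inr h⟩
      rw [heq] at hi
      omega
  rw [FODef.deg, Nat.card_congr (Equiv.subtypeEquivRight hiff), Nat.card_eq_fintype_card,
    Fintype.card_subtype]

end Graphs


section Inverse

variable {k : ℕ} {F : SimpleGraph (Fin n)}

noncomputable def rootF (hF : FODef.IsRootedForest n k F) (v : Fin n) : Fin n :=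
  Classical.choose (hF.2 v)

lemma rootF_spec (hF : FODef.IsRootedForest n k F) (v : Fin n) :
    (rootF hF v).val < k ∧ F.Reachable v (rootF hF v) :=
  (Classical.choose_spec (hF.2 v)).1

lemma rootF_uniq (hF : FODef.IsRootedForest n k F) {v r : Fin n} (hr : r.val < k)
    (hrc : F.Reachable v r) : r = rootF hF v :=
  (Classical.choose_spec (hF.2 v)).2 r ⟨hr, hrc⟩

noncomputable def pathF (hF : FODef.IsRootedForest n k F) (v : Fin n) :
    F.Path v (rootF hF v) :=
  ((rootF_spec hF v).2).some.toPath

lemma path_unique (hF : FODef.IsRootedForest n k F) {v w : Fin n} (p q : F.Path v w) :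
    p = q :=
  SimpleGraph.isAcyclic_iff_path_unique.mp hF.1 p q

noncomputable def parentF (hF : FODef.IsRootedForest n k F) (v : Fin n) : Fin n :=
  (pathF hF v).1.getVert 1

noncomputable def dF (hF : FODef.IsRootedForest n k F) (v : Fin n) : ℕ :=
  (pathF hF v).1.length

lemma rootF_low (hF : FODef.IsRootedForest n k F) {v : Fin n} (hv : v.val < k) :
    rootF hF v = v :=
  (rootF_uniq hF hv (SimpleGraph.Reachable.refl v)).symm

lemma dF_pos (hF : FODef.IsRootedForest n k F) {v : Fin n} (hv : k ≤ v.val) :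
    0 < dF hF v := by
  rcases Nat.eq_zero_or_pos (dF hF v) with h0 | h
  · exfalso
    have heq := SimpleGraph.Walk.eq_of_length_eq_zero h0
    have := (rootF_spec hF v).1
    rw [← heq] at this
    omega
  · exact h

lemma parentF_adj (hF : FODef.IsRootedForest n k F) {v : Fin n} (hv : k ≤ v.val) :
    F.Adj v (parentF hF v) := by
  have h := (pathF hF v).1.adj_getVert_succ (i := 0) (dF_pos hF hv)
  rwa [SimpleGraph.Walk.getVert_zero] at h

lemma parentF_eq_of_path (hF : FODef.IsRootedForest n k F) {v : Fin n}
    (p : F.Walk v (rootF hF v)) (hp : p.IsPath) : p.getVert 1 = parentF hF v := by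
  have h : (⟨p, hp⟩ : F.Path v (rootF hF v)) = pathF hF v := path_unique hF _ _
  rw [parentF, ← h]

lemma dF_le_walk (hF : FODef.IsRootedForest n k F) {v : Fin n}
    (p : F.Walk v (rootF hF v)) : dF hF v ≤ p.length := by
  have h1 : p.toPath = pathF hF v := path_unique hF _ _
  have h2 : (p.toPath).1.length ≤ p.length := SimpleGraph.Walk.length_bypass_le p
  rw [dF, ← h1]
  exact h2

lemma rootF_reach_congr (hF : FODef.IsRootedForest n k F) {u v : Fin n}
    (h : F.Reachable u v) : rootF hF u = rootF hF v :=
  (rootF_uniq hF (rootF_spec hF v).1 (h.trans (rootF_spec hF v).2)).symm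

lemma mem_path_dlt (hF : FODef.IsRootedForest n k F) {v u : Fin n}
    (hu : u ∈ (pathF hF v).1.support) (hne : u ≠ v) : dF hF u < dF hF v := by
  set p := (pathF hF v).1 with hpdef
  have h1 : F.Reachable u (rootF hF v) := ⟨p.dropUntil u hu⟩
  have h2 : rootF hF v = rootF hF u := rootF_uniq hF (rootF_spec hF v).1 h1
  have h3 : dF hF u ≤ (p.dropUntil u hu).length := by
    have := dF_le_walk hF ((p.dropUntil u hu).copy rfl h2)
    rwa [SimpleGraph.Walk.length_copy] at this
  have h4 : (p.takeUntil u hu).length + (p.dropUntil u hu).length = p.length := by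
    have := congrArg SimpleGraph.Walk.length (p.take_spec hu)
    rwa [SimpleGraph.Walk.length_append] at this
  have h5 : (p.takeUntil u hu).length ≠ 0 :=
    fun h0 => hne (SimpleGraph.Walk.eq_of_length_eq_zero h0).symm
  have h6 : dF hF v = p.length := rfl
  omega

lemma roots_not_adj (hF : FODef.IsRootedForest n k F) {u w : Fin n} (hu : u.val < k)
    (hw : w.val < k) : ¬ F.Adj u w := by
  intro h
  have hr : F.Reachable w u := (h.symm).reachable
  have h1 := rootF_uniq hF hu hr
  have h2 := rootF_low hF hw
  exact h.ne (h1.trans h2)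

lemma edge_struct (hF : FODef.IsRootedForest n k F) {u w : Fin n} (h : F.Adj u w) :
    (k ≤ u.val ∧ parentF hF u = w) ∨ (k ≤ w.val ∧ parentF hF w = u) := by
  by_cases hu : u.val < k
  · by_cases hw : w.val < k
    · exact absurd h (roots_not_adj hF hu hw)
    · right
      refine ⟨by omega, ?_⟩
      have hr : F.Reachable w u := (h.symm).reachable
      have h1 : u = rootF hF w := rootF_uniq hF hu hr
      have hpw : (SimpleGraph.Walk.cons h.symm SimpleGraph.Walk.nil : F.Walk w u).IsPath := by
        rw [SimpleGraph.Walk.isPath_def]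
        simp [h.ne']
      have h2 := parentF_eq_of_path hF
        ((SimpleGraph.Walk.cons h.symm SimpleGraph.Walk.nil).copy rfl h1)
        (by rw [SimpleGraph.Walk.isPath_copy]; exact hpw)
      rw [← h2, SimpleGraph.Walk.getVert_copy, SimpleGraph.Walk.getVert_cons_succ,
        SimpleGraph.Walk.getVert_zero]
  · by_cases hw : w.val < k
    · left
      refine ⟨by omega, ?_⟩
      have hr : F.Reachable u w := h.reachable
      have h1 : w = rootF hF u := rootF_uniq hF hw hr
      have hpw : (SimpleGraph.Walk.cons h SimpleGraph.Walk.nil : F.Walk u w).IsPath := by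
        rw [SimpleGraph.Walk.isPath_def]
        simp [h.ne]
      have h2 := parentF_eq_of_path hF
        ((SimpleGraph.Walk.cons h SimpleGraph.Walk.nil).copy rfl h1)
        (by rw [SimpleGraph.Walk.isPath_copy]; exact hpw)
      rw [← h2, SimpleGraph.Walk.getVert_copy, SimpleGraph.Walk.getVert_cons_succ,
        SimpleGraph.Walk.getVert_zero]
    · have hroot : rootF hF u = rootF hF w := rootF_reach_congr hF h.reachable
      by_cases hwin : w ∈ (pathF hF u).1.support
      · by_cases huin : u ∈ (pathF hF w).1.support
        · exfalso
          have hd1 : dF hF w < dF hF u := mem_path_dlt hF hwin h.ne'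
          have hd2 : dF hF u < dF hF w := mem_path_dlt hF huin h.ne
          omega
        · left
          refine ⟨by omega, ?_⟩
          have hcons : (SimpleGraph.Walk.cons h (pathF hF w).1).IsPath :=
            (pathF hF w).2.cons huin
          have h2 := parentF_eq_of_path hF
            ((SimpleGraph.Walk.cons h (pathF hF w).1).copy rfl hroot.symm)
            (by rw [SimpleGraph.Walk.isPath_copy]; exact hcons)
          rw [← h2, SimpleGraph.Walk.getVert_copy, SimpleGraph.Walk.getVert_cons_succ,
            SimpleGraph.Walk.getVert_zero]
      · right
        refine ⟨by omega, ?_⟩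
        have hcons : (SimpleGraph.Walk.cons h.symm (pathF hF u).1).IsPath :=
          (pathF hF u).2.cons hwin
        have h2 := parentF_eq_of_path hF
          ((SimpleGraph.Walk.cons h.symm (pathF hF u).1).copy rfl hroot)
          (by rw [SimpleGraph.Walk.isPath_copy]; exact hcons)
        rw [← h2, SimpleGraph.Walk.getVert_copy, SimpleGraph.Walk.getVert_cons_succ,
          SimpleGraph.Walk.getVert_zero]

noncomputable def toFunF (n k : ℕ) (F : SimpleGraph (Fin n)) : Fin n → Fin n :=
  if hF : FODef.IsRootedForest n k F then (fun v => if v.val < k then v else parentF hF v)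
  else id

lemma toFunF_high (hF : FODef.IsRootedForest n k F) {v : Fin n} (hv : k ≤ v.val) :
    toFunF n k F v = parentF hF v := by
  rw [toFunF, dif_pos hF, if_neg (by omega)]

lemma toFunF_low (hF : FODef.IsRootedForest n k F) {v : Fin n} (hv : v.val < k) :
    toFunF n k F v = v := by
  rw [toFunF, dif_pos hF, if_pos hv]

lemma dF_parent (hF : FODef.IsRootedForest n k F) {v : Fin n} (hv : k ≤ v.val) :
    dF hF (parentF hF v) < dF hF v := by
  set p := (pathF hF v).1 with hpdef
  have hnn : ¬ p.Nil := SimpleGraph.Walk.not_nil_iff_lt_length.mpr (dF_pos hF hv)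
  have htl : F.Walk (parentF hF v) (rootF hF v) := p.tail
  have hr : F.Reachable (parentF hF v) (rootF hF v) := ⟨p.tail⟩
  have h2 : rootF hF v = rootF hF (parentF hF v) :=
    rootF_uniq hF (rootF_spec hF v).1 hr
  have h3 : dF hF (parentF hF v) ≤ p.tail.length := by
    have := dF_le_walk hF (p.tail.copy rfl h2)
    exact this.trans_eq (SimpleGraph.Walk.length_copy _ _ _)
  have h4 : p.tail.length + 1 = p.length := SimpleGraph.Walk.length_tail_add_one hnn
  have h6 : dF hF v = p.length := rfl
  omega

lemma toFunF_isPFk (hF : FODef.IsRootedForest n k F) : IsPFk n k (toFunF n k F) := by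
  constructor
  · intro v hv
    exact toFunF_low hF hv
  · intro v
    have key : ∀ m (v : Fin n), dF hF v ≤ m → ∃ j, (((toFunF n k F)^[j]) v).val < k := by
      intro m
      induction m with
      | zero =>
        intro v hv
        by_cases hvk : v.val < k
        · exact ⟨0, hvk⟩
        · exfalso
          have := dF_pos hF (by omega : k ≤ v.val)
          omega
      | succ m ih =>
        intro v hv
        by_cases hvk : v.val < k
        · exact ⟨0, hvk⟩
        · have hge : k ≤ v.val := by omega
          obtain ⟨j, hj⟩ := ih (parentF hF v) (by have := dF_parent hF hge; omega)
          refine ⟨j+1, ?_⟩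
          rw [Function.iterate_succ_apply, toFunF_high hF hge]
          exact hj
    exact key _ v le_rfl

lemma toGraph_toFunF (hF : FODef.IsRootedForest n k F) : toGraph n k (toFunF n k F) = F := by
  ext u w
  rw [toGraph_adj]
  constructor
  · rintro ⟨hne, ⟨h1, h2⟩ | ⟨h1, h2⟩⟩
    · rw [← h2, toFunF_high hF h1]
      exact parentF_adj hF h1
    · rw [← h2, toFunF_high hF h1]
      exact (parentF_adj hF h1).symm
  · intro h
    refine ⟨h.ne, ?_⟩
    rcases edge_struct hF h with ⟨h1, h2⟩ | ⟨h1, h2⟩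
    · exact Or.inl ⟨h1, by rw [toFunF_high hF h1, h2]⟩
    · exact Or.inr ⟨h1, by rw [toFunF_high hF h1, h2]⟩

end Inverse


section RoundTrip

variable {k : ℕ} {f : Fin n → Fin n}

noncomputable def owalk (hf : IsPFk n k f) (v : Fin n) :
    (toGraph n k f).Walk v (orbitRoot hf v) :=
  if hv : v.val < k then (SimpleGraph.Walk.nil.copy rfl (orbitRoot_low hf hv).symm)
  else
    ((SimpleGraph.Walk.cons (adj_step hf (by omega)) (owalk hf (f v))).copy rfl
      (orbitRoot_step hf (by omega)).symm)
  termination_by htf hf v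
  decreasing_by
    rw [htf_step hf (by omega : k ≤ v.val)]
    omega

lemma owalk_ht (hf : IsPFk n k f) :
    ∀ (v : Fin n), ∀ w ∈ (owalk hf v).support, htf hf w ≤ htf hf v := by
  have key : ∀ m (v : Fin n), htf hf v ≤ m →
      ∀ w ∈ (owalk hf v).support, htf hf w ≤ htf hf v := by
    intro m
    induction m with
    | zero =>
      intro v hv w hw
      rw [owalk] at hw
      have hvk : v.val < k := by
        by_contra hvk
        have := htf_pos hf (by omega : k ≤ v.val)
        omega
      rw [dif_pos hvk] at hw
      simp only [SimpleGraph.Walk.support_copy, SimpleGraph.Walk.support_nil,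
        List.mem_singleton] at hw
      subst hw
      rfl
    | succ m ih =>
      intro v hv w hw
      rw [owalk] at hw
      by_cases hvk : v.val < k
      · rw [dif_pos hvk] at hw
        simp only [SimpleGraph.Walk.support_copy, SimpleGraph.Walk.support_nil,
          List.mem_singleton] at hw
        subst hw
        rfl
      · rw [dif_neg hvk] at hw
        simp only [SimpleGraph.Walk.support_copy, SimpleGraph.Walk.support_cons,
          List.mem_cons] at hw
        have hstep := htf_step hf (by omega : k ≤ v.val)
        rcases hw with rfl | hw
        · rfl
        · have := ih (f v) (by omega) w hw
          omega
  exact fun v => key (htf hf v) v le_rfl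

lemma owalk_path (hf : IsPFk n k f) : ∀ (v : Fin n), (owalk hf v).IsPath := by
  have key : ∀ m (v : Fin n), htf hf v ≤ m → (owalk hf v).IsPath := by
    intro m
    induction m with
    | zero =>
      intro v hv
      rw [owalk]
      have hvk : v.val < k := by
        by_contra hvk
        have := htf_pos hf (by omega : k ≤ v.val)
        omega
      rw [dif_pos hvk, SimpleGraph.Walk.isPath_copy]
      exact SimpleGraph.Walk.IsPath.nil
    | succ m ih =>
      intro v hv
      rw [owalk]
      by_cases hvk : v.val < k
      · rw [dif_pos hvk, SimpleGraph.Walk.isPath_copy]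
        exact SimpleGraph.Walk.IsPath.nil
      · rw [dif_neg hvk, SimpleGraph.Walk.isPath_copy]
        have hstep := htf_step hf (by omega : k ≤ v.val)
        apply SimpleGraph.Walk.IsPath.cons (ih (f v) (by omega))
        intro hmem
        have := owalk_ht hf (f v) v hmem
        omega
  exact fun v => key (htf hf v) v le_rfl

lemma owalk_snd (hf : IsPFk n k f) {v : Fin n} (hv : k ≤ v.val) :
    (owalk hf v).getVert 1 = f v := by
  rw [owalk, dif_neg (by omega : ¬ v.val < k), SimpleGraph.Walk.getVert_copy,
    SimpleGraph.Walk.getVert_cons_succ, SimpleGraph.Walk.getVert_zero]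

lemma toFunF_toGraph (hf : IsPFk n k f) : toFunF n k (toGraph n k f) = f := by
  have hG : FODef.IsRootedForest n k (toGraph n k f) := toGraph_rooted hf
  funext v
  by_cases hv : v.val < k
  · rw [toFunF_low hG hv]
    exact (hf.1 v hv).symm
  · have hge : k ≤ v.val := by omega
    rw [toFunF_high hG hge]
    have hroot : orbitRoot hf v = rootF hG v :=
      rootF_uniq hG (orbitRoot_lt hf v) (reach_orbitRoot hf v)
    have h2 := parentF_eq_of_path hG ((owalk hf v).copy rfl hroot)
      (by rw [SimpleGraph.Walk.isPath_copy]; exact owalk_path hf v)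
    rw [← h2, SimpleGraph.Walk.getVert_copy, owalk_snd hf hge]

lemma card_transfer (n k : ℕ) (E : SimpleGraph (Fin n) → Prop) :
    (univ.filter (fun F : SimpleGraph (Fin n) => FODef.IsRootedForest n k F ∧ E F)).card
      = (univ.filter (fun f : Fin n → Fin n => IsPFk n k f ∧ E (toGraph n k f))).card := by
  apply Finset.card_nbij' (i := toFunF n k) (j := toGraph n k)
  · intro F hF'
    obtain ⟨hF, hE⟩ := (mem_filter.mp hF').2
    rw [Finset.mem_coe, mem_filter]
    refine ⟨mem_univ _, toFunF_isPFk hF, ?_⟩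
    rw [toGraph_toFunF hF]
    exact hE
  · intro f hf'
    obtain ⟨hf, hE⟩ := (mem_filter.mp hf').2
    rw [Finset.mem_coe, mem_filter]
    exact ⟨mem_univ _, toGraph_rooted hf, hE⟩
  · intro F hF'
    exact toGraph_toFunF (mem_filter.mp hF').2.1
  · intro f hf'
    exact toFunF_toGraph (mem_filter.mp hf').2.1

end RoundTrip


/-! ### Auxiliary arithmetic -/

lemma card_filter_congr {α : Type*} [Fintype α] {p q : α → Prop}
    [DecidablePred p] [DecidablePred q] (h : ∀ x, p x ↔ q x) :
    (univ.filter p).card = (univ.filter q).card := by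
  congr 1
  ext x
  simp only [mem_filter, mem_univ, true_and]
  exact h x

lemma aux_pow (s : ℕ) (hs : 1 ≤ s) : ∀ ℓ : ℕ, 1 + ℓ*s ≤ (2*s)^ℓ := by
  intro ℓ
  induction ℓ with
  | zero => simp
  | succ ℓ ih =>
    have h1 : 1 ≤ (2*s)^ℓ := Nat.one_le_pow _ _ (by omega)
    have h2 : 1 + (ℓ+1)*s = (1 + ℓ*s) + s := by ring
    rw [h2, pow_succ]
    nlinarith

lemma choose_fact_le (a s : ℕ) : a.choose s * Nat.factorial s ≤ a ^ s := by
  rw [mul_comm, ← Nat.descFactorial_eq_factorial_mul_choose]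
  exact Nat.descFactorial_le_pow a s


/-! ### The union bound for the numerator -/

section UnionBound

variable {k s ℓ : ℕ} {roots : Fin ℓ → Fin n}

noncomputable def pinnedSet (n k : ℕ) (roots : Fin ℓ → Fin n) (T : Fin ℓ → Finset (Fin n)) :
    Finset (Fin n → Fin n) :=
  univ.filter (fun f : Fin n → Fin n => f ∈ PF (R0 n k) ∧ ∀ j, ∀ v ∈ T j, f v = roots j)

noncomputable def numSet (n k s : ℕ) (roots : Fin ℓ → Fin n) : Finset (Fin n → Fin n) :=
  univ.filter (fun f : Fin n → Fin n => f ∈ PF (R0 n k) ∧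
    ∀ j, s ≤ (univ.filter (fun v => k ≤ v.val ∧ f v = roots j)).card)

lemma numSet_def (n k s : ℕ) (roots : Fin ℓ → Fin n) :
    numSet n k s roots = univ.filter (fun f : Fin n → Fin n => f ∈ PF (R0 n k) ∧
      ∀ j, s ≤ (univ.filter (fun v => k ≤ v.val ∧ f v = roots j)).card) := rfl

lemma numSet_subset (n k s : ℕ) (roots : Fin ℓ → Fin n) :
    numSet n k s roots ⊆
      (Fintype.piFinset (fun _ : Fin ℓ => ((R0 n k)ᶜ : Finset (Fin n)).powersetCard s)).biUnion
        (pinnedSet n k roots) := by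
  intro f hf
  rw [numSet, mem_filter] at hf
  obtain ⟨-, hfPF, hdeg⟩ := hf
  have hchoice : ∀ j : Fin ℓ,
      ∃ t ⊆ univ.filter (fun v => k ≤ v.val ∧ f v = roots j), t.card = s :=
    fun j => Finset.exists_subset_card_eq (hdeg j)
  choose T hT1 hT2 using hchoice
  rw [mem_biUnion]
  refine ⟨T, ?_, ?_⟩
  · rw [Fintype.mem_piFinset]
    intro j
    rw [Finset.mem_powersetCard]
    refine ⟨?_, hT2 j⟩
    intro v hv
    have hv' := hT1 j hv
    rw [mem_filter] at hv'
    rw [Finset.mem_compl, mem_R0]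
    omega
  · rw [pinnedSet, mem_filter]
    refine ⟨mem_univ _, hfPF, fun j v hv => ?_⟩
    have hv' := hT1 j hv
    rw [mem_filter] at hv'
    exact hv'.2.2

lemma pinned_card_cases (n k : ℕ) (roots : Fin ℓ → Fin n)
    (hinj : Function.Injective roots) (hroots : ∀ j, (roots j).val < k)
    (T : Fin ℓ → Finset (Fin n))
    (hTI : T ∈ Fintype.piFinset (fun _ : Fin ℓ => ((R0 n k)ᶜ : Finset (Fin n)).powersetCard s)) :
    (pinnedSet n k roots T).card = 0 ∨
      ((Finset.univ.biUnion T ⊆ ((R0 n k)ᶜ : Finset (Fin n))) ∧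
        (Finset.univ.biUnion T).card = ℓ * s ∧
        n * (pinnedSet n k roots T).card
          = ((R0 n k).card + ℓ*s) * n ^ (((R0 n k) ∪ Finset.univ.biUnion T)ᶜ).card) := by
  rw [Fintype.mem_piFinset] at hTI
  by_cases hdisj : ∀ j1 j2 : Fin ℓ, j1 ≠ j2 → Disjoint (T j1) (T j2)
  · right
    set U := Finset.univ.biUnion T with hU
    have hUsub : U ⊆ ((R0 n k)ᶜ : Finset (Fin n)) := by
      intro v hv
      rw [hU, mem_biUnion] at hv
      obtain ⟨j, -, hj⟩ := hv
      exact (Finset.mem_powersetCard.mp (hTI j)).1 hj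
    have hUcard : U.card = ℓ * s := by
      rw [hU, Finset.card_biUnion (fun x _ y _ hxy => hdisj x y hxy)]
      have hc : ∀ j ∈ (univ : Finset (Fin ℓ)), (T j).card = s :=
        fun j _ => (Finset.mem_powersetCard.mp (hTI j)).2
      rw [Finset.sum_congr rfl hc, Finset.sum_const, smul_eq_mul, card_univ, Fintype.card_fin]
    refine ⟨hUsub, hUcard, ?_⟩
    set τ := fun v : Fin n => if h : ∃ j, v ∈ T j then roots (Classical.choose h) else v with hτdef
    have hpinned_eq : pinnedSet n k roots T
        = univ.filter (fun f => f ∈ PF (R0 n k) ∧ ∀ v ∈ U, f v = τ v) := by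
      apply Finset.filter_congr
      intro f _
      constructor
      · rintro ⟨h1, h2⟩
        refine ⟨h1, fun v hv => ?_⟩
        rw [hU, mem_biUnion] at hv
        obtain ⟨j, -, hj⟩ := hv
        have hex : ∃ j, v ∈ T j := ⟨j, hj⟩
        rw [hτdef]
        dsimp only
        rw [dif_pos hex]
        exact h2 _ v (Classical.choose_spec hex)
      · rintro ⟨h1, h2⟩
        refine ⟨h1, fun j v hv => ?_⟩
        have hvU : v ∈ U := by rw [hU, mem_biUnion]; exact ⟨j, mem_univ _, hv⟩
        have hex : ∃ j, v ∈ T j := ⟨j, hv⟩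
        have h3 := h2 v hvU
        rw [hτdef] at h3
        dsimp only at h3
        rw [dif_pos hex] at h3
        have h4 : Classical.choose hex = j := by
          by_contra hne
          exact (Finset.disjoint_left.mp (hdisj _ _ hne) (Classical.choose_spec hex)) hv
        rw [h3, h4]
    have hdisjR : ∀ v ∈ U, v ∉ R0 n k := fun v hv => Finset.mem_compl.mp (hUsub hv)
    have hτR : ∀ v ∈ U, τ v ∈ R0 n k := by
      intro v hv
      rw [hU, mem_biUnion] at hv
      obtain ⟨j, -, hj⟩ := hv
      have hex : ∃ j, v ∈ T j := ⟨j, hj⟩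
      rw [hτdef]
      dsimp only
      rw [dif_pos hex]
      exact mem_R0.mpr (hroots _)
    rw [hpinned_eq, card_pinned _ _ hdisjR τ hτR, main_count]
    have hdisj2 : Disjoint (R0 n k) U := by
      rw [Finset.disjoint_left]
      intro a ha haU
      exact hdisjR a haU ha
    rw [Finset.card_union_of_disjoint hdisj2, hUcard]
  · left
    push_neg at hdisj
    obtain ⟨j1, j2, hne, hnd⟩ := hdisj
    obtain ⟨v, hv1, hv2⟩ := Finset.not_disjoint_iff.mp hnd
    rw [Finset.card_eq_zero, Finset.eq_empty_iff_forall_notMem]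
    intro f hf
    rw [pinnedSet, mem_filter] at hf
    obtain ⟨-, -, h2⟩ := hf
    exact hne (hinj ((h2 j1 v hv1).symm.trans (h2 j2 v hv2)))

lemma num_bound (n k : ℕ) (roots : Fin ℓ → Fin n)
    (hinj : Function.Injective roots) (hroots : ∀ j, (roots j).val < k)
    (hls : ℓ * s ≤ n - (R0 n k).card) :
    n * (numSet n k s roots).card
      ≤ ((n - (R0 n k).card).choose s)^ℓ
        * (((R0 n k).card + ℓ*s) * n ^ ((n - (R0 n k).card) - ℓ*s)) := by
  set I := Fintype.piFinset (fun _ : Fin ℓ => ((R0 n k)ᶜ : Finset (Fin n)).powersetCard s) with hI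
  have hAcard : (((R0 n k)ᶜ : Finset (Fin n))).card = n - (R0 n k).card := by
    rw [Finset.card_compl, Fintype.card_fin]
  have hterm : ∀ T ∈ I, n * (pinnedSet n k roots T).card
      ≤ ((R0 n k).card + ℓ*s) * n ^ ((n - (R0 n k).card) - ℓ*s) := by
    intro T hTI
    rcases pinned_card_cases n k roots hinj hroots T hTI with h0 | ⟨hUsub, hUcard, heq⟩
    · rw [h0]
      simp
    · rw [heq]
      have hc2 : (((R0 n k) ∪ Finset.univ.biUnion T)ᶜ).card
          = (n - (R0 n k).card) - ℓ*s := by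
        rw [Finset.card_compl, Fintype.card_fin]
        have hdisj2 : Disjoint (R0 n k) (Finset.univ.biUnion T) := by
          rw [Finset.disjoint_left]
          intro a ha haU
          exact (Finset.mem_compl.mp (hUsub haU)) ha
        rw [Finset.card_union_of_disjoint hdisj2, hUcard]
        omega
      rw [hc2]
  calc n * (numSet n k s roots).card
      ≤ n * (I.biUnion (pinnedSet n k roots)).card :=
        Nat.mul_le_mul_left n (Finset.card_le_card (numSet_subset n k s roots))
    _ ≤ n * ∑ T ∈ I, (pinnedSet n k roots T).card :=
        Nat.mul_le_mul_left n (Finset.card_biUnion_le)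
    _ = ∑ T ∈ I, n * (pinnedSet n k roots T).card := by rw [Finset.mul_sum]
    _ ≤ I.card * (((R0 n k).card + ℓ*s) * n ^ ((n - (R0 n k).card) - ℓ*s)) := by
        have := Finset.sum_le_card_nsmul I _ _ hterm
        rwa [smul_eq_mul] at this
    _ = ((n - (R0 n k).card).choose s)^ℓ
        * (((R0 n k).card + ℓ*s) * n ^ ((n - (R0 n k).card) - ℓ*s)) := by
        congr 1
        rw [hI, Fintype.card_piFinset]
        simp only [Finset.card_powersetCard, hAcard]
        rw [Finset.prod_const, card_univ, Fintype.card_fin]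

lemma num_zero (n k : ℕ) (roots : Fin ℓ → Fin n)
    (hinj : Function.Injective roots) (hroots : ∀ j, (roots j).val < k)
    (hls : n - (R0 n k).card < ℓ * s) :
    (numSet n k s roots).card = 0 := by
  set I := Fintype.piFinset (fun _ : Fin ℓ => ((R0 n k)ᶜ : Finset (Fin n)).powersetCard s) with hI
  have hAcard : (((R0 n k)ᶜ : Finset (Fin n))).card = n - (R0 n k).card := by
    rw [Finset.card_compl, Fintype.card_fin]
  have hterm : ∀ T ∈ I, (pinnedSet n k roots T).card = 0 := by
    intro T hTI
    rcases pinned_card_cases n k roots hinj hroots T hTI with h0 | ⟨hUsub, hUcard, heq⟩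
    · exact h0
    · exfalso
      have := Finset.card_le_card hUsub
      rw [hUcard, hAcard] at this
      omega
  have h1 : (numSet n k s roots).card ≤ ∑ T ∈ I, (pinnedSet n k roots T).card :=
    le_trans (Finset.card_le_card (numSet_subset n k s roots)) Finset.card_biUnion_le
  rw [Finset.sum_congr rfl hterm, Finset.sum_const, smul_eq_mul, Nat.mul_zero] at h1
  omega

end UnionBound

end FOProof

open FODef

theorem statement18 (n k s ℓ : ℕ) (hk1 : 1 ≤ k) (hk : (k : ℝ) ≤ Real.log n ^ 4)
    (hs : 4 ≤ s) (roots : Fin ℓ → Fin n) (hinj : Function.Injective roots)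
    (hroots : ∀ j, (roots j).val < k) :
    rfProb n k {F | ∀ j, s ≤ deg F (roots j)} ≤ (2 / ((s - 1).factorial : ℝ)) ^ ℓ := by
  classical
  have hn : 0 < n := by
    rcases Nat.eq_zero_or_pos n with h0 | h
    · exfalso
      rw [h0] at hk
      norm_num [Real.log_zero] at hk
      have h1 : (1:ℝ) ≤ (k:ℝ) := by exact_mod_cast hk1
      linarith
    · exact h
  have hβpos : (0:ℝ) < 2 / ((s - 1).factorial : ℝ) := by
    apply div_pos (by norm_num)
    exact_mod_cast (s-1).factorial_pos
  -- notation
  set K := (FOProof.R0 n k).card with hK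
  have hKpos : 0 < K := by
    apply Finset.card_pos.mpr
    refine ⟨⟨0, hn⟩, FOProof.mem_R0.mpr ?_⟩
    show (0:ℕ) < k
    omega
  -- the two cardinalities
  set N := (Finset.univ.filter (fun F : SimpleGraph (Fin n) =>
    IsRootedForest n k F ∧ ∀ j, s ≤ deg F (roots j))).card with hN
  set D := (Finset.univ.filter (fun F : SimpleGraph (Fin n) => IsRootedForest n k F)).card
    with hD
  clear_value K N D
  -- denominator value
  have hden : D = (FOProof.PF (FOProof.R0 n k)).card := by
    rw [hD]
    have h1 := FOProof.card_transfer n k (fun _ => True)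
    simp only [and_true] at h1
    rw [h1]
    apply congrArg
    ext f
    simp only [Finset.mem_filter, Finset.mem_univ, true_and]
    exact FOProof.IsPFk_iff
  have hcompl : ((FOProof.R0 n k)ᶜ : Finset (Fin n)).card = n - K := by
    rw [Finset.card_compl, Fintype.card_fin, hK]
  have hDval : n * D = K * n ^ (n - K) := by
    rw [hden, FOProof.main_count, hcompl, hK]
  have hDpos : 0 < D := by
    by_contra h0
    have hD0 : D = 0 := by omega
    rw [hD0, Nat.mul_zero] at hDval
    have h1 : 0 < K * n ^ (n - K) := Nat.mul_pos hKpos (Nat.pow_pos hn)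
    omega
  -- numerator transfer
  have hnum : N = (FOProof.numSet n k s roots).card := by
    rw [hN, FOProof.numSet_def]
    have h1 := FOProof.card_transfer n k (fun F => ∀ j, s ≤ deg F (roots j))
    beta_reduce at h1
    refine Eq.trans ?_ (Eq.trans h1 ?_)
    · congr 1
      ext F
      simp only [Finset.mem_filter, Finset.mem_univ, true_and]
    · congr 1
      ext f
      simp only [Finset.mem_filter, Finset.mem_univ, true_and]
      constructor
      · rintro ⟨hf, hdeg⟩
        refine ⟨FOProof.IsPFk_iff.mp hf, fun j => ?_⟩
        have h2 := hdeg j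
        rwa [FOProof.deg_toGraph hf (hroots j)] at h2
      · rintro ⟨hf, hdeg⟩
        have hf' := FOProof.IsPFk_iff.mpr hf
        refine ⟨hf', fun j => ?_⟩
        rw [FOProof.deg_toGraph hf' (hroots j)]
        exact hdeg j
  -- identify rfProb with N / D
  have hrfeq : rfProb n k {F | ∀ j, s ≤ deg F (roots j)} = (N : ℝ) / (D : ℝ) := by
    rw [rfProb, hN, hD]
    congr 2
    congr 1
    ext F
    simp only [Finset.mem_filter, Finset.mem_univ, true_and, Set.mem_setOf_eq]
  rw [hrfeq]
  -- case split
  rcases le_or_gt (ℓ * s) (n - K) with hle | hgt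
  · -- main case
    have hNval := FOProof.num_bound n k roots hinj hroots (by rw [← hK]; exact hle)
    rw [← hK, ← hnum] at hNval
    -- reduce to an inequality between naturals and reals
    rw [div_le_iff₀ (by exact_mod_cast hDpos)]
    have hnpos : (0:ℝ) < (n:ℝ) := by exact_mod_cast hn
    rw [← mul_le_mul_iff_right₀ hnpos, ← mul_assoc (n:ℝ)]
    have hswap : (n:ℝ) * (2 / ((s - 1).factorial : ℝ)) ^ ℓ * (D:ℝ)
        = (2 / ((s - 1).factorial : ℝ)) ^ ℓ * ((n * D : ℕ) : ℝ) := by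
      push_cast
      ring
    rw [hswap, hDval]
    calc (n:ℝ) * (N:ℝ)
        = ((n * N : ℕ) : ℝ) := by push_cast; ring
      _ ≤ (((n - K).choose s)^ℓ * ((K + ℓ*s) * n ^ ((n - K) - ℓ*s)) : ℕ) := by
          exact_mod_cast hNval
      _ ≤ (2 / ((s - 1).factorial : ℝ)) ^ ℓ * ((K * n ^ (n - K) : ℕ) : ℝ) := ?_
    -- the purely arithmetic inequality
    push_cast
    have hfact_pos : (0:ℝ) < ((s-1).factorial : ℝ) := by exact_mod_cast (s-1).factorial_pos
    have hkey : ((n - K).choose s : ℝ) * (2*(s:ℝ)) ≤ (2 / ((s-1).factorial : ℝ)) * (n:ℝ)^s := by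
      rw [div_mul_eq_mul_div, le_div_iff₀ hfact_pos]
      have hnat : (n - K).choose s * (2*s) * (s-1).factorial ≤ 2 * n^s := by
        have h1 : (n - K).choose s * Nat.factorial s ≤ (n - K) ^ s :=
          FOProof.choose_fact_le (n - K) s
        have h2 : (n - K) ^ s ≤ n ^ s := Nat.pow_le_pow_left (by omega) s
        have h3 : s * (s-1).factorial = Nat.factorial s := Nat.mul_factorial_pred (by omega)
        calc (n - K).choose s * (2*s) * (s-1).factorial
            = 2 * ((n - K).choose s * (s * (s-1).factorial)) := by ring
          _ = 2 * ((n - K).choose s * Nat.factorial s) := by rw [h3]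
          _ ≤ 2 * n ^ s := Nat.mul_le_mul_left 2 (le_trans h1 h2)
      exact_mod_cast hnat
    have hKnat : K + ℓ*s ≤ K * (2*s)^ℓ := by
      have h1 := FOProof.aux_pow s (by omega) ℓ
      have h2 : K * (1 + ℓ*s) = K + K*(ℓ*s) := by ring
      have h3 : ℓ*s ≤ K*(ℓ*s) := Nat.le_mul_of_pos_left _ hKpos
      calc K + ℓ*s ≤ K * (1 + ℓ*s) := by omega
        _ ≤ K * (2*s)^ℓ := Nat.mul_le_mul_left _ h1
    have hpowsplit : ((n:ℝ)) ^ (n - K) = ((n:ℝ)) ^ (ℓ*s) * ((n:ℝ)) ^ ((n - K) - ℓ*s) := by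
      rw [← pow_add]
      congr 1
      omega
    have hpowm : ((n:ℝ)) ^ (ℓ*s) = (((n:ℝ)) ^ s) ^ ℓ := by
      rw [← pow_mul, Nat.mul_comm ℓ s]
    have hmain : ((n - K).choose s : ℝ)^ℓ * ((K:ℝ) + (ℓ:ℝ)*(s:ℝ))
        ≤ (2 / ((s-1).factorial : ℝ))^ℓ * ((K:ℝ) * ((n:ℝ)) ^ (ℓ*s)) := by
      have hC0 : (0:ℝ) ≤ ((n - K).choose s : ℝ) := Nat.cast_nonneg _
      calc ((n - K).choose s : ℝ)^ℓ * ((K:ℝ) + (ℓ:ℝ)*(s:ℝ))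
          ≤ ((n - K).choose s : ℝ)^ℓ * ((K:ℝ) * (2*(s:ℝ))^ℓ) := by
            apply mul_le_mul_of_nonneg_left _ (by positivity)
            have h2 : ((K + ℓ*s : ℕ):ℝ) ≤ ((K * (2*s)^ℓ : ℕ):ℝ) := Nat.cast_le.mpr hKnat
            push_cast at h2
            linarith
        _ = (K:ℝ) * (((n - K).choose s : ℝ) * (2*(s:ℝ)))^ℓ := by
            rw [mul_pow]
            ring
        _ ≤ (K:ℝ) * ((2 / ((s-1).factorial : ℝ)) * (n:ℝ)^s)^ℓ := by
            apply mul_le_mul_of_nonneg_left _ (by positivity)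
            apply pow_le_pow_left₀ (by positivity) hkey
        _ = (2 / ((s-1).factorial : ℝ))^ℓ * ((K:ℝ) * ((n:ℝ)) ^ (ℓ*s)) := by
            rw [mul_pow, hpowm]
            ring
    calc ((n - K).choose s : ℝ)^ℓ * (((K:ℝ) + (ℓ:ℝ)*(s:ℝ)) * ((n:ℝ)) ^ ((n - K) - ℓ*s))
        = (((n - K).choose s : ℝ)^ℓ * ((K:ℝ) + (ℓ:ℝ)*(s:ℝ))) * ((n:ℝ)) ^ ((n - K) - ℓ*s) := by
          ring
      _ ≤ ((2 / ((s-1).factorial : ℝ))^ℓ * ((K:ℝ) * ((n:ℝ)) ^ (ℓ*s)))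
            * ((n:ℝ)) ^ ((n - K) - ℓ*s) := by
          apply mul_le_mul_of_nonneg_right hmain (by positivity)
      _ = (2 / ((s-1).factorial : ℝ))^ℓ * ((K:ℝ) * ((n:ℝ)) ^ (n - K)) := by
          rw [hpowsplit]
          ring
  · -- degenerate case : the numerator is zero
    have hN0 : N = 0 := by
      rw [hnum]
      exact FOProof.num_zero n k roots hinj hroots (by rw [← hK]; exact hgt)
    rw [hN0]
    simp only [Nat.cast_zero, zero_div]
    positivity
end
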